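/- arXiv:1503.01033 — 8 statements merged into one kernel-verified Lean document; each statement's English description precedes it below -/
import Mathlib

section
/- Let φ: N₄ → G be a group homomorphism into a group G such that φ(c) is a nontrivial element of infinite order. Then φ is injective. -/
/-- A 4×4 integer matrix is lower unitriangular if it has `1`s on the diagonal
and `0`s above the diagonal. -/
def IsUnitriLower (M : Matrix (Fin 4) (Fin 4) ℤ) : Prop :=
  (∀ i, M i i = 1) ∧ ∀ i j : Fin 4, i < j → M i j = 0

/-- `N₄`: the group of 4×4 lower triangular integer matrices with `1`s on the diagonal,
realized as a subgroup of the units of the matrix ring. -/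
def N4 : Subgroup (Matrix (Fin 4) (Fin 4) ℤ)ˣ where
  carrier := {u | IsUnitriLower u.val}
  one_mem' := by
    refine ⟨fun i => ?_, fun i j hij => ?_⟩
    · simp [Matrix.one_apply_eq]
    · simp [Units.val_one, Matrix.one_apply_ne (ne_of_lt hij)]
  mul_mem' := by
    rintro a b ⟨ha1, ha2⟩ ⟨hb1, hb2⟩
    refine ⟨fun i => ?_, fun i j hij => ?_⟩
    · have key : ∀ k : Fin 4, a.val i k * b.val k i = if k = i then 1 else 0 := by
        intro k
        rcases lt_trichotomy k i with h | h | h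
        · rw [hb2 k i h, mul_zero, if_neg h.ne]
        · subst h
          rw [ha1, hb1, one_mul, if_pos rfl]
        · rw [ha2 i k h, zero_mul, if_neg h.ne']
      show (a.val * b.val) i i = 1
      rw [Matrix.mul_apply]
      simp [key]
    · show (a.val * b.val) i j = 0
      rw [Matrix.mul_apply]
      refine Finset.sum_eq_zero fun k _ => ?_
      rcases lt_or_ge i k with h | h
      · rw [ha2 i k h, zero_mul]
      · rw [hb2 k j (lt_of_le_of_lt h hij), mul_zero]
  inv_mem' := by
    rintro x ⟨ha1, ha2⟩
    set A := x.val with hA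
    set B := (x⁻¹).val with hB
    have hBA : B * A = 1 := by
      rw [hB, hA, ← Units.val_mul]
      simp
    have key : ∀ i j : Fin 4,
        B i 0 * A 0 j + B i 1 * A 1 j + B i 2 * A 2 j + B i 3 * A 3 j
          = if i = j then 1 else 0 := by
      intro i j
      have h : (B * A) i j = (1 : Matrix (Fin 4) (Fin 4) ℤ) i j := by rw [hBA]
      rw [Matrix.mul_apply, Fin.sum_univ_four] at h
      rw [h, Matrix.one_apply]
    have b03 : B 0 3 = 0 := by
      have h := key 0 3
      rw [ha2 0 3 (by decide), ha2 1 3 (by decide), ha2 2 3 (by decide), ha1 3,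
        if_neg (by decide)] at h
      simpa using h
    have b13 : B 1 3 = 0 := by
      have h := key 1 3
      rw [ha2 0 3 (by decide), ha2 1 3 (by decide), ha2 2 3 (by decide), ha1 3,
        if_neg (by decide)] at h
      simpa using h
    have b23 : B 2 3 = 0 := by
      have h := key 2 3
      rw [ha2 0 3 (by decide), ha2 1 3 (by decide), ha2 2 3 (by decide), ha1 3,
        if_neg (by decide)] at h
      simpa using h
    have b33 : B 3 3 = 1 := by
      have h := key 3 3
      rw [ha2 0 3 (by decide), ha2 1 3 (by decide), ha2 2 3 (by decide), ha1 3,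
        if_pos rfl] at h
      simpa using h
    have b02 : B 0 2 = 0 := by
      have h := key 0 2
      rw [ha2 0 2 (by decide), ha2 1 2 (by decide), ha1 2, b03, if_neg (by decide)] at h
      simpa using h
    have b12 : B 1 2 = 0 := by
      have h := key 1 2
      rw [ha2 0 2 (by decide), ha2 1 2 (by decide), ha1 2, b13, if_neg (by decide)] at h
      simpa using h
    have b22 : B 2 2 = 1 := by
      have h := key 2 2
      rw [ha2 0 2 (by decide), ha2 1 2 (by decide), ha1 2, b23, if_pos rfl] at h
      simpa using h
    have b01 : B 0 1 = 0 := by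
      have h := key 0 1
      rw [ha2 0 1 (by decide), ha1 1, b02, b03, if_neg (by decide)] at h
      simpa using h
    have b11 : B 1 1 = 1 := by
      have h := key 1 1
      rw [ha2 0 1 (by decide), ha1 1, b12, b13, if_pos rfl] at h
      simpa using h
    have b00 : B 0 0 = 1 := by
      have h := key 0 0
      rw [ha1 0, b01, b02, b03, if_pos rfl] at h
      simpa using h
    refine ⟨fun i => ?_, fun i j hij => ?_⟩
    · fin_cases i
      · exact b00
      · exact b11
      · exact b22
      · exact b33
    · fin_cases i <;> fin_cases j <;>
        first
          | exact absurd hij (by decide)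
          | exact b01
          | exact b02
          | exact b03
          | exact b12
          | exact b13
          | exact b23

/-- Helper to build elements of `N4` from a matrix, an explicit inverse, and proofs. -/
def mkN4 (M N : Matrix (Fin 4) (Fin 4) ℤ) (h1 : M * N = 1) (h2 : N * M = 1)
    (h : IsUnitriLower M) : N4 :=
  ⟨⟨M, N, h1, h2⟩, h⟩

/-- The generator `e` of `N₄`: entry `1` in position (2,1). -/
def e4 : N4 :=
  mkN4 !![1,0,0,0; 1,1,0,0; 0,0,1,0; 0,0,0,1] !![1,0,0,0; -1,1,0,0; 0,0,1,0; 0,0,0,1]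
    (by decide) (by decide)
    (by
      refine ⟨by decide, fun i j hij => ?_⟩
      fin_cases i <;> fin_cases j <;> first | exact absurd hij (by decide) | rfl)

/-- The generator `f` of `N₄`: entry `1` in position (3,2). -/
def f4 : N4 :=
  mkN4 !![1,0,0,0; 0,1,0,0; 0,1,1,0; 0,0,0,1] !![1,0,0,0; 0,1,0,0; 0,-1,1,0; 0,0,0,1]
    (by decide) (by decide)
    (by
      refine ⟨by decide, fun i j hij => ?_⟩
      fin_cases i <;> fin_cases j <;> first | exact absurd hij (by decide) | rfl)

/-- The generator `d` of `N₄`: entry `1` in position (4,3). -/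
def d4 : N4 :=
  mkN4 !![1,0,0,0; 0,1,0,0; 0,0,1,0; 0,0,1,1] !![1,0,0,0; 0,1,0,0; 0,0,1,0; 0,0,-1,1]
    (by decide) (by decide)
    (by
      refine ⟨by decide, fun i j hij => ?_⟩
      fin_cases i <;> fin_cases j <;> first | exact absurd hij (by decide) | rfl)

/-- The generator `a` of `N₄`: entry `1` in position (3,1). -/
def a4 : N4 :=
  mkN4 !![1,0,0,0; 0,1,0,0; 1,0,1,0; 0,0,0,1] !![1,0,0,0; 0,1,0,0; -1,0,1,0; 0,0,0,1]
    (by decide) (by decide)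
    (by
      refine ⟨by decide, fun i j hij => ?_⟩
      fin_cases i <;> fin_cases j <;> first | exact absurd hij (by decide) | rfl)

/-- The generator `b` of `N₄`: entry `1` in position (4,2). -/
def b4 : N4 :=
  mkN4 !![1,0,0,0; 0,1,0,0; 0,0,1,0; 0,1,0,1] !![1,0,0,0; 0,1,0,0; 0,0,1,0; 0,-1,0,1]
    (by decide) (by decide)
    (by
      refine ⟨by decide, fun i j hij => ?_⟩
      fin_cases i <;> fin_cases j <;> first | exact absurd hij (by decide) | rfl)

/-- The generator `c` of `N₄`: entry `1` in position (4,1). -/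
def c4 : N4 :=
  mkN4 !![1,0,0,0; 0,1,0,0; 0,0,1,0; 1,0,0,1] !![1,0,0,0; 0,1,0,0; 0,0,1,0; -1,0,0,1]
    (by decide) (by decide)
    (by
      refine ⟨by decide, fun i j hij => ?_⟩
      fin_cases i <;> fin_cases j <;> first | exact absurd hij (by decide) | rfl)

/-
The generator `c` spans the centre of `N₄`, and every nontrivial normal subgroup of `N₄` meets
`⟨c⟩` nontrivially. Indeed, for `g` in a normal subgroup `K`, the commutators `⁅g, a⁆`, `⁅g, b⁆`,
`⁅g, d⁆` and `⁅⁅g, e⁆, d⁆` again lie in `K`, and a matrix computation shows that they are powers of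
`c` whose exponents are, up to sign, the entries of `g` below the diagonal; so if `K ∩ ⟨c⟩ = 1`,
these entries vanish one after another and `g = 1`. The kernel of `φ` is such a `K`, because
`φ(c)` has infinite order.
-/

open scoped commutatorElement

-- `xᵢⱼ` is the entry in row `i`, column `j`, counted from `0`: position `(i+1, j+1)` in `N₄`.
def lowerUnitri (x₁₀ x₂₀ x₂₁ x₃₀ x₃₁ x₃₂ : ℤ) : Matrix (Fin 4) (Fin 4) ℤ :=
  !![1, 0, 0, 0; x₁₀, 1, 0, 0; x₂₀, x₂₁, 1, 0; x₃₀, x₃₁, x₃₂, 1]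

lemma lowerUnitri_zero : lowerUnitri 0 0 0 0 0 0 = 1 := by
  ext i j
  fin_cases i <;> fin_cases j <;> rfl

lemma lowerUnitri_mul (x₁₀ x₂₀ x₂₁ x₃₀ x₃₁ x₃₂ y₁₀ y₂₀ y₂₁ y₃₀ y₃₁ y₃₂ : ℤ) :
    lowerUnitri x₁₀ x₂₀ x₂₁ x₃₀ x₃₁ x₃₂ * lowerUnitri y₁₀ y₂₀ y₂₁ y₃₀ y₃₁ y₃₂ =
      lowerUnitri (x₁₀ + y₁₀) (x₂₀ + y₂₀ + x₂₁ * y₁₀) (x₂₁ + y₂₁)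
        (x₃₀ + y₃₀ + x₃₁ * y₁₀ + x₃₂ * y₂₀) (x₃₁ + y₃₁ + x₃₂ * y₂₁) (x₃₂ + y₃₂) := by
  ext i j
  fin_cases i <;> fin_cases j <;> simp [lowerUnitri, Matrix.mul_apply, Fin.sum_univ_four] <;> ring

namespace N4

def toMatrix : N4 →* Matrix (Fin 4) (Fin 4) ℤ :=
  (Units.coeHom _).comp N4.subtype

lemma toMatrix_injective : Function.Injective toMatrix :=
  Units.val_injective.comp Subtype.val_injective

lemma exists_toMatrix_eq_lowerUnitri (g : N4) :
    ∃ x₁₀ x₂₀ x₂₁ x₃₀ x₃₁ x₃₂, toMatrix g = lowerUnitri x₁₀ x₂₀ x₂₁ x₃₀ x₃₁ x₃₂ := by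
  obtain ⟨hdiag, hupper⟩ := g.2
  refine ⟨toMatrix g 1 0, toMatrix g 2 0, toMatrix g 2 1, toMatrix g 3 0, toMatrix g 3 1,
    toMatrix g 3 2, ?_⟩
  ext i j
  fin_cases i <;> fin_cases j <;> first | exact hdiag _ | exact hupper _ _ (by decide) | rfl

lemma toMatrix_c4_zpow (n : ℤ) : toMatrix (c4 ^ n) = lowerUnitri 0 0 0 n 0 0 := by
  induction n using Int.induction_on with
  | zero => rw [zpow_zero, map_one, lowerUnitri_zero]
  | succ n ih =>
    rw [zpow_add_one, map_mul, ih]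
    exact (lowerUnitri_mul ..).trans (by simp)
  | pred n ih =>
    rw [zpow_sub_one, map_mul, ih]
    exact (lowerUnitri_mul ..).trans (by simp [sub_eq_add_neg])

lemma eq_c4_zpow_of_toMatrix_eq {g : N4} {n : ℤ} (h : toMatrix g = lowerUnitri 0 0 0 n 0 0) :
    g = c4 ^ n :=
  toMatrix_injective (h.trans (toMatrix_c4_zpow n).symm)

lemma toMatrix_commutatorElement_eq {g u : N4} {V : Matrix (Fin 4) (Fin 4) ℤ}
    (h : toMatrix g * toMatrix u = V * (toMatrix u * toMatrix g)) : toMatrix ⁅g, u⁆ = V := by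
  have hcomm := congrArg toMatrix (by group : ⁅g, u⁆ * (u * g) = g * u)
  rw [map_mul, map_mul toMatrix g u, h, ← map_mul toMatrix u g] at hcomm
  exact (Units.mul_left_inj _).mp hcomm

section Commutators

variable {g : N4} {x₁₀ x₂₀ x₂₁ x₃₀ x₃₁ x₃₂ : ℤ}

lemma toMatrix_commutatorElement_a4 (hg : toMatrix g = lowerUnitri x₁₀ x₂₀ x₂₁ x₃₀ x₃₁ x₃₂) :
    toMatrix ⁅g, a4⁆ = lowerUnitri 0 0 0 x₃₂ 0 0 := by
  refine toMatrix_commutatorElement_eq ?_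
  rw [hg, show toMatrix a4 = lowerUnitri 0 1 0 0 0 0 from rfl]
  simp only [lowerUnitri_mul]
  congr 1 <;> ring

lemma toMatrix_commutatorElement_b4 (hg : toMatrix g = lowerUnitri x₁₀ x₂₀ x₂₁ x₃₀ x₃₁ x₃₂) :
    toMatrix ⁅g, b4⁆ = lowerUnitri 0 0 0 (-x₁₀) 0 0 := by
  refine toMatrix_commutatorElement_eq ?_
  rw [hg, show toMatrix b4 = lowerUnitri 0 0 0 0 1 0 from rfl]
  simp only [lowerUnitri_mul]
  congr 1 <;> ring

lemma toMatrix_commutatorElement_e4 (hg : toMatrix g = lowerUnitri x₁₀ x₂₀ x₂₁ x₃₀ x₃₁ x₃₂) :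
    toMatrix ⁅g, e4⁆ = lowerUnitri 0 x₂₁ 0 x₃₁ 0 0 := by
  refine toMatrix_commutatorElement_eq ?_
  rw [hg, show toMatrix e4 = lowerUnitri 1 0 0 0 0 0 from rfl]
  simp only [lowerUnitri_mul]
  congr 1 <;> ring

lemma toMatrix_commutatorElement_d4 (hg : toMatrix g = lowerUnitri x₁₀ x₂₀ 0 x₃₀ x₃₁ x₃₂) :
    toMatrix ⁅g, d4⁆ = lowerUnitri 0 0 0 (-x₂₀) 0 0 := by
  refine toMatrix_commutatorElement_eq ?_
  rw [hg, show toMatrix d4 = lowerUnitri 0 0 0 0 0 1 from rfl]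
  simp only [lowerUnitri_mul]
  congr 1 <;> ring

end Commutators

theorem eq_bot_of_disjoint_zpowers_c4 (K : Subgroup N4) [K.Normal]
    (hK : Disjoint K (Subgroup.zpowers c4)) : K = ⊥ := by
  have central_eq_zero {k : N4} {n : ℤ} (hk : k ∈ K)
      (hkn : toMatrix k = lowerUnitri 0 0 0 n 0 0) : n = 0 := by
    have hk1 : k = 1 := Subgroup.disjoint_def.mp hK hk
      (eq_c4_zpow_of_toMatrix_eq hkn ▸ Subgroup.zpow_mem_zpowers c4 n)
    rw [hk1, map_one, ← lowerUnitri_zero] at hkn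
    exact (congrFun (congrFun hkn 3) 0).symm
  have commutator_mem {k : N4} (h : N4) (hk : k ∈ K) : ⁅k, h⁆ ∈ K :=
    Subgroup.commutator_le_left K ⊤ (Subgroup.commutator_mem_commutator hk trivial)
  rw [Subgroup.eq_bot_iff_forall]
  intro g hg
  obtain ⟨x₁₀, x₂₀, x₂₁, x₃₀, x₃₁, x₃₂, hx⟩ := exists_toMatrix_eq_lowerUnitri g
  have hge := commutator_mem e4 hg
  obtain rfl : x₂₁ = 0 := neg_eq_zero.mp <| central_eq_zero (commutator_mem d4 hge)
    (toMatrix_commutatorElement_d4 (toMatrix_commutatorElement_e4 hx))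
  obtain rfl : x₃₁ = 0 := central_eq_zero hge (toMatrix_commutatorElement_e4 hx)
  obtain rfl : x₁₀ = 0 :=
    neg_eq_zero.mp <| central_eq_zero (commutator_mem b4 hg) (toMatrix_commutatorElement_b4 hx)
  obtain rfl : x₂₀ = 0 :=
    neg_eq_zero.mp <| central_eq_zero (commutator_mem d4 hg) (toMatrix_commutatorElement_d4 hx)
  obtain rfl : x₃₂ = 0 := central_eq_zero (commutator_mem a4 hg) (toMatrix_commutatorElement_a4 hx)
  obtain rfl : x₃₀ = 0 := central_eq_zero hg hx
  exact toMatrix_injective (hx.trans (lowerUnitri_zero.trans (map_one toMatrix).symm))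

end N4

theorem N4_hom_injective_of_c_infinite_order_general {G : Type*} [Group G] (φ : N4 →* G)
    (hord : ¬ IsOfFinOrder (φ c4)) :
    Function.Injective φ := by
  rw [← MonoidHom.ker_eq_bot_iff]
  refine N4.eq_bot_of_disjoint_zpowers_c4 φ.ker (Subgroup.disjoint_def.mpr ?_)
  rintro _ hk ⟨n, rfl⟩
  have hn : n = 0 := injective_zpow_iff_not_isOfFinOrder.mpr hord <| by simpa using hk
  simp [hn]

/-- **Lemma 1.1.** If `φ : N₄ → G` is a group homomorphism such that `φ(c)` is a
nontrivial element of infinite order, then `φ` is injective. -/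
theorem N4_hom_injective_of_c_infinite_order {G : Type*} [Group G] (φ : N4 →* G)
    (hne : φ c4 ≠ 1) (hord : ¬ IsOfFinOrder (φ c4)) :
    Function.Injective φ :=
  N4_hom_injective_of_c_infinite_order_general φ hord
end

section
/- Suppose the Heisenberg group N₃ = ⟨h₁, h₂, h₃ | [h₁,h₂] = h₃, h₁h₃ = h₃h₁, h₂h₃ = h₃h₂⟩ acts faithfully by orientation-preserving homeomorphisms of [0,1]. If x ∈ [0,1] is not fixed by h₃, then at least one of h₁, h₂ moves J_{h₃}(x). -/
/-- The relations of the discrete Heisenberg group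
`⟨h₁, h₂, h₃ ∣ [h₁,h₂] = h₃, h₁h₃ = h₃h₁, h₂h₃ = h₃h₂⟩` as words in the free group
on three generators. -/
def heisRels : Set (FreeGroup (Fin 3)) :=
  { FreeGroup.of 0 * FreeGroup.of 1 * (FreeGroup.of 0)⁻¹ * (FreeGroup.of 1)⁻¹ *
      (FreeGroup.of 2)⁻¹,
    FreeGroup.of 0 * FreeGroup.of 2 * (FreeGroup.of 0)⁻¹ * (FreeGroup.of 2)⁻¹,
    FreeGroup.of 1 * FreeGroup.of 2 * (FreeGroup.of 1)⁻¹ * (FreeGroup.of 2)⁻¹ }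

/-- The discrete Heisenberg group `N₃`, given by its standard presentation. -/
abbrev N3 : Type := PresentedGroup heisRels

/-- The generator `h₁` of the Heisenberg group `N₃`. -/
def h₁ : N3 := PresentedGroup.of 0

/-- The generator `h₂` of the Heisenberg group `N₃`. -/
def h₂ : N3 := PresentedGroup.of 1

/-- The generator `h₃` of the Heisenberg group `N₃`. -/
def h₃ : N3 := PresentedGroup.of 2

/-- The unit interval `[0,1]` as a subset of `ℝ`. -/
noncomputable def II : Set ℝ := Set.Icc 0 1

/-- `f : ℝ → ℝ` restricts to an orientation-preserving homeomorphism of `[0,1]`. -/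
def IsOPHomeoI (f : ℝ → ℝ) : Prop :=
  Set.BijOn f II II ∧ StrictMonoOn f II ∧ ContinuousOn f II

/-- `g` is `β`-Hölder continuous on `[0,1]` with constant `C`. -/
def HolderOnI (β C : ℝ) (g : ℝ → ℝ) : Prop :=
  ∀ x ∈ II, ∀ y ∈ II, |g x - g y| ≤ C * |x - y| ^ β

/-- `f : ℝ → ℝ` restricts to an orientation-preserving `C¹` diffeomorphism of `[0,1]`:
a strictly increasing bijection of `[0,1]`, continuously differentiable on `[0,1]`
with everywhere positive derivative. -/
def IsC1DiffeoI (f : ℝ → ℝ) : Prop :=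
  Set.BijOn f II II ∧ StrictMonoOn f II ∧
    (∀ x ∈ II, HasDerivWithinAt f (derivWithin f II x) II x) ∧
    ContinuousOn (derivWithin f II) II ∧
    ∀ x ∈ II, 0 < derivWithin f II x

/-- `f : ℝ → ℝ` restricts to an orientation-preserving `C^{1+α}` diffeomorphism of `[0,1]`:
a `C¹` diffeomorphism whose derivative is `α`-Hölder continuous. -/
def IsC1aDiffeoI (α : ℝ) (f : ℝ → ℝ) : Prop :=
  IsC1DiffeoI f ∧ ∃ C > 0, HolderOnI α C (derivWithin f II)

/-- `φ` is an action of `G` on `[0,1]`: `φ 1` is the identity on `[0,1]` and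
`φ (g * h)` is the composition `φ g ∘ φ h` on `[0,1]`. -/
def IsActionOnI {G : Type*} [Group G] (φ : G → ℝ → ℝ) : Prop :=
  Set.EqOn (φ 1) id II ∧ ∀ g h : G, Set.EqOn (φ (g * h)) (φ g ∘ φ h) II

/-- The action `φ` of `G` on `[0,1]` is faithful: elements acting identically
on `[0,1]` coincide. -/
def FaithfulOnI {G : Type*} [Group G] (φ : G → ℝ → ℝ) : Prop :=
  ∀ g h : G, Set.EqOn (φ g) (φ h) II → g = h

/-- `J_g(x) = [inf_{n ∈ ℤ} gⁿ(x), sup_{n ∈ ℤ} gⁿ(x)]` for the action `φ`. -/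
noncomputable def Jseg {G : Type*} [Group G] (φ : G → ℝ → ℝ) (g : G) (x : ℝ) : Set ℝ :=
  Set.Icc (⨅ n : ℤ, φ (g ^ n) x) (⨆ n : ℤ, φ (g ^ n) x)

/-- The map `f` moves the set `s`: `f(s)` and `s` are distinct and have
disjoint interiors. -/
def MovesSet (f : ℝ → ℝ) (s : Set ℝ) : Prop :=
  f '' s ≠ s ∧ Disjoint (interior (f '' s)) (interior s)

/-!
Let `c = ⁅g₁, g₂⁆` commute with `g₁` and `g₂`, and let `x < c x`. The orbit `cⁿ x` increases
strictly, the endpoints `a, b` of `J = J_c(x)` are fixed by `c`, and `c` has no fixed point in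
`(a, b)`. An element commuting with `c` permutes the fixed points of `c`, so if it does not move
`J` it fixes `a` and `b`, and then `c^p x ≤ g x < c^(p+1) x` for some `p`. Upper bounds of this kind
add up under products, and the lower bound `p` for `g` gives the upper bound `1 - p` for `g⁻¹`.
For `A = g₁²` and `B = g₂²` this places `⁅A, B⁆ x` strictly below `c⁴ x`, although `⁅A, B⁆ = c⁴`.
-/

open Set
open scoped commutatorElement

theorem commutatorElement_pow_pow {G : Type*} [Group G] {a b : G} (ha : Commute a ⁅a, b⁆)
    (hb : Commute b ⁅a, b⁆) (m n : ℕ) : ⁅a ^ m, b ^ n⁆ = ⁅a, b⁆ ^ (m * n) := by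
  set c := ⁅a, b⁆ with hc
  have hconj : ∀ m : ℕ, a ^ m * b * (a ^ m)⁻¹ = c ^ m * b := by
    intro m
    induction m with
    | zero => simp
    | succ m ih =>
      calc a ^ (m + 1) * b * (a ^ (m + 1))⁻¹ = a * (a ^ m * b * (a ^ m)⁻¹) * a⁻¹ := by group
        _ = c ^ m * (a * b * a⁻¹ * b⁻¹) * b := by
          rw [ih, ← mul_assoc, (ha.pow_right m).eq]; group
        _ = c ^ (m + 1) * b := by rw [pow_succ, hc, commutatorElement_def]
  calc ⁅a ^ m, b ^ n⁆ = (a ^ m * b * (a ^ m)⁻¹) ^ n * (b ^ n)⁻¹ := by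
        rw [commutatorElement_def, conj_pow]
    _ = c ^ (m * n) := by
        rw [hconj, (hb.symm.pow_left m).mul_pow, ← pow_mul, mul_inv_cancel_right]

theorem Monotone.exists_le_lt_succ {α : Type*} [ConditionallyCompleteLinearOrder α] {f : ℤ → α}
    (hf : Monotone f) {y : α} (hy₁ : ⨅ n, f n < y) (hy₂ : y < ⨆ n, f n) :
    ∃ n, f n ≤ y ∧ y < f (n + 1) := by
  obtain ⟨m, hm⟩ := exists_lt_of_lt_ciSup hy₂
  obtain ⟨k, hk⟩ := exists_lt_of_ciInf_lt hy₁
  obtain ⟨n, hn, hmax⟩ := Int.exists_greatest_of_bdd (P := fun n => f n ≤ y)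
    ⟨m, fun z hz => (hf.reflect_lt (hz.trans_lt hm)).le⟩ ⟨k, hk.le⟩
  exact ⟨n, hn, lt_of_not_ge fun h => by have := hmax _ h; omega⟩

theorem Jseg_inv {G : Type*} [Group G] (φ : G → ℝ → ℝ) (g : G) (x : ℝ) :
    Jseg φ g⁻¹ x = Jseg φ g x := by
  simp only [Jseg, inv_zpow']
  congr 1
  · exact (Equiv.neg ℤ).surjective.iInf_comp fun n => φ (g ^ n) x
  · exact (Equiv.neg ℤ).surjective.iSup_comp fun n => φ (g ^ n) x

theorem exists_mem_Icc_apply_mem_Ioo_of_not_movesSet {f : ℝ → ℝ} {a b x : ℝ}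
    (hf : ¬MovesSet f (Icc a b)) (hx : x ∈ Ioo a b) : ∃ y ∈ Icc a b, f y ∈ Ioo a b := by
  rw [MovesSet, not_and_or, not_not, interior_Icc] at hf
  rcases hf with h | h
  · obtain ⟨y, hy, hyx⟩ : x ∈ f '' Icc a b := by
      rw [h]; exact Ioo_subset_Icc_self hx
    exact ⟨y, hy, hyx ▸ hx⟩
  · obtain ⟨w, hw, hw'⟩ := not_disjoint_iff.1 h
    obtain ⟨y, hy, rfl⟩ := interior_subset hw
    exact ⟨y, hy, hw'⟩

structure IsIncreasingActionOnI {G : Type*} [Group G] (φ : G → ℝ → ℝ) : Prop where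
  one_apply : ∀ y ∈ II, φ 1 y = y
  mul_apply : ∀ (g h : G), ∀ y ∈ II, φ (g * h) y = φ g (φ h y)
  mapsTo : ∀ g : G, MapsTo (φ g) II II
  strictMonoOn : ∀ g : G, StrictMonoOn (φ g) II

theorem IsActionOnI.isIncreasingActionOnI {G : Type*} [Group G] {φ : G → ℝ → ℝ}
    (hact : IsActionOnI φ) (hhomeo : ∀ g : G, IsOPHomeoI (φ g)) : IsIncreasingActionOnI φ where
  one_apply _ hy := hact.1 hy
  mul_apply g h _ hy := hact.2 g h hy
  mapsTo g := (hhomeo g).1.mapsTo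
  strictMonoOn g := (hhomeo g).2.1

namespace IsIncreasingActionOnI

variable {G : Type*} [Group G] {φ : G → ℝ → ℝ} {g c : G} {x y : ℝ}

theorem apply_mem (hφ : IsIncreasingActionOnI φ) (g : G) (hy : y ∈ II) : φ g y ∈ II :=
  hφ.mapsTo g hy

theorem apply_le_apply_iff (hφ : IsIncreasingActionOnI φ) (g : G) {u v : ℝ} (hu : u ∈ II)
    (hv : v ∈ II) : φ g u ≤ φ g v ↔ u ≤ v :=
  (hφ.strictMonoOn g).le_iff_le hu hv

theorem apply_lt_apply_iff (hφ : IsIncreasingActionOnI φ) (g : G) {u v : ℝ} (hu : u ∈ II)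
    (hv : v ∈ II) : φ g u < φ g v ↔ u < v :=
  (hφ.strictMonoOn g).lt_iff_lt hu hv

theorem inv_apply_apply (hφ : IsIncreasingActionOnI φ) (g : G) (hy : y ∈ II) :
    φ g⁻¹ (φ g y) = y := by
  rw [← hφ.mul_apply _ _ _ hy, inv_mul_cancel, hφ.one_apply _ hy]

theorem apply_inv_apply (hφ : IsIncreasingActionOnI φ) (g : G) (hy : y ∈ II) :
    φ g (φ g⁻¹ y) = y := by
  simpa using hφ.inv_apply_apply g⁻¹ hy

theorem apply_apply_of_commute (hφ : IsIncreasingActionOnI φ) {h : G} (hgh : Commute g h)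
    (hy : y ∈ II) : φ g (φ h y) = φ h (φ g y) := by
  rw [← hφ.mul_apply _ _ _ hy, hgh.eq, hφ.mul_apply _ _ _ hy]

theorem zpow_apply_zpow_apply (hφ : IsIncreasingActionOnI φ) (c : G) (m n : ℤ) (hy : y ∈ II) :
    φ (c ^ m) (φ (c ^ n) y) = φ (c ^ (m + n)) y := by
  rw [zpow_add, hφ.mul_apply _ _ _ hy]

theorem strictMono_orbit (hφ : IsIncreasingActionOnI φ) (hx : x ∈ II) (hcx : x < φ c x) :
    StrictMono fun n : ℤ => φ (c ^ n) x :=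
  strictMono_int_of_lt_succ fun n => by
    rw [zpow_add_one, hφ.mul_apply _ _ _ hx]
    exact (hφ.apply_lt_apply_iff _ hx (hφ.apply_mem c hx)).2 hcx

theorem bddAbove_orbit (hφ : IsIncreasingActionOnI φ) (c : G) (hx : x ∈ II) :
    BddAbove (range fun n : ℤ => φ (c ^ n) x) :=
  ⟨1, by rintro _ ⟨n, rfl⟩; exact (hφ.apply_mem _ hx).2⟩

theorem bddBelow_orbit (hφ : IsIncreasingActionOnI φ) (c : G) (hx : x ∈ II) :
    BddBelow (range fun n : ℤ => φ (c ^ n) x) :=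
  ⟨0, by rintro _ ⟨n, rfl⟩; exact (hφ.apply_mem _ hx).1⟩

theorem iSup_orbit_mem (hφ : IsIncreasingActionOnI φ) (c : G) (hx : x ∈ II) :
    ⨆ n : ℤ, φ (c ^ n) x ∈ II :=
  ⟨(hφ.apply_mem _ hx).1.trans (le_ciSup (hφ.bddAbove_orbit c hx) 0),
    ciSup_le fun _ => (hφ.apply_mem _ hx).2⟩

theorem iInf_orbit_mem (hφ : IsIncreasingActionOnI φ) (c : G) (hx : x ∈ II) :
    ⨅ n : ℤ, φ (c ^ n) x ∈ II :=
  ⟨le_ciInf fun _ => (hφ.apply_mem _ hx).1,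
    (ciInf_le (hφ.bddBelow_orbit c hx) 0).trans (hφ.apply_mem _ hx).2⟩

theorem iSup_orbit_le_apply (hφ : IsIncreasingActionOnI φ) (c : G) (hx : x ∈ II) (k : ℤ) :
    ⨆ n : ℤ, φ (c ^ n) x ≤ φ (c ^ k) (⨆ n : ℤ, φ (c ^ n) x) :=
  ciSup_le fun n => calc
    φ (c ^ n) x = φ (c ^ k) (φ (c ^ (n - k)) x) := by
      rw [hφ.zpow_apply_zpow_apply _ _ _ hx, add_sub_cancel]
    _ ≤ _ := (hφ.apply_le_apply_iff _ (hφ.apply_mem _ hx) (hφ.iSup_orbit_mem c hx)).2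
      (le_ciSup (hφ.bddAbove_orbit c hx) _)

theorem apply_le_iInf_orbit (hφ : IsIncreasingActionOnI φ) (c : G) (hx : x ∈ II) (k : ℤ) :
    φ (c ^ k) (⨅ n : ℤ, φ (c ^ n) x) ≤ ⨅ n : ℤ, φ (c ^ n) x :=
  le_ciInf fun n => calc
    _ ≤ φ (c ^ k) (φ (c ^ (n - k)) x) :=
      (hφ.apply_le_apply_iff _ (hφ.iInf_orbit_mem c hx) (hφ.apply_mem _ hx)).2
        (ciInf_le (hφ.bddBelow_orbit c hx) _)
    _ = φ (c ^ n) x := by rw [hφ.zpow_apply_zpow_apply _ _ _ hx, add_sub_cancel]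

theorem apply_iSup_orbit (hφ : IsIncreasingActionOnI φ) (c : G) (hx : x ∈ II) :
    φ c (⨆ n : ℤ, φ (c ^ n) x) = ⨆ n : ℤ, φ (c ^ n) x := by
  have hb := hφ.iSup_orbit_mem c hx
  refine le_antisymm ?_ (by simpa using hφ.iSup_orbit_le_apply c hx 1)
  calc _ ≤ φ c (φ c⁻¹ (⨆ n : ℤ, φ (c ^ n) x)) :=
        (hφ.apply_le_apply_iff _ hb (hφ.apply_mem _ hb)).2
          (by simpa using hφ.iSup_orbit_le_apply c hx (-1))
    _ = _ := hφ.apply_inv_apply c hb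

theorem apply_iInf_orbit (hφ : IsIncreasingActionOnI φ) (c : G) (hx : x ∈ II) :
    φ c (⨅ n : ℤ, φ (c ^ n) x) = ⨅ n : ℤ, φ (c ^ n) x := by
  have ha := hφ.iInf_orbit_mem c hx
  refine le_antisymm (by simpa using hφ.apply_le_iInf_orbit c hx 1) ?_
  calc _ = φ c (φ c⁻¹ (⨅ n : ℤ, φ (c ^ n) x)) := (hφ.apply_inv_apply c ha).symm
    _ ≤ _ := (hφ.apply_le_apply_iff _ (hφ.apply_mem _ ha) ha).2
          (by simpa using hφ.apply_le_iInf_orbit c hx (-1))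

theorem iInf_orbit_lt (hφ : IsIncreasingActionOnI φ) (hx : x ∈ II) (hcx : x < φ c x) :
    ⨅ n : ℤ, φ (c ^ n) x < x :=
  calc _ ≤ φ (c ^ (-1 : ℤ)) x := ciInf_le (hφ.bddBelow_orbit c hx) _
    _ < φ (c ^ (0 : ℤ)) x := hφ.strictMono_orbit hx hcx (by norm_num)
    _ = x := by rw [zpow_zero, hφ.one_apply _ hx]

theorem lt_iSup_orbit (hφ : IsIncreasingActionOnI φ) (hx : x ∈ II) (hcx : x < φ c x) :
    x < ⨆ n : ℤ, φ (c ^ n) x :=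
  calc x = φ (c ^ (0 : ℤ)) x := by rw [zpow_zero, hφ.one_apply _ hx]
    _ < φ (c ^ (1 : ℤ)) x := hφ.strictMono_orbit hx hcx (by norm_num)
    _ ≤ _ := le_ciSup (hφ.bddAbove_orbit c hx) _

theorem lt_apply_of_mem_Ioo (hφ : IsIncreasingActionOnI φ) (hx : x ∈ II) (hcx : x < φ c x)
    (hy : y ∈ Ioo (⨅ n : ℤ, φ (c ^ n) x) (⨆ n : ℤ, φ (c ^ n) x)) : y < φ c y := by
  obtain ⟨n, hn, hn'⟩ := (hφ.strictMono_orbit hx hcx).monotone.exists_le_lt_succ hy.1 hy.2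
  have hyI : y ∈ II := Icc_subset_Icc (hφ.iInf_orbit_mem c hx).1 (hφ.iSup_orbit_mem c hx).2
    (Ioo_subset_Icc_self hy)
  calc y < φ (c ^ (n + 1)) x := hn'
    _ = φ c (φ (c ^ n) x) := by rw [add_comm, ← hφ.zpow_apply_zpow_apply _ _ _ hx, zpow_one]
    _ ≤ φ c y := (hφ.apply_le_apply_iff _ (hφ.apply_mem _ hx) hyI).2 hn

theorem apply_le_and_le_apply_of_commute (hφ : IsIncreasingActionOnI φ) (hgc : Commute g c)
    {a b : ℝ} (ha : a ∈ II) (hb : b ∈ II) (hca : φ c a = a) (hcb : φ c b = b)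
    (hfree : ∀ z ∈ Ioo a b, φ c z ≠ z) (hy : y ∈ Icc a b) (hgy : φ g y ∈ Ioo a b) :
    φ g a ≤ a ∧ b ≤ φ g b := by
  have hyI : y ∈ II := Icc_subset_Icc ha.1 hb.2 hy
  have hfix : ∀ z ∈ II, φ c z = z → φ c (φ g z) = φ g z := fun z hz hcz => by
    rw [hφ.apply_apply_of_commute hgc.symm hz, hcz]
  constructor
  · by_contra! h
    exact hfree _ ⟨h, ((hφ.apply_le_apply_iff g ha hyI).2 hy.1).trans_lt hgy.2⟩ (hfix a ha hca)
  · by_contra! h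
    exact hfree _ ⟨hgy.1.trans_le ((hφ.apply_le_apply_iff g hyI hb).2 hy.2), h⟩ (hfix b hb hcb)

theorem apply_eq_and_apply_eq_of_commute (hφ : IsIncreasingActionOnI φ) (hgc : Commute g c)
    {a b : ℝ} (ha : a ∈ II) (hb : b ∈ II) (hca : φ c a = a) (hcb : φ c b = b)
    (hfree : ∀ z ∈ Ioo a b, φ c z ≠ z) (hy : y ∈ Icc a b) (hgy : φ g y ∈ Ioo a b) :
    φ g a = a ∧ φ g b = b := by
  have hyI : y ∈ II := Icc_subset_Icc ha.1 hb.2 hy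
  obtain ⟨hga, hgb⟩ := hφ.apply_le_and_le_apply_of_commute hgc ha hb hca hcb hfree hy hgy
  have hy' : y ∈ Ioo a b :=
    ⟨(hφ.apply_lt_apply_iff g ha hyI).1 (hga.trans_lt hgy.1),
      (hφ.apply_lt_apply_iff g hyI hb).1 (hgy.2.trans_le hgb)⟩
  obtain ⟨hga', hgb'⟩ := hφ.apply_le_and_le_apply_of_commute hgc.inv_left ha hb hca hcb hfree
    (Ioo_subset_Icc_self hgy) (by rwa [hφ.inv_apply_apply g hyI])
  refine ⟨le_antisymm hga ?_, le_antisymm ?_ hgb⟩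
  · calc a = φ g (φ g⁻¹ a) := (hφ.apply_inv_apply g ha).symm
      _ ≤ φ g a := (hφ.apply_le_apply_iff g (hφ.apply_mem _ ha) ha).2 hga'
  · calc φ g b ≤ φ g (φ g⁻¹ b) := (hφ.apply_le_apply_iff g hb (hφ.apply_mem _ hb)).2 hgb'
      _ = b := hφ.apply_inv_apply g hb

theorem mapsTo_Ioo_of_not_movesSet (hφ : IsIncreasingActionOnI φ) (hgc : Commute g c)
    (hx : x ∈ II) (hcx : x < φ c x) (hg : ¬MovesSet (φ g) (Jseg φ c x)) :
    MapsTo (φ g) (Ioo (⨅ n : ℤ, φ (c ^ n) x) (⨆ n : ℤ, φ (c ^ n) x))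
      (Ioo (⨅ n : ℤ, φ (c ^ n) x) (⨆ n : ℤ, φ (c ^ n) x)) := by
  have ha := hφ.iInf_orbit_mem c hx
  have hb := hφ.iSup_orbit_mem c hx
  obtain ⟨y, hy, hgy⟩ := exists_mem_Icc_apply_mem_Ioo_of_not_movesSet hg
    ⟨hφ.iInf_orbit_lt hx hcx, hφ.lt_iSup_orbit hx hcx⟩
  obtain ⟨hga, hgb⟩ := hφ.apply_eq_and_apply_eq_of_commute hgc ha hb (hφ.apply_iInf_orbit c hx)
    (hφ.apply_iSup_orbit c hx) (fun z hz => (hφ.lt_apply_of_mem_Ioo hx hcx hz).ne') hy hgy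
  intro z hz
  have hzI : z ∈ II := Icc_subset_Icc ha.1 hb.2 (Ioo_subset_Icc_self hz)
  constructor
  · simpa only [hga] using (hφ.apply_lt_apply_iff g ha hzI).2 hz.1
  · simpa only [hgb] using (hφ.apply_lt_apply_iff g hzI hb).2 hz.2

theorem apply_mul_lt (hφ : IsIncreasingActionOnI φ) {h : G} {p q : ℤ} (hx : x ∈ II)
    (hgc : Commute g c) (hg : φ g x < φ (c ^ p) x) (hh : φ h x < φ (c ^ q) x) :
    φ (g * h) x < φ (c ^ (p + q)) x :=
  calc φ (g * h) x = φ g (φ h x) := hφ.mul_apply _ _ _ hx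
    _ < φ g (φ (c ^ q) x) := (hφ.apply_lt_apply_iff _ (hφ.apply_mem _ hx) (hφ.apply_mem _ hx)).2 hh
    _ = φ (c ^ q) (φ g x) := hφ.apply_apply_of_commute (hgc.zpow_right q) hx
    _ < φ (c ^ q) (φ (c ^ p) x) :=
      (hφ.apply_lt_apply_iff _ (hφ.apply_mem _ hx) (hφ.apply_mem _ hx)).2 hg
    _ = φ (c ^ (p + q)) x := by rw [hφ.zpow_apply_zpow_apply _ _ _ hx, add_comm]

theorem apply_inv_le (hφ : IsIncreasingActionOnI φ) {p : ℤ} (hx : x ∈ II) (hgc : Commute g c)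
    (hg : φ (c ^ p) x ≤ φ g x) : φ g⁻¹ x ≤ φ (c ^ (-p)) x := by
  refine (hφ.apply_le_apply_iff g (hφ.apply_mem _ hx) (hφ.apply_mem _ hx)).1 ?_
  calc φ g (φ g⁻¹ x) = φ (c ^ (-p)) (φ (c ^ p) x) := by
        rw [hφ.apply_inv_apply g hx, hφ.zpow_apply_zpow_apply _ _ _ hx, neg_add_cancel,
          zpow_zero, hφ.one_apply _ hx]
    _ ≤ φ (c ^ (-p)) (φ g x) :=
      (hφ.apply_le_apply_iff _ (hφ.apply_mem _ hx) (hφ.apply_mem _ hx)).2 hg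
    _ = φ g (φ (c ^ (-p)) x) := (hφ.apply_apply_of_commute (hgc.zpow_right _) hx).symm

theorem apply_commutatorElement_lt (hφ : IsIncreasingActionOnI φ) {A B : G} {p q : ℤ}
    (hx : x ∈ II) (hcx : x < φ c x) (hAc : Commute A c) (hBc : Commute B c)
    (hA : φ (c ^ p) x ≤ φ A x ∧ φ A x < φ (c ^ (p + 1)) x)
    (hB : φ (c ^ q) x ≤ φ B x ∧ φ B x < φ (c ^ (q + 1)) x) :
    φ ⁅A, B⁆ x < φ (c ^ (4 : ℤ)) x := by
  have hmono := hφ.strictMono_orbit hx hcx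
  have hA' : φ A⁻¹ x < φ (c ^ (-p + 1)) x :=
    (hφ.apply_inv_le hx hAc hA.1).trans_lt (hmono (by omega))
  have hB' : φ B⁻¹ x < φ (c ^ (-q + 1)) x :=
    (hφ.apply_inv_le hx hBc hB.1).trans_lt (hmono (by omega))
  have := hφ.apply_mul_lt hx hAc hA.2 <| hφ.apply_mul_lt hx hBc hB.2 <|
    hφ.apply_mul_lt hx hAc.inv_left hA' hB'
  rw [commutatorElement_def, mul_assoc, mul_assoc]
  convert this using 3
  ring

theorem movesSet_or_movesSet_of_lt (hφ : IsIncreasingActionOnI φ) {g₁ g₂ : G}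
    (hc : ⁅g₁, g₂⁆ = c) (h₁ : Commute g₁ c) (h₂ : Commute g₂ c) (hx : x ∈ II)
    (hcx : x < φ c x) : MovesSet (φ g₁) (Jseg φ c x) ∨ MovesSet (φ g₂) (Jseg φ c x) := by
  by_contra! h
  have hsq : ∀ g : G, Commute g c → ¬MovesSet (φ g) (Jseg φ c x) →
      ∃ p : ℤ, φ (c ^ p) x ≤ φ (g ^ 2) x ∧ φ (g ^ 2) x < φ (c ^ (p + 1)) x := by
    intro g hgc hg
    have hJ := hφ.mapsTo_Ioo_of_not_movesSet hgc hx hcx hg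
    have hg2 := hJ (hJ ⟨hφ.iInf_orbit_lt hx hcx, hφ.lt_iSup_orbit hx hcx⟩)
    rw [← hφ.mul_apply _ _ _ hx, ← pow_two] at hg2
    exact (hφ.strictMono_orbit hx hcx).monotone.exists_le_lt_succ hg2.1 hg2.2
  obtain ⟨p, hp⟩ := hsq g₁ h₁ h.1
  obtain ⟨q, hq⟩ := hsq g₂ h₂ h.2
  have hlt := hφ.apply_commutatorElement_lt hx hcx (h₁.pow_left 2) (h₂.pow_left 2) hp hq
  rw [commutatorElement_pow_pow (by rwa [hc]) (by rwa [hc]), hc] at hlt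
  exact hlt.ne (by norm_cast)

theorem movesSet_or_movesSet (hφ : IsIncreasingActionOnI φ) {g₁ g₂ : G}
    (hc : ⁅g₁, g₂⁆ = c) (h₁ : Commute g₁ c) (h₂ : Commute g₂ c) (hx : x ∈ II)
    (hcx : φ c x ≠ x) : MovesSet (φ g₁) (Jseg φ c x) ∨ MovesSet (φ g₂) (Jseg φ c x) := by
  rcases hcx.lt_or_gt with hlt | hlt
  · have hinv : x < φ c⁻¹ x := by
      simpa only [hφ.inv_apply_apply c hx] using
        (hφ.apply_lt_apply_iff c⁻¹ (hφ.apply_mem c hx) hx).2 hlt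
    rw [← Jseg_inv]
    exact (hφ.movesSet_or_movesSet_of_lt (by rw [← hc, commutatorElement_inv]) h₂.inv_right
      h₁.inv_right hx hinv).symm
  · exact hφ.movesSet_or_movesSet_of_lt hc h₁ h₂ hx hlt

end IsIncreasingActionOnI

theorem commutatorElement_h₁_h₂ : ⁅h₁, h₂⁆ = h₃ :=
  (map_commutatorElement (PresentedGroup.mk heisRels) _ _).symm.trans
    (PresentedGroup.mk_eq_mk_of_mul_inv_mem (Or.inl rfl))

theorem commute_h₁_h₃ : Commute h₁ h₃ :=
  commutatorElement_eq_one_iff_commute.1 <|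
    (map_commutatorElement (PresentedGroup.mk heisRels) _ _).symm.trans
      (PresentedGroup.one_of_mem (Or.inr (Or.inl rfl)))

theorem commute_h₂_h₃ : Commute h₂ h₃ :=
  commutatorElement_eq_one_iff_commute.1 <|
    (map_commutatorElement (PresentedGroup.mk heisRels) _ _).symm.trans
      (PresentedGroup.one_of_mem (Or.inr (Or.inr rfl)))

theorem heisenberg_moves_interval_general (φ : N3 → ℝ → ℝ)
    (hact : IsActionOnI φ) (hhomeo : ∀ g : N3, IsOPHomeoI (φ g))
    (x : ℝ) (hx : x ∈ II) (hx3 : φ h₃ x ≠ x) :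
    MovesSet (φ h₁) (Jseg φ h₃ x) ∨ MovesSet (φ h₂) (Jseg φ h₃ x) :=
  (hact.isIncreasingActionOnI hhomeo).movesSet_or_movesSet commutatorElement_h₁_h₂
    commute_h₁_h₃ commute_h₂_h₃ hx hx3

/-- **Lemma 2.4.** Suppose the Heisenberg group `N₃` acts faithfully by
orientation-preserving homeomorphisms of `[0,1]`. If `x ∈ [0,1]` is not fixed by `h₃`,
then at least one of `h₁, h₂` moves `J_{h₃}(x)`. -/
theorem heisenberg_moves_interval (φ : N3 → ℝ → ℝ)
    (hact : IsActionOnI φ) (hhomeo : ∀ g : N3, IsOPHomeoI (φ g))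
    (hfaith : FaithfulOnI φ)
    (x : ℝ) (hx : x ∈ II) (hx3 : φ h₃ x ≠ x) :
    MovesSet (φ h₁) (Jseg φ h₃ x) ∨ MovesSet (φ h₂) (Jseg φ h₃ x) :=
  heisenberg_moves_interval_general φ hact hhomeo x hx hx3
end

section
/- Let G be a nilpotent group acting by orientation-preserving homeomorphisms of [0,1], let x₀ ∈ [0,1], and let g, h ∈ G. Then the intervals h(J_g(x₀)) and J_g(x₀) either are equal or have disjoint interiors. -/
/-!
Let `a ≤ b` be the infimum and supremum of the `g`-orbit of `x₀`. If `g` moves `x₀`, then `g` or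
`g⁻¹` fixes `a` and `b` and pushes every point of `(a, b)` upwards. If some `h` moved an endpoint
of `[a, b]` into `(a, b)`, there would be two elements `p`, `q` pushing an interval `(α, β)`
upwards, `p` fixing `α` and `q` fixing `β` but not `α`: either `p = g` and `q = h`, with `β` a
fixed point of `h` in `(a, b)`, or `p = h g h⁻¹` and `q = g` (the right endpoint is the same
statement for the reversed order). Suitable powers of `p⁻¹` and `q` then play ping-pong on two
disjoint intervals, so the Mal'cev words `uₖ₊₁ = uₖvₖ`, `vₖ₊₁ = vₖuₖ` built from them never
coincide. But `uₖ⁻¹vₖ` lies in the `k`-th term of the lower central series, so in a nilpotent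
group `uₖ = vₖ` for large `k`.
-/

open Set

section MalcevWords

open scoped commutatorElement

variable {G : Type*} [Group G]

def malcevWords (u v : G) : ℕ → G × G
  | 0 => (u, v)
  | n + 1 =>
    ((malcevWords u v n).1 * (malcevWords u v n).2, (malcevWords u v n).2 * (malcevWords u v n).1)

theorem malcevWords_fst_inv_mul_snd_mem (u v : G) (n : ℕ) :
    (malcevWords u v n).1⁻¹ * (malcevWords u v n).2 ∈ (⊤ : Subgroup G).lowerCentralSeries n := by
  induction n with
  | zero => exact Subgroup.mem_top _
  | succ n ih =>
    set p := malcevWords u v n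
    have hcomm : (malcevWords u v (n + 1)).1⁻¹ * (malcevWords u v (n + 1)).2 =
        ⁅(p.1⁻¹ * p.2)⁻¹, p.1⁻¹⁆ := by
      simp only [malcevWords, p, commutatorElement_def]
      group
    rw [hcomm, Subgroup.lowerCentralSeries_succ]
    exact Subgroup.commutator_mem_commutator (inv_mem ih) (Subgroup.mem_top _)

theorem Group.IsNilpotent.exists_malcevWords_fst_eq_snd [Group.IsNilpotent G] (u v : G) :
    ∃ n, (malcevWords u v n).1 = (malcevWords u v n).2 := by
  obtain ⟨n, hn⟩ := Subgroup.nilpotent_iff_lowerCentralSeries.mp ‹Group.IsNilpotent G›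
  have hmem := malcevWords_fst_inv_mul_snd_mem u v n
  rw [hn, Subgroup.mem_bot, inv_mul_eq_one] at hmem
  exact ⟨n, hmem⟩

variable {β : Type*} [MulAction G β] {u v : G} {X Y : Set β}

theorem mapsTo_malcevWords (hu : MapsTo (u • ·) (X ∪ Y) X) (hv : MapsTo (v • ·) (X ∪ Y) Y)
    (n : ℕ) :
    MapsTo ((malcevWords u v n).1 • ·) (X ∪ Y) X ∧
      MapsTo ((malcevWords u v n).2 • ·) (X ∪ Y) Y := by
  induction n with
  | zero => exact ⟨hu, hv⟩
  | succ n ih =>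
    refine ⟨fun x hx => ?_, fun x hx => ?_⟩
    · simpa only [malcevWords, mul_smul] using ih.1 (Or.inr (ih.2 hx))
    · simpa only [malcevWords, mul_smul] using ih.2 (Or.inl (ih.1 hx))

theorem Group.IsNilpotent.not_disjoint_of_mapsTo [Group.IsNilpotent G] (hX : X.Nonempty)
    (hu : MapsTo (u • ·) (X ∪ Y) X) (hv : MapsTo (v • ·) (X ∪ Y) Y) : ¬Disjoint X Y := by
  intro hXY
  obtain ⟨n, hn⟩ := Group.IsNilpotent.exists_malcevWords_fst_eq_snd u v
  obtain ⟨x, hx⟩ := hX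
  have hmaps := mapsTo_malcevWords hu hv n
  exact hXY.ne_of_mem (hmaps.1 (Or.inl hx)) (hmaps.2 (Or.inl hx)) (by rw [hn])

end MalcevWords

section OrderedAction

variable {G α : Type*} [Group G] [MulAction G α]

instance [Preorder α] [CovariantClass G α HSMul.hSMul LE.le] :
    CovariantClass G αᵒᵈ HSMul.hSMul LE.le :=
  ⟨fun g _ _ h => smul_mono_right (α := α) g h⟩

def MulAction.toOrderIso [Preorder α] [CovariantClass G α HSMul.hSMul LE.le] (g : G) : α ≃o α :=
  (MulAction.toPerm g).toOrderIso (smul_mono_right g) (smul_mono_right g⁻¹)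

@[simp]
theorem MulAction.toOrderIso_apply [Preorder α] [CovariantClass G α HSMul.hSMul LE.le] (g : G)
    (x : α) : MulAction.toOrderIso g x = g • x :=
  rfl

section LinearOrder

variable [LinearOrder α] [CovariantClass G α HSMul.hSMul LE.le]

theorem strictMono_smul (g : G) : StrictMono (g • · : α → α) :=
  (MulAction.toOrderIso g).strictMono

theorem inv_smul_lt_iff_lt_smul {g : G} {x y : α} : g⁻¹ • x < y ↔ x < g • y := by
  rw [← (strictMono_smul g).lt_iff_lt, smul_inv_smul]

theorem lt_inv_smul_iff_smul_lt {g : G} {x y : α} : x < g⁻¹ • y ↔ g • x < y := by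
  rw [← (strictMono_smul g).lt_iff_lt, smul_inv_smul]

end LinearOrder

variable [CompleteLinearOrder α] [CovariantClass G α HSMul.hSMul LE.le]

theorem iSup_pow_smul_eq {q : G} {y b : α} (hqb : q • b = b) (hyb : y ≤ b)
    (hq : ∀ x ∈ Ico y b, x < q • x) : ⨆ n : ℕ, q ^ n • y = b := by
  set L := ⨆ n : ℕ, q ^ n • y
  have hLb : L ≤ b := iSup_le fun n => (smul_mono_right _ hyb).trans (pow_smul_le hqb.le n)
  have hyL : y ≤ L := by simpa using le_iSup (fun n : ℕ => q ^ n • y) 0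
  have hqL : q • L ≤ L := by
    rw [← MulAction.toOrderIso_apply, OrderIso.map_iSup]
    refine iSup_le fun n => ?_
    rw [MulAction.toOrderIso_apply, ← mul_smul, ← pow_succ']
    exact le_iSup (fun n : ℕ => q ^ n • y) (n + 1)
  by_contra hLb'
  exact (hq L ⟨hyL, lt_of_le_of_ne hLb hLb'⟩).not_ge hqL

theorem exists_lt_pow_smul {q : G} {y b t : α} (hqb : q • b = b) (hyb : y ≤ b)
    (hq : ∀ x ∈ Ico y b, x < q • x) (htb : t < b) : ∃ n : ℕ, t < q ^ n • y :=
  lt_iSup_iff.mp (iSup_pow_smul_eq hqb hyb hq ▸ htb)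

theorem exists_pow_smul_lt {p : G} {y a t : α} (hpa : p • a = a) (hay : a ≤ y)
    (hp : ∀ x ∈ Ioc a y, p • x < x) (hat : a < t) : ∃ n : ℕ, p ^ n • y < t :=
  exists_lt_pow_smul (α := αᵒᵈ) hpa hay (fun x hx => hp x ⟨hx.2, hx.1⟩) hat

theorem exists_smul_eq_self_of_lt_smul_of_smul_lt {k : G} {a b : α} (hab : a ≤ b)
    (ha : a < k • a) (hb : k • b < b) : ∃ c ∈ Ioo a b, k • c = c ∧ ∀ x ∈ Ico a c, x < k • x := by
  set S := {x | a ≤ x ∧ k • x ≤ x}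
  set c := sInf S
  have hac : a ≤ c := le_sInf fun x hx => hx.1
  have hkc : k • c ≤ c := le_sInf fun x hx => (smul_mono_right k (sInf_le hx)).trans hx.2
  have hck : c ≤ k • c := sInf_le ⟨ha.le.trans (smul_mono_right k hac), smul_mono_right k hkc⟩
  have hfix : k • c = c := le_antisymm hkc hck
  refine ⟨c, ⟨lt_of_le_of_ne hac fun h => ha.ne' ?_, lt_of_le_of_ne (sInf_le ⟨hab, hb.le⟩)
    fun h => hb.ne ?_⟩, hfix, fun x hx => not_le.mp fun hkx => hx.2.not_ge (sInf_le ⟨hx.1, hkx⟩)⟩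
  · rwa [h]
  · rwa [← h]

theorem strictMono_zpow_smul {g : G} {x : α} (hx : x < g • x) :
    StrictMono fun n : ℤ => g ^ n • x :=
  strictMono_int_of_lt_succ fun n => by
    simpa only [zpow_add_one, mul_smul] using strictMono_smul (g ^ n) hx

theorem smul_iSup_zpow_smul (g : G) (x : α) : g • ⨆ n : ℤ, g ^ n • x = ⨆ n : ℤ, g ^ n • x := by
  rw [← MulAction.toOrderIso_apply, OrderIso.map_iSup]
  simp only [MulAction.toOrderIso_apply, ← mul_smul, ← zpow_one_add]
  exact (Equiv.addLeft 1).iSup_comp (g := fun n => g ^ n • x)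

theorem smul_iInf_zpow_smul (g : G) (x : α) : g • ⨅ n : ℤ, g ^ n • x = ⨅ n : ℤ, g ^ n • x :=
  smul_iSup_zpow_smul (α := αᵒᵈ) g x

theorem lt_smul_of_mem_Ioo_iInf_iSup {g : G} {x y : α} (hx : x < g • x)
    (hy : y ∈ Ioo (⨅ n : ℤ, g ^ n • x) (⨆ n : ℤ, g ^ n • x)) : y < g • y := by
  obtain ⟨m, hm⟩ := iInf_lt_iff.mp hy.1
  obtain ⟨n, hn⟩ := lt_iSup_iff.mp hy.2
  by_contra! hgy
  obtain ⟨k, rfl⟩ := Int.le.dest ((strictMono_zpow_smul hx).le_iff_le.mp (hm.trans hn).le)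
  have hlt : g ^ (m + k) • x < y := calc
    g ^ (m + k) • x = g ^ k • g ^ m • x := by rw [← mul_smul, ← zpow_natCast, ← zpow_add, add_comm]
    _ < g ^ k • y := strictMono_smul _ hm
    _ ≤ y := pow_smul_le hgy k
  exact hlt.not_gt hn

variable [Group.IsNilpotent G]

/-- Ping-pong of `p⁻ⁿ` and `q²p⁻ⁿ` on `[a, q • a]` and `[q² • a, q³ • a]`. -/
theorem Group.IsNilpotent.false_of_crossed {p q : G} {a b : α} (hab : a < b) (hpa : p • a = a)
    (hqb : q • b = b) (hp : ∀ x ∈ Ioo a b, x < p • x) (hq : ∀ x ∈ Ico a b, x < q • x) : False := by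
  have hqI : ∀ x ∈ Ico a b, q • x ∈ Ico a b := fun x hx =>
    ⟨hx.1.trans (hq x hx).le, hqb ▸ strictMono_smul q hx.2⟩
  have h₀ : a ∈ Ico a b := ⟨le_rfl, hab⟩
  have h₁ := hqI _ h₀
  have h₂ := hqI _ h₁
  have h₃ := hqI _ h₂
  obtain ⟨n, hn⟩ := exists_pow_smul_lt (p := p⁻¹) (inv_smul_eq_iff.mpr hpa.symm) h₃.1
    (fun x hx => inv_smul_lt_iff_lt_smul.mpr (hp x ⟨hx.1, hx.2.trans_lt h₃.2⟩)) (hq a h₀)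
  have hu : MapsTo ((p⁻¹ ^ n) • ·) (Icc a (q • q • q • a)) (Icc a (q • a)) := fun x hx =>
    ⟨(le_pow_smul (inv_smul_eq_iff.mpr hpa.symm).ge n).trans (smul_mono_right _ hx.1),
      ((smul_mono_right _ hx.2).trans hn.le)⟩
  have hv : MapsTo ((q * q * p⁻¹ ^ n) • ·) (Icc a (q • q • q • a))
      (Icc (q • q • a) (q • q • q • a)) := fun x hx => by
      simp only [mul_smul]
      exact ⟨smul_mono_right _ (smul_mono_right _ (hu hx).1),
        smul_mono_right _ (smul_mono_right _ (hu hx).2)⟩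
  have hXY : Icc a (q • a) ∪ Icc (q • q • a) (q • q • q • a) ⊆ Icc a (q • q • q • a) :=
    union_subset (Icc_subset_Icc_right ((hq _ h₁).le.trans (hq _ h₂).le)) (Icc_subset_Icc_left h₂.1)
  exact Group.IsNilpotent.not_disjoint_of_mapsTo ⟨a, left_mem_Icc.mpr h₁.1⟩ (hu.mono_left hXY)
    (hv.mono_left hXY) (disjoint_left.mpr fun x hx hy => (hq _ h₁).not_ge (hy.1.trans hx.2))

section Rigidity

variable {f k : G} {a b : α}

theorem Group.IsNilpotent.false_of_smul_left_mem_Ioo (hfa : f • a = a) (hfb : f • b = b)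
    (hf : ∀ x ∈ Ioo a b, x < f • x) (hk : k • a ∈ Ioo a b) : False := by
  rcases lt_or_ge (k • b) b with hkb | hkb
  · obtain ⟨c, hc, hkc, hk'⟩ :=
      exists_smul_eq_self_of_lt_smul_of_smul_lt (hk.1.trans hk.2).le hk.1 hkb
    exact false_of_crossed hc.1 hfa hkc (fun x hx => hf x ⟨hx.1, hx.2.trans hc.2⟩) hk'
  · -- the conjugate `k f k⁻¹` fixes `k • a` and pushes `(k • a, k • b) ⊇ (k • a, b)` up
    refine false_of_crossed (p := k * f * k⁻¹) hk.2 ?_ hfb ?_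
      (fun x hx => hf x ⟨hk.1.trans_le hx.1, hx.2⟩)
    · rw [mul_smul, mul_smul, inv_smul_smul, hfa]
    · intro x hx
      have hx' : k⁻¹ • x ∈ Ioo a b :=
        ⟨lt_inv_smul_iff_smul_lt.mpr hx.1, inv_smul_lt_iff_lt_smul.mpr (hx.2.trans_le hkb)⟩
      simpa only [mul_smul, smul_inv_smul] using strictMono_smul k (hf _ hx')

theorem Group.IsNilpotent.false_of_smul_right_mem_Ioo (hfa : f • a = a) (hfb : f • b = b)
    (hf : ∀ x ∈ Ioo a b, x < f • x) (hk : k • b ∈ Ioo a b) : False :=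
  false_of_smul_left_mem_Ioo (α := αᵒᵈ) (f := f⁻¹) (inv_smul_eq_iff.mpr hfb.symm)
    (inv_smul_eq_iff.mpr hfa.symm) (fun x hx => inv_smul_lt_iff_lt_smul.mpr (hf x ⟨hx.2, hx.1⟩))
    ⟨hk.2, hk.1⟩

theorem Group.IsNilpotent.smul_eq_and_smul_eq_or_le_or_le (hfa : f • a = a) (hfb : f • b = b)
    (hf : ∀ x ∈ Ioo a b, x < f • x) (k : G) :
    (k • a = a ∧ k • b = b) ∨ k • b ≤ a ∨ b ≤ k • a := by
  by_contra! h
  obtain ⟨hne, hakb, hkab⟩ := h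
  rcases lt_trichotomy (k • a) a with hka | hka | hka
  · exact false_of_smul_left_mem_Ioo (k := k⁻¹) hfa hfb hf
      ⟨lt_inv_smul_iff_smul_lt.mpr hka, inv_smul_lt_iff_lt_smul.mpr hakb⟩
  · rcases lt_trichotomy (k • b) b with hkb | hkb | hkb
    · exact false_of_smul_right_mem_Ioo hfa hfb hf ⟨hakb, hkb⟩
    · exact hne hka hkb
    · exact false_of_smul_right_mem_Ioo (k := k⁻¹) hfa hfb hf
        ⟨lt_inv_smul_iff_smul_lt.mpr hkab, inv_smul_lt_iff_lt_smul.mpr hkb⟩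
  · exact false_of_smul_left_mem_Ioo hfa hfb hf ⟨hka, hkab⟩

theorem Group.IsNilpotent.smul_eq_and_smul_eq_or_le_or_le_of_lt_smul {g : G} {x : α}
    (hx : x < g • x) (h : G) :
    h • ⨅ n : ℤ, g ^ n • x = ⨅ n : ℤ, g ^ n • x ∧ h • ⨆ n : ℤ, g ^ n • x = ⨆ n : ℤ, g ^ n • x ∨
      h • ⨆ n : ℤ, g ^ n • x ≤ ⨅ n : ℤ, g ^ n • x ∨
        ⨆ n : ℤ, g ^ n • x ≤ h • ⨅ n : ℤ, g ^ n • x :=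
  smul_eq_and_smul_eq_or_le_or_le (smul_iInf_zpow_smul g x) (smul_iSup_zpow_smul g x)
    (fun _ hy => lt_smul_of_mem_Ioo_iInf_iSup hx hy) h

theorem Group.IsNilpotent.zpow_orbit_bounds_smul_eq_or_le_or_le (g h : G) (x : α) :
    h • ⨅ n : ℤ, g ^ n • x = ⨅ n : ℤ, g ^ n • x ∧ h • ⨆ n : ℤ, g ^ n • x = ⨆ n : ℤ, g ^ n • x ∨
      h • ⨆ n : ℤ, g ^ n • x ≤ ⨅ n : ℤ, g ^ n • x ∨
        ⨆ n : ℤ, g ^ n • x ≤ h • ⨅ n : ℤ, g ^ n • x := by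
  rcases lt_trichotomy x (g • x) with hx | hx | hx
  · exact smul_eq_and_smul_eq_or_le_or_le_of_lt_smul hx h
  · have hfix (n : ℤ) : g ^ n • x = x := MulAction.mem_fixedBy_zpow hx.symm n
    simp only [hfix, iInf_const, iSup_const]
    rcases lt_trichotomy (h • x) x with hhx | hhx | hhx
    exacts [.inr (.inl hhx.le), .inl ⟨hhx, hhx⟩, .inr (.inr hhx.le)]
  · have hinv (n : ℤ) : g ^ n • x = g⁻¹ ^ (-n) • x := by rw [inv_zpow', neg_neg]
    have hinf : ⨅ n : ℤ, g ^ n • x = ⨅ n : ℤ, g⁻¹ ^ n • x := by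
      simp only [hinv]
      exact (Equiv.neg ℤ).iInf_comp (g := fun n => g⁻¹ ^ n • x)
    have hsup : ⨆ n : ℤ, g ^ n • x = ⨆ n : ℤ, g⁻¹ ^ n • x := by
      simp only [hinv]
      exact (Equiv.neg ℤ).iSup_comp (g := fun n => g⁻¹ ^ n • x)
    rw [hinf, hsup]
    exact smul_eq_and_smul_eq_or_le_or_le_of_lt_smul (lt_inv_smul_iff_smul_lt.mpr hx) h

end Rigidity

end OrderedAction

abbrev IsActionOnI.toMulAction {G : Type*} [Group G] {φ : G → ℝ → ℝ} (hact : IsActionOnI φ)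
    (hmaps : ∀ g, MapsTo (φ g) II II) : MulAction G (Icc (0 : ℝ) 1) where
  smul g x := ⟨φ g x, hmaps g x.2⟩
  one_smul x := Subtype.ext (hact.1 x.2)
  mul_smul g h x := Subtype.ext (hact.2 g h x.2)

/-- For a nilpotent group `G` acting by orientation-preserving homeomorphisms of `[0,1]`,
any image `h(J_g(x₀))` either equals `J_g(x₀)` or has interior disjoint from that of
`J_g(x₀)`. -/
theorem nilpotent_image_eq_or_disjoint_interior
    {G : Type*} [Group G] [Group.IsNilpotent G] (φ : G → ℝ → ℝ)
    (hact : IsActionOnI φ) (hhomeo : ∀ g : G, IsOPHomeoI (φ g))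
    (x₀ : ℝ) (hx₀ : x₀ ∈ II) (g h : G) :
    φ h '' Jseg φ g x₀ = Jseg φ g x₀ ∨
      Disjoint (interior (φ h '' Jseg φ g x₀)) (interior (Jseg φ g x₀)) := by
  let := hact.toMulAction fun g => (hhomeo g).1.mapsTo
  have : CovariantClass G (Icc (0 : ℝ) 1) HSMul.hSMul LE.le :=
    ⟨fun g x y hxy => (hhomeo g).2.1.monotoneOn x.2 y.2 hxy⟩
  set y : Icc (0 : ℝ) 1 := ⟨x₀, hx₀⟩
  set a := ⨅ n : ℤ, g ^ n • y
  set b := ⨆ n : ℤ, g ^ n • y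
  have hJ : Jseg φ g x₀ = Icc (a : ℝ) b := by
    rw [Set.Icc.coe_iInf zero_le_one, Set.Icc.coe_iSup zero_le_one]
    rfl
  have himage : φ h '' Jseg φ g x₀ = Icc ((h • a : Icc (0 : ℝ) 1) : ℝ) ↑(h • b) := by
    have hIcc : (h • ·) '' Icc a b = Icc (h • a) (h • b) := (MulAction.toOrderIso h).image_Icc a b
    rw [hJ, ← image_subtype_val_Icc, ← image_subtype_val_Icc, ← hIcc, image_image, image_image]
    rfl
  rw [himage, hJ, interior_Icc, interior_Icc]
  rcases Group.IsNilpotent.zpow_orbit_bounds_smul_eq_or_le_or_le g h y with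
    ⟨ha, hb⟩ | hba | hab
  · exact .inl (by rw [ha, hb])
  · exact .inr <| disjoint_left.mpr fun z hz hz' =>
      (hz'.1.trans hz.2).not_ge (Subtype.coe_le_coe.mpr hba)
  · exact .inr <| disjoint_left.mpr fun z hz hz' =>
      (hz.1.trans hz'.2).not_ge (Subtype.coe_le_coe.mpr hab)
end

section
/- Let (I_{i,j,k})_{(i,j,k)∈ℤ³} be a family of pairwise disjoint open subintervals of [0,1], disposed respecting the lexicographic order of ℤ³ (I_{i,j,k} lies to the left of I_{i',j',k'} if and only if (i,j,k) ≺ (i',j',k') lexicographically), whose union is dense in [0,1]. Then there exist unique orientation-preserving homeomorphisms e, d, f of [0,1] whose restriction to each I_{i,j,k} is the affine map onto I_{i+1,j,k}, I_{i,j+1,k}, and I_{i,j,k+ij} respectively, and the subgroup of Homeo₊([0,1]) generated by e, d, f is isomorphic to N₄. -/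
/-- The (strict) lexicographic order on `ℤ³`. -/
def Lex3 (m m' : ℤ × ℤ × ℤ) : Prop :=
  m.1 < m'.1 ∨ (m.1 = m'.1 ∧ (m.2.1 < m'.2.1 ∨ (m.2.1 = m'.2.1 ∧ m.2.2 < m'.2.2)))

/-- The permutation `T` of `[0,1]` is an orientation-preserving homeomorphism whose
restriction to each interval `(u m, v m)` is the affine map onto `(u (σ m), v (σ m))`. -/
def AffineOnPieces (u v : ℤ × ℤ × ℤ → ℝ) (σ : ℤ × ℤ × ℤ → ℤ × ℤ × ℤ)
    (T : Equiv.Perm unitInterval) : Prop :=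
  (StrictMono fun x : unitInterval => (T x : ℝ)) ∧
  (Continuous fun x : unitInterval => (T x : ℝ)) ∧
  ∀ m : ℤ × ℤ × ℤ, ∀ x : unitInterval, (x : ℝ) ∈ Set.Ioo (u m) (v m) →
    (T x : ℝ) = u (σ m) + ((v (σ m) - u (σ m)) / (v m - u m)) * ((x : ℝ) - u m)

/-- The triple `(e, d, f)` of permutations of `[0,1]` is made of orientation-preserving
homeomorphisms that are affine on each `I_{i,j,k} = (u(i,j,k), v(i,j,k))`, sending it onto
`I_{i+1,j,k}`, `I_{i,j+1,k}` and `I_{i,j,k+ij}` respectively. -/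
def AffineTriple (u v : ℤ × ℤ × ℤ → ℝ)
    (T : Equiv.Perm unitInterval × Equiv.Perm unitInterval × Equiv.Perm unitInterval) :
    Prop :=
  AffineOnPieces u v (fun m => (m.1 + 1, m.2.1, m.2.2)) T.1 ∧
  AffineOnPieces u v (fun m => (m.1, m.2.1 + 1, m.2.2)) T.2.1 ∧
  AffineOnPieces u v (fun m => (m.1, m.2.1, m.2.2 + m.1 * m.2.1)) T.2.2

/-! Any permutation `σ` of the indices that respects the left-to-right order of the intervals
induces a homeomorphism of `[0,1]` that is affine from each `I_m` onto `I_{σ m}`. Its value at `x`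
is the supremum of the images of the points of the pieces lying to the left of `x`; this is
monotone, and its composite with the map of `σ⁻¹` is a monotone self-map of `[0,1]` that is the
identity on the dense union of the pieces, hence everywhere. Continuity and density make the
homeomorphism unique, so `σ ↦` (homeomorphism) is an injective homomorphism.

The index maps of `e`, `d`, `f` are the action on `ℤ³` of three elementary matrices, for a
faithful action of `N₄` by automorphisms of the lexicographic order, and these three matrices
generate `N₄`. -/

open Set

noncomputable def affineRescale (a b c d t : ℝ) : ℝ :=
  c + (d - c) / (b - a) * (t - a)

section affineRescale

variable {a b c d : ℝ}

lemma affineRescale_strictMono (hab : a < b) (hcd : c < d) :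
    StrictMono (affineRescale a b c d) := fun t t' h => by
  have : 0 < (d - c) / (b - a) := div_pos (by linarith) (by linarith)
  unfold affineRescale
  nlinarith

@[simp]
lemma affineRescale_left : affineRescale a b c d a = c := by
  simp [affineRescale]

lemma affineRescale_right (hab : a ≠ b) : affineRescale a b c d b = d := by
  have : b - a ≠ 0 := sub_ne_zero.2 hab.symm
  unfold affineRescale
  field_simp
  ring

lemma mapsTo_affineRescale (hab : a < b) (hcd : c < d) :
    MapsTo (affineRescale a b c d) (Ioo a b) (Ioo c d) := fun t ht => by
  have hmono := affineRescale_strictMono hab hcd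
  constructor
  · simpa using hmono ht.1
  · simpa [affineRescale_right hab.ne] using hmono ht.2

lemma affineRescale_self (hab : a ≠ b) (t : ℝ) : affineRescale a b a b t = t := by
  have : b - a ≠ 0 := sub_ne_zero.2 hab.symm
  unfold affineRescale
  field_simp
  ring

lemma affineRescale_comp {e f : ℝ} (hab : a ≠ b) (hcd : c ≠ d) (t : ℝ) :
    affineRescale c d e f (affineRescale a b c d t) = affineRescale a b e f t := by
  have : b - a ≠ 0 := sub_ne_zero.2 hab.symm
  have : d - c ≠ 0 := sub_ne_zero.2 hcd.symm
  unfold affineRescale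
  field_simp
  ring

end affineRescale

lemma Monotone.eqOn_id_Icc {G : ℝ → ℝ} {D : Set ℝ} {a b : ℝ} (hG : Monotone G)
    (hmaps : MapsTo G (Icc a b) (Icc a b)) (hD : Icc a b ⊆ closure D) (hGD : EqOn G id D) :
    EqOn G id (Icc a b) := by
  intro y hy
  have hGy := hmaps hy
  rcases lt_trichotomy (G y) y with hlt | heq | hgt
  · obtain ⟨x, hx, hxD⟩ := mem_closure_iff.1
      (hD (show (G y + y) / 2 ∈ Icc a b by constructor <;> linarith [hGy.1, hy.2]))
      (Ioo (G y) y) isOpen_Ioo ⟨by linarith, by linarith⟩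
    have := hG hx.2.le
    rw [hGD hxD] at this
    exact absurd hx.1 (by simpa using this)
  · exact heq
  · obtain ⟨x, hx, hxD⟩ := mem_closure_iff.1
      (hD (show (y + G y) / 2 ∈ Icc a b by constructor <;> linarith [hGy.2, hy.1]))
      (Ioo y (G y)) isOpen_Ioo ⟨by linarith, by linarith⟩
    have := hG hx.1.le
    rw [hGD hxD] at this
    exact absurd hx.2 (by simpa using this)

section IntervalFamily

variable {ι : Type*} {u v : ι → ℝ}

structure DenseIntervalFamily (u v : ι → ℝ) : Prop where
  lt : ∀ m, u m < v m
  subset : ∀ m, Ioo (u m) (v m) ⊆ Icc 0 1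
  disjoint : Pairwise fun m m' => Disjoint (Ioo (u m) (v m)) (Ioo (u m') (v m'))
  dense : Icc 0 1 ⊆ closure (⋃ m, Ioo (u m) (v m))

def PreservesIntervalOrder (u v : ι → ℝ) (σ : Equiv.Perm ι) : Prop :=
  ∀ m m', v (σ m) ≤ u (σ m') ↔ v m ≤ u m'

lemma PreservesIntervalOrder.symm {σ : Equiv.Perm ι} (h : PreservesIntervalOrder u v σ) :
    PreservesIntervalOrder u v σ.symm := fun m m' => by
  simpa using (h (σ.symm m) (σ.symm m')).symm

def pieceImagesBelow (u v : ι → ℝ) (σ : Equiv.Perm ι) (x : ℝ) : Set ℝ :=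
  {y | ∃ m, ∃ t ∈ Ioo (u m) (v m), t ≤ x ∧ affineRescale (u m) (v m) (u (σ m)) (v (σ m)) t = y}

noncomputable def pieceSup (u v : ι → ℝ) (σ : Equiv.Perm ι) (x : ℝ) : ℝ :=
  sSup (insert 0 (pieceImagesBelow u v σ x))

lemma pieceSup_le {σ : Equiv.Perm ι} {x c : ℝ} (h0 : 0 ≤ c)
    (h : ∀ m, ∀ t ∈ Ioo (u m) (v m), t ≤ x →
      affineRescale (u m) (v m) (u (σ m)) (v (σ m)) t ≤ c) :
    pieceSup u v σ x ≤ c := by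
  refine csSup_le (insert_nonempty _ _) ?_
  rintro y (rfl | ⟨m, t, ht, hx, rfl⟩)
  exacts [h0, h m t ht hx]

namespace DenseIntervalFamily

variable (H : DenseIntervalFamily u v)
include H

lemma Icc_subset (m : ι) : Icc (u m) (v m) ⊆ Icc 0 1 := by
  rw [← closure_Ioo (H.lt m).ne]
  exact closure_minimal (H.subset m) isClosed_Icc

lemma nonneg (m : ι) : 0 ≤ u m := (H.Icc_subset m ⟨le_rfl, (H.lt m).le⟩).1

lemma le_one (m : ι) : v m ≤ 1 := (H.Icc_subset m ⟨(H.lt m).le, le_rfl⟩).2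

lemma le_or_le {m m' : ι} (h : m ≠ m') : v m ≤ u m' ∨ v m' ≤ u m := by
  rcases min_le_iff.1 (Ioo_disjoint_Ioo.1 (H.disjoint h)) with h | h <;>
    rcases le_max_iff.1 h with h' | h'
  all_goals first | exact absurd h' (H.lt _).not_ge | simp [h']

lemma mapsTo_piece (m n : ι) :
    MapsTo (affineRescale (u m) (v m) (u n) (v n)) (Ioo (u m) (v m)) (Ioo (u n) (v n)) :=
  mapsTo_affineRescale (H.lt m) (H.lt n)

lemma dense_preimage_coe : Dense (((↑) : unitInterval → ℝ) ⁻¹' ⋃ m, Ioo (u m) (v m)) := by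
  intro x
  rw [closure_subtype, Subtype.image_preimage_coe, inter_eq_right.2 (iUnion_subset H.subset)]
  exact H.dense x.2

lemma bddAbove_pieceImagesBelow (σ : Equiv.Perm ι) (x : ℝ) :
    BddAbove (insert 0 (pieceImagesBelow u v σ x)) := by
  refine ⟨1, ?_⟩
  rintro y (rfl | ⟨m, t, ht, -, rfl⟩)
  · exact zero_le_one
  · exact ((H.mapsTo_piece m (σ m) ht).2.trans_le (H.le_one _)).le

lemma le_pieceSup {σ : Equiv.Perm ι} {m : ι} {t x : ℝ} (ht : t ∈ Ioo (u m) (v m)) (hx : t ≤ x) :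
    affineRescale (u m) (v m) (u (σ m)) (v (σ m)) t ≤ pieceSup u v σ x :=
  le_csSup (H.bddAbove_pieceImagesBelow σ x) (Or.inr ⟨m, t, ht, hx, rfl⟩)

lemma pieceSup_nonneg (σ : Equiv.Perm ι) (x : ℝ) : 0 ≤ pieceSup u v σ x :=
  le_csSup (H.bddAbove_pieceImagesBelow σ x) (mem_insert _ _)

lemma pieceSup_mono (σ : Equiv.Perm ι) : Monotone (pieceSup u v σ) := fun _ _ hxy =>
  pieceSup_le (H.pieceSup_nonneg σ _) fun _ _ ht hx => H.le_pieceSup ht (hx.trans hxy)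

lemma pieceSup_mem_Icc (σ : Equiv.Perm ι) (x : ℝ) : pieceSup u v σ x ∈ Icc 0 1 :=
  ⟨H.pieceSup_nonneg σ x, pieceSup_le zero_le_one fun m _ ht _ =>
    ((H.mapsTo_piece m (σ m) ht).2.trans_le (H.le_one _)).le⟩

variable {σ : Equiv.Perm ι} (hσ : PreservesIntervalOrder u v σ)
include hσ

lemma pieceSup_of_mem {m : ι} {x : ℝ} (hx : x ∈ Ioo (u m) (v m)) :
    pieceSup u v σ x = affineRescale (u m) (v m) (u (σ m)) (v (σ m)) x := by
  refine le_antisymm (pieceSup_le ?_ fun m' t ht htx => ?_) (H.le_pieceSup hx le_rfl)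
  · exact (H.nonneg _).trans (H.mapsTo_piece m (σ m) hx).1.le
  obtain rfl | hne := eq_or_ne m' m
  · exact (affineRescale_strictMono (H.lt m') (H.lt (σ m'))).monotone htx
  rcases H.le_or_le hne with hle | hle
  · calc affineRescale (u m') (v m') (u (σ m')) (v (σ m')) t
        ≤ v (σ m') := (H.mapsTo_piece m' (σ m') ht).2.le
      _ ≤ u (σ m) := (hσ m' m).2 hle
      _ ≤ _ := (H.mapsTo_piece m (σ m) hx).1.le
  · exact absurd (hle.trans_lt (ht.1.trans_le htx)) hx.2.not_gt

lemma pieceSup_pieceSup_symm {y : ℝ} (hy : y ∈ Icc 0 1) :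
    pieceSup u v σ (pieceSup u v σ.symm y) = y := by
  refine ((H.pieceSup_mono σ).comp (H.pieceSup_mono σ.symm)).eqOn_id_Icc
    (fun y _ => H.pieceSup_mem_Icc σ _) H.dense (fun y hy => ?_) hy
  obtain ⟨n, hn⟩ := mem_iUnion.1 hy
  have hsymm := H.pieceSup_of_mem hσ.symm hn
  rw [Function.comp_apply, hsymm, H.pieceSup_of_mem hσ (H.mapsTo_piece _ _ hn)]
  simp only [Equiv.apply_symm_apply]
  rw [affineRescale_comp (H.lt n).ne (H.lt _).ne, affineRescale_self (H.lt n).ne, id]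

noncomputable def perm : Equiv.Perm unitInterval where
  toFun x := ⟨pieceSup u v σ x, H.pieceSup_mem_Icc σ x⟩
  invFun y := ⟨pieceSup u v σ.symm y, H.pieceSup_mem_Icc σ.symm y⟩
  left_inv x := Subtype.ext (by simpa using H.pieceSup_pieceSup_symm hσ.symm x.2)
  right_inv y := Subtype.ext (H.pieceSup_pieceSup_symm hσ y.2)

lemma perm_apply_of_mem {m : ι} {x : unitInterval} (hx : (x : ℝ) ∈ Ioo (u m) (v m)) :
    (H.perm hσ x : ℝ) = affineRescale (u m) (v m) (u (σ m)) (v (σ m)) x :=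
  H.pieceSup_of_mem hσ hx

lemma strictMono_perm : StrictMono (H.perm hσ) :=
  Monotone.strictMono_of_injective (fun _ _ h => H.pieceSup_mono σ h) (H.perm hσ).injective

lemma continuous_perm : Continuous (H.perm hσ) :=
  (StrictMono.orderIsoOfSurjective _ (H.strictMono_perm hσ) (H.perm hσ).surjective).continuous

end DenseIntervalFamily

namespace DenseIntervalFamily

variable (H : DenseIntervalFamily u v)
include H

lemma perm_ext {T T' : Equiv.Perm unitInterval} (hT : Continuous fun x => (T x : ℝ))
    (hT' : Continuous fun x => (T' x : ℝ))
    (h : ∀ m, ∀ x : unitInterval, (x : ℝ) ∈ Ioo (u m) (v m) → (T x : ℝ) = T' x) : T = T' := by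
  have := hT.ext_on H.dense_preimage_coe hT' fun x hx => by
    obtain ⟨m, hm⟩ := mem_iUnion.1 hx
    exact h m x hm
  exact Equiv.ext fun x => Subtype.ext (congrFun this x)

lemma perm_eq_one {σ : Equiv.Perm ι} (hσ : PreservesIntervalOrder u v σ) (h : σ = 1) :
    H.perm hσ = 1 := by
  subst h
  refine H.perm_ext (continuous_subtype_val.comp (H.continuous_perm hσ)) continuous_subtype_val
    fun m x hx => ?_
  rw [H.perm_apply_of_mem hσ hx]
  exact affineRescale_self (H.lt m).ne _

lemma perm_eq_mul {π σ τ : Equiv.Perm ι} (hπ : PreservesIntervalOrder u v π)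
    (hσ : PreservesIntervalOrder u v σ) (hτ : PreservesIntervalOrder u v τ) (h : π = σ * τ) :
    H.perm hπ = H.perm hσ * H.perm hτ := by
  subst h
  refine H.perm_ext (continuous_subtype_val.comp (H.continuous_perm hπ))
    (continuous_subtype_val.comp ((H.continuous_perm hσ).comp (H.continuous_perm hτ)))
    fun m x hx => ?_
  have hτx := H.perm_apply_of_mem hτ hx
  rw [Equiv.Perm.mul_apply, H.perm_apply_of_mem hπ hx,
    H.perm_apply_of_mem hσ (hτx ▸ H.mapsTo_piece m (τ m) hx), hτx,
    affineRescale_comp (H.lt m).ne (H.lt _).ne]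
  rfl

lemma eq_one_of_perm_eq_one {σ : Equiv.Perm ι} (hσ : PreservesIntervalOrder u v σ)
    (h : H.perm hσ = 1) : σ = 1 := by
  ext m : 1
  have hmid : (u m + v m) / 2 ∈ Ioo (u m) (v m) := ⟨by linarith [H.lt m], by linarith [H.lt m]⟩
  have hx := H.perm_apply_of_mem hσ (x := ⟨_, H.subset m hmid⟩) hmid
  rw [h] at hx
  have hσm := hx ▸ H.mapsTo_piece m (σ m) hmid
  by_contra hne
  exact disjoint_left.1 (H.disjoint hne) hσm hmid

variable {G : Type*} [Group G] {ρ : G →* Equiv.Perm ι} (hρ : ∀ g, PreservesIntervalOrder u v (ρ g))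

noncomputable def permHom : G →* Equiv.Perm unitInterval where
  toFun g := H.perm (hρ g)
  map_one' := H.perm_eq_one _ (map_one ρ)
  map_mul' g g' := H.perm_eq_mul _ _ _ (map_mul ρ g g')

@[simp]
lemma permHom_apply (g : G) : H.permHom hρ g = H.perm (hρ g) :=
  rfl

lemma permHom_injective (hinj : Function.Injective ρ) : Function.Injective (H.permHom hρ) :=
  (injective_iff_map_eq_one _).2 fun g hg => by
    rw [permHom_apply] at hg
    exact hinj ((H.eq_one_of_perm_eq_one (hρ g) hg).trans (map_one ρ).symm)

end DenseIntervalFamily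

end IntervalFamily

lemma DenseIntervalFamily.affineOnPieces_iff {u v : ℤ × ℤ × ℤ → ℝ} (H : DenseIntervalFamily u v)
    {σ : Equiv.Perm (ℤ × ℤ × ℤ)} (hσ : PreservesIntervalOrder u v σ) (T : Equiv.Perm unitInterval) :
    AffineOnPieces u v σ T ↔ T = H.perm hσ := by
  refine ⟨fun hT => H.perm_ext hT.2.1 (continuous_subtype_val.comp (H.continuous_perm hσ))
    fun m x hx => (hT.2.2 m x hx).trans (H.perm_apply_of_mem hσ hx).symm, ?_⟩
  rintro rfl
  exact ⟨(Subtype.strictMono_coe _).comp (H.strictMono_perm hσ),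
    continuous_subtype_val.comp (H.continuous_perm hσ), fun m x hx => H.perm_apply_of_mem hσ hx⟩

lemma eq_zpow_of_apply_add_one {G : Type*} [Group G] {f : ℤ → G} {g : G} (h0 : f 0 = 1)
    (hsucc : ∀ k, f (k + 1) = f k * g) (k : ℤ) : f k = g ^ k := by
  induction k using Int.induction_on with
  | zero => rw [h0, zpow_zero]
  | succ i ih => rw [hsucc, ih, zpow_add_one]
  | pred i ih => rw [zpow_sub_one, ← ih, eq_mul_inv_iff_mul_eq, ← hsucc, sub_add_cancel]

lemma Function.Injective.nonempty_mulEquiv_closure_image {G K : Type*} [Group G] [Group K]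
    {φ : G →* K} (hφ : Function.Injective φ) {S : Set G} (hS : Subgroup.closure S = ⊤) :
    Nonempty (Subgroup.closure (φ '' S) ≃* G) :=
  ⟨(MulEquiv.subgroupCongr (by rw [← MonoidHom.map_closure, hS])).trans
    ((Subgroup.equivMapOfInjective ⊤ φ hφ).symm.trans Subgroup.topEquiv)⟩

namespace N4

def entriesMatrix (p q r s t w : ℤ) : Matrix (Fin 4) (Fin 4) ℤ :=
  !![1, 0, 0, 0; p, 1, 0, 0; q, r, 1, 0; s, t, w, 1]

lemma entriesMatrix_mul (p q r s t w p' q' r' s' t' w' : ℤ) :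
    entriesMatrix p q r s t w * entriesMatrix p' q' r' s' t' w' =
      entriesMatrix (p + p') (q + q' + r * p') (r + r') (s + s' + t * p' + w * q')
        (t + t' + w * r') (w + w') := by
  ext i j
  fin_cases i <;> fin_cases j <;>
    simp [entriesMatrix, Matrix.mul_apply, Fin.sum_univ_four] <;> ring

lemma entriesMatrix_zero : entriesMatrix 0 0 0 0 0 0 = 1 := by
  ext i j
  fin_cases i <;> fin_cases j <;> rfl

def ofEntries (p q r s t w : ℤ) : N4 where
  val :=
    { val := entriesMatrix p q r s t w
      inv := entriesMatrix (-p) (r * p - q) (-r) (t * p + w * q - w * r * p - s) (w * r - t) (-w)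
      val_inv := by rw [entriesMatrix_mul, ← entriesMatrix_zero]; ring_nf
      inv_val := by rw [entriesMatrix_mul, ← entriesMatrix_zero]; ring_nf }
  property := by
    refine ⟨fun i => ?_, fun i j hij => ?_⟩
    · fin_cases i <;> rfl
    · fin_cases i <;> fin_cases j <;> first | rfl | exact absurd hij (by decide)

lemma ofEntries_mul (p q r s t w p' q' r' s' t' w' : ℤ) :
    ofEntries p q r s t w * ofEntries p' q' r' s' t' w' =
      ofEntries (p + p') (q + q' + r * p') (r + r') (s + s' + t * p' + w * q')
        (t + t' + w * r') (w + w') :=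
  Subtype.ext (Units.ext (entriesMatrix_mul ..))

lemma ofEntries_zero : ofEntries 0 0 0 0 0 0 = 1 :=
  Subtype.ext (Units.ext entriesMatrix_zero)

lemma exists_eq_ofEntries (g : N4) : ∃ p q r s t w, g = ofEntries p q r s t w := by
  obtain ⟨hdiag, hupper⟩ := g.2
  refine ⟨g.1.1 1 0, g.1.1 2 0, g.1.1 2 1, g.1.1 3 0, g.1.1 3 1, g.1.1 3 2,
    Subtype.ext (Units.ext ?_)⟩
  ext i j
  fin_cases i <;> fin_cases j <;> first | exact hdiag _ | exact hupper _ _ (by decide) | rfl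

def genE : N4 := ofEntries 0 0 0 0 0 1
def genD : N4 := ofEntries 1 0 0 0 0 0
def genF : N4 := ofEntries 0 0 1 0 0 0

lemma genD_zpow (k : ℤ) : genD ^ k = ofEntries k 0 0 0 0 0 :=
  (eq_zpow_of_apply_add_one (f := fun k => ofEntries k 0 0 0 0 0) ofEntries_zero
    (fun k => by simp [genD, ofEntries_mul]) k).symm

lemma genF_zpow (k : ℤ) : genF ^ k = ofEntries 0 0 k 0 0 0 :=
  (eq_zpow_of_apply_add_one (f := fun k => ofEntries 0 0 k 0 0 0) ofEntries_zero
    (fun k => by simp [genF, ofEntries_mul]) k).symm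

lemma genE_zpow (k : ℤ) : genE ^ k = ofEntries 0 0 0 0 0 k :=
  (eq_zpow_of_apply_add_one (f := fun k => ofEntries 0 0 0 0 0 k) ofEntries_zero
    (fun k => by simp [genE, ofEntries_mul]) k).symm

lemma closure_gen_eq_top : Subgroup.closure {genE, genD, genF} = ⊤ := by
  set K := Subgroup.closure {genE, genD, genF}
  have hp (k : ℤ) : ofEntries k 0 0 0 0 0 ∈ K :=
    genD_zpow k ▸ zpow_mem (Subgroup.subset_closure (by simp)) k
  have hr (k : ℤ) : ofEntries 0 0 k 0 0 0 ∈ K :=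
    genF_zpow k ▸ zpow_mem (Subgroup.subset_closure (by simp)) k
  have hw (k : ℤ) : ofEntries 0 0 0 0 0 k ∈ K :=
    genE_zpow k ▸ zpow_mem (Subgroup.subset_closure (by simp)) k
  -- the three remaining coordinates are reached by commutators
  have hq (k : ℤ) : ofEntries 0 k 0 0 0 0 ∈ K := by
    have : ofEntries 0 k 0 0 0 0 =
        ofEntries 0 0 1 0 0 0 * ofEntries k 0 0 0 0 0 * ofEntries 0 0 (-1) 0 0 0 *
          ofEntries (-k) 0 0 0 0 0 := by
      simp [ofEntries_mul]
    rw [this]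
    exact mul_mem (mul_mem (mul_mem (hr 1) (hp k)) (hr (-1))) (hp (-k))
  have ht (k : ℤ) : ofEntries 0 0 0 0 k 0 ∈ K := by
    have : ofEntries 0 0 0 0 k 0 =
        ofEntries 0 0 0 0 0 1 * ofEntries 0 0 k 0 0 0 * ofEntries 0 0 0 0 0 (-1) *
          ofEntries 0 0 (-k) 0 0 0 := by
      simp [ofEntries_mul]
    rw [this]
    exact mul_mem (mul_mem (mul_mem (hw 1) (hr k)) (hw (-1))) (hr (-k))
  have hs (k : ℤ) : ofEntries 0 0 0 k 0 0 ∈ K := by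
    have : ofEntries 0 0 0 k 0 0 =
        ofEntries 0 0 0 0 0 1 * ofEntries 0 k 0 0 0 0 * ofEntries 0 0 0 0 0 (-1) *
          ofEntries 0 (-k) 0 0 0 0 := by
      simp [ofEntries_mul]
    rw [this]
    exact mul_mem (mul_mem (mul_mem (hw 1) (hq k)) (hw (-1))) (hq (-k))
  refine eq_top_iff.2 fun g _ => ?_
  obtain ⟨p, q, r, s, t, w, rfl⟩ := exists_eq_ofEntries g
  have : ofEntries p q r s t w =
      ofEntries p 0 0 0 0 0 * ofEntries 0 0 r 0 0 0 * ofEntries 0 0 0 0 0 w *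
        ofEntries 0 q 0 0 0 0 * ofEntries 0 0 0 0 t 0 * ofEntries 0 0 0 (s - w * q) 0 0 := by
    simp [ofEntries_mul]
  rw [this]
  exact mul_mem (mul_mem (mul_mem (mul_mem (mul_mem (hp p) (hr r)) (hw w)) (hq q)) (ht t)) (hs _)

instance : SMul N4 (ℤ × ℤ × ℤ) where
  smul g m := (m.1 + g.1.1 3 2, m.2.1 + g.1.1 1 0,
    m.2.2 + (g.1.1 2 0 + g.1.1 2 1 * m.2.1) * (m.1 + g.1.1 3 2) - g.1.1 3 0 - g.1.1 3 1 * m.2.1)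

lemma ofEntries_smul (p q r s t w x y z : ℤ) :
    ofEntries p q r s t w • (x, y, z) = (x + w, y + p, z + (q + r * y) * (x + w) - s - t * y) :=
  rfl

instance : MulAction N4 (ℤ × ℤ × ℤ) where
  one_smul m := by
    obtain ⟨x, y, z⟩ := m
    rw [← ofEntries_zero, ofEntries_smul]
    simp
  mul_smul g h m := by
    obtain ⟨p, q, r, s, t, w, rfl⟩ := exists_eq_ofEntries g
    obtain ⟨p', q', r', s', t', w', rfl⟩ := exists_eq_ofEntries h
    obtain ⟨x, y, z⟩ := m
    simp only [ofEntries_mul, ofEntries_smul, Prod.mk.injEq]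
    refine ⟨by ring, by ring, by ring⟩

instance : FaithfulSMul N4 (ℤ × ℤ × ℤ) where
  eq_of_smul_eq_smul {g h} hgh := by
    obtain ⟨p, q, r, s, t, w, rfl⟩ := exists_eq_ofEntries g
    obtain ⟨p', q', r', s', t', w', rfl⟩ := exists_eq_ofEntries h
    have h00 := hgh (0, 0, 0)
    have h10 := hgh (1, 0, 0)
    have h01 := hgh (0, 1, 0)
    have h11 := hgh (1, 1, 0)
    simp only [ofEntries_smul, Prod.mk.injEq] at h00 h10 h01 h11
    obtain ⟨hw, hp, h00⟩ := h00
    obtain rfl : w = w' := by linarith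
    obtain rfl : p = p' := by linarith
    obtain rfl : q = q' := by linarith
    obtain rfl : r = r' := by linarith
    obtain rfl : s = s' := by linarith
    obtain rfl : t = t' := by linarith
    rfl

lemma lex3_smul (g : N4) {m m' : ℤ × ℤ × ℤ} (h : Lex3 m m') : Lex3 (g • m) (g • m') := by
  obtain ⟨p, q, r, s, t, w, rfl⟩ := exists_eq_ofEntries g
  obtain ⟨x, y, z⟩ := m
  obtain ⟨x', y', z'⟩ := m'
  simp only [Lex3, ofEntries_smul] at h ⊢
  rcases h with h | ⟨rfl, h | ⟨rfl, h⟩⟩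
  · exact Or.inl (by linarith)
  · exact Or.inr ⟨rfl, Or.inl (by linarith)⟩
  · exact Or.inr ⟨rfl, Or.inr ⟨rfl, by linarith⟩⟩

lemma lex3_smul_iff (g : N4) (m m' : ℤ × ℤ × ℤ) : Lex3 (g • m) (g • m') ↔ Lex3 m m' :=
  ⟨fun h => by simpa using lex3_smul g⁻¹ h, lex3_smul g⟩

lemma genE_smul : (genE • · : ℤ × ℤ × ℤ → ℤ × ℤ × ℤ) = fun m => (m.1 + 1, m.2.1, m.2.2) := by
  funext ⟨x, y, z⟩
  simp [genE, ofEntries_smul]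

lemma genD_smul : (genD • · : ℤ × ℤ × ℤ → ℤ × ℤ × ℤ) = fun m => (m.1, m.2.1 + 1, m.2.2) := by
  funext ⟨x, y, z⟩
  simp [genD, ofEntries_smul]

lemma genF_smul :
    (genF • · : ℤ × ℤ × ℤ → ℤ × ℤ × ℤ) = fun m => (m.1, m.2.1, m.2.2 + m.1 * m.2.1) := by
  funext ⟨x, y, z⟩
  simp [genF, ofEntries_smul, mul_comm]

end N4

/-- **The piecewise affine action.** Given a family of pairwise disjoint open subintervals
`I_{i,j,k} = (u(i,j,k), v(i,j,k))` of `[0,1]`, disposed respecting the lexicographic order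
of `ℤ³` and with dense union, there exist unique orientation-preserving homeomorphisms
`e, d, f` of `[0,1]` whose restriction to each `I_{i,j,k}` is affine onto `I_{i+1,j,k}`,
`I_{i,j+1,k}`, `I_{i,j,k+ij}` respectively; the subgroup of `Homeo₊([0,1])` they generate
is isomorphic to `N₄`. -/
theorem affine_action_of_N4_on_unit_interval
    (u v : ℤ × ℤ × ℤ → ℝ)
    (hlt : ∀ m, u m < v m)
    (hsub : ∀ m, Set.Ioo (u m) (v m) ⊆ Set.Icc (0 : ℝ) 1)
    (hdisj : ∀ m m', m ≠ m' → Disjoint (Set.Ioo (u m) (v m)) (Set.Ioo (u m') (v m')))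
    (hlex : ∀ m m', Lex3 m m' ↔ v m ≤ u m')
    (hdense : Set.Icc (0 : ℝ) 1 ⊆ closure (⋃ m, Set.Ioo (u m) (v m))) :
    (∃! T : Equiv.Perm unitInterval × Equiv.Perm unitInterval × Equiv.Perm unitInterval,
        AffineTriple u v T) ∧
      ∀ T : Equiv.Perm unitInterval × Equiv.Perm unitInterval × Equiv.Perm unitInterval,
        AffineTriple u v T →
          Nonempty ((Subgroup.closure {T.1, T.2.1, T.2.2} :
            Subgroup (Equiv.Perm unitInterval)) ≃* N4) := by
  have H : DenseIntervalFamily u v := ⟨hlt, hsub, hdisj, hdense⟩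
  have hρ (g : N4) : PreservesIntervalOrder u v (MulAction.toPermHom N4 (ℤ × ℤ × ℤ) g) :=
    fun m m' => by
      simp only [MulAction.toPermHom_apply, MulAction.toPerm_apply, ← hlex, N4.lex3_smul_iff]
  have hpieces (g : N4) (T : Equiv.Perm unitInterval) :
      AffineOnPieces u v (g • ·) T ↔ T = H.permHom hρ g :=
    H.affineOnPieces_iff (hρ g) T
  have htriple (T : Equiv.Perm unitInterval × Equiv.Perm unitInterval × Equiv.Perm unitInterval) :
      AffineTriple u v T ↔
        T = (H.permHom hρ N4.genE, H.permHom hρ N4.genD, H.permHom hρ N4.genF) := by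
    obtain ⟨e, d, f⟩ := T
    rw [AffineTriple, ← N4.genE_smul, ← N4.genD_smul, ← N4.genF_smul, hpieces, hpieces, hpieces]
    simp only [Prod.mk.injEq]
  refine ⟨⟨_, (htriple _).2 rfl, fun T hT => (htriple T).1 hT⟩, fun T hT => ?_⟩
  rw [(htriple T).1 hT]
  have hN4 := (H.permHom_injective hρ MulAction.toPerm_injective).nonempty_mulEquiv_closure_image
    N4.closure_gen_eq_top
  rwa [image_insert_eq, image_insert_eq, image_singleton] at hN4
end

section
/- There exists a family of orientation-preserving C^∞ diffeomorphisms φ_{I',I}^{J',J}: I → J, defined for all quadruples of bounded nondegenerate intervals (I', I, J', J) where I' is contiguous to I by the left and J' is contiguous to J by the left, with the following properties. (1) Equivariance: φ_{J',J}^{K',K} ∘ φ_{I',I}^{J',J} = φ_{I',I}^{K',K} for all admissible quadruples. (2) Derivatives at the endpoints: Dφ_{I',I}^{J',J}(x₋) = |J'|/|I'| and Dφ_{I',I}^{J',J}(x₊) = |J|/|I|, where x₋ and x₊ are the left and right endpoints of I. (3) Regularity: there is a universal constant M such that, whenever max{|I'|, |I|, |J'|, |J|} ≤ 2 min{|I'|,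 |I|, |J'|, |J|}, one has |D log(Dφ_{I',I}^{J',J})(x)| ≤ (M/|I|)·| (|I|/|J|)·(|J'|/|I'|) − 1 | for all x ∈ I. -/
/-- The Pixton–Tsuboi properties for a family of maps `Φ a b c a' b' c' : ℝ → ℝ`,
thought of as diffeomorphisms `φ_{I',I}^{J',J} : I → J` where `I' = (a,b)`, `I = (b,c)`
(so `I'` is contiguous to `I` by the left) and `J' = (a',b')`, `J = (b',c')`:
each map is an orientation-preserving `C^∞` diffeomorphism from `I` onto `J`;
the family is equivariant under composition; the derivative at the left (resp. right)
endpoint of `I` is `|J'|/|I'|` (resp. `|J|/|I|`); and there is a universal constant `M`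
bounding `|D log D φ|` by `(M/|I|)·|(|I|/|J|)(|J'|/|I'|) − 1|` whenever the four lengths
are within a factor `2` of each other. -/
def IsPTFamily (Φ : ℝ → ℝ → ℝ → ℝ → ℝ → ℝ → ℝ → ℝ) : Prop :=
  (∀ a b c a' b' c' : ℝ, a < b → b < c → a' < b' → b' < c' →
      Set.BijOn (Φ a b c a' b' c') (Set.Icc b c) (Set.Icc b' c') ∧
      StrictMonoOn (Φ a b c a' b' c') (Set.Icc b c) ∧
      ContDiffOn ℝ (⊤ : ℕ∞) (Φ a b c a' b' c') (Set.Icc b c) ∧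
      (∀ x ∈ Set.Icc b c, 0 < derivWithin (Φ a b c a' b' c') (Set.Icc b c) x) ∧
      derivWithin (Φ a b c a' b' c') (Set.Icc b c) b = (b' - a') / (b - a) ∧
      derivWithin (Φ a b c a' b' c') (Set.Icc b c) c = (c' - b') / (c - b)) ∧
  (∀ a b c a' b' c' a'' b'' c'' : ℝ,
      a < b → b < c → a' < b' → b' < c' → a'' < b'' → b'' < c'' →
      ∀ x ∈ Set.Icc b c,
        Φ a' b' c' a'' b'' c'' (Φ a b c a' b' c' x) = Φ a b c a'' b'' c'' x) ∧
  (∃ M > 0, ∀ a b c a' b' c' : ℝ, a < b → b < c → a' < b' → b' < c' →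
      max (max (b - a) (c - b)) (max (b' - a') (c' - b')) ≤
        2 * min (min (b - a) (c - b)) (min (b' - a') (c' - b')) →
      ∀ x ∈ Set.Icc b c,
        |derivWithin (fun y => Real.log (derivWithin (Φ a b c a' b' c') (Set.Icc b c) y))
            (Set.Icc b c) x| ≤
          M / (c - b) * |(c - b) / (c' - b') * ((b' - a') / (b - a)) - 1|)

open Real Set

namespace PTaux

noncomputable def sd (α t : ℝ) : ℝ := 1 + (α^2 - 1) * t^2
noncomputable def P (α t : ℝ) : ℝ := α * t / Real.sqrt (sd α t)
noncomputable def Pd (α t : ℝ) : ℝ := α / Real.sqrt (sd α t) ^ 3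
noncomputable def lP (α t : ℝ) : ℝ := -3 * (α^2 - 1) * t / sd α t
noncomputable def B (ρ t : ℝ) : ℝ := ρ * t / (1 + (ρ - 1) * t)
noncomputable def Bd (ρ t : ℝ) : ℝ := ρ / (1 + (ρ - 1) * t)^2
noncomputable def lB (ρ t : ℝ) : ℝ := -2 * (ρ - 1) / (1 + (ρ - 1) * t)

lemma sd_pos {α t : ℝ} (hα : 0 < α) (ht0 : 0 ≤ t) (ht1 : t ≤ 1) : 0 < sd α t := by
  have h : sd α t = (1 - t^2) + α^2 * t^2 := by unfold sd; ring
  rcases eq_or_lt_of_le ht1 with h1 | h1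
  · subst h1; rw [h]; nlinarith [mul_pos hα hα]
  · nlinarith

lemma sqrt_sd_pos {α t : ℝ} (hα : 0 < α) (ht0 : 0 ≤ t) (ht1 : t ≤ 1) :
    0 < Real.sqrt (sd α t) := Real.sqrt_pos.2 (sd_pos hα ht0 ht1)

lemma sq_sqrt_sd {α t : ℝ} (hα : 0 < α) (ht0 : 0 ≤ t) (ht1 : t ≤ 1) :
    Real.sqrt (sd α t) ^ 2 = sd α t := Real.sq_sqrt (sd_pos hα ht0 ht1).le

lemma P_nonneg {α t : ℝ} (hα : 0 < α) (ht0 : 0 ≤ t) : 0 ≤ P α t := by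
  unfold P
  exact div_nonneg (by positivity) (Real.sqrt_nonneg _)

lemma P_le_one {α t : ℝ} (hα : 0 < α) (ht0 : 0 ≤ t) (ht1 : t ≤ 1) : P α t ≤ 1 := by
  unfold P
  rw [div_le_one (sqrt_sd_pos hα ht0 ht1)]
  rw [show α * t = Real.sqrt ((α*t)^2) by rw [Real.sqrt_sq (by positivity)]]
  apply Real.sqrt_le_sqrt
  unfold sd; nlinarith

lemma P_zero (α : ℝ) : P α 0 = 0 := by simp [P]

lemma P_one {α : ℝ} (hα : 0 < α) : P α 1 = 1 := by
  unfold P sd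
  rw [show 1 + (α^2 - 1) * 1^2 = α^2 by ring, Real.sqrt_sq hα.le]
  field_simp

lemma Bden_pos {ρ t : ℝ} (hρ : 0 < ρ) (ht0 : 0 ≤ t) (ht1 : t ≤ 1) :
    0 < 1 + (ρ - 1) * t := by
  rcases eq_or_lt_of_le ht0 with h | h
  · rw [← h]; norm_num
  · nlinarith [mul_pos hρ h]

lemma B_nonneg {ρ t : ℝ} (hρ : 0 < ρ) (ht0 : 0 ≤ t) (ht1 : t ≤ 1) : 0 ≤ B ρ t := by
  unfold B
  exact div_nonneg (by positivity) (Bden_pos hρ ht0 ht1).le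

lemma B_le_one {ρ t : ℝ} (hρ : 0 < ρ) (ht0 : 0 ≤ t) (ht1 : t ≤ 1) : B ρ t ≤ 1 := by
  unfold B
  rw [div_le_one (Bden_pos hρ ht0 ht1)]
  nlinarith

lemma B_zero (ρ : ℝ) : B ρ 0 = 0 := by simp [B]

lemma B_one {ρ : ℝ} (hρ : 0 < ρ) : B ρ 1 = 1 := by
  unfold B; rw [show 1 + (ρ - 1) * 1 = ρ by ring]; field_simp

/-- Key algebraic identity: `sd α (P β t) = sd (α*β) t / sd β t`. -/
lemma sd_P {α β t : ℝ} (hβ : 0 < β) (ht0 : 0 ≤ t) (ht1 : t ≤ 1) :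
    sd α (P β t) = sd (α * β) t / sd β t := by
  have hd := sd_pos hβ ht0 ht1
  have hs := Real.sq_sqrt hd.le
  conv_lhs => rw [sd]
  rw [P, div_pow, mul_pow, hs]
  unfold sd at hd ⊢
  rw [eq_div_iff hd.ne', add_mul, mul_assoc, div_mul_cancel₀ _ hd.ne']
  ring

/-- The group law for `P`. -/
lemma P_P {α β t : ℝ} (hα : 0 < α) (hβ : 0 < β) (ht0 : 0 ≤ t) (ht1 : t ≤ 1) :
    P α (P β t) = P (α * β) t := by
  have hdβ := sd_pos hβ ht0 ht1
  have hdαβ := sd_pos (mul_pos hα hβ) ht0 ht1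
  have hsβ := sqrt_sd_pos hβ ht0 ht1
  have hsαβ := sqrt_sd_pos (mul_pos hα hβ) ht0 ht1
  have h1 : Real.sqrt (sd α (P β t)) = Real.sqrt (sd (α*β) t) / Real.sqrt (sd β t) := by
    rw [sd_P hβ ht0 ht1, Real.sqrt_div hdαβ.le]
  show α * P β t / Real.sqrt (sd α (P β t)) = _
  rw [h1, P, P]
  field_simp

lemma P_one_param (t : ℝ) : P 1 t = t := by
  unfold P sd; norm_num

/-- The group law for `B`. -/
lemma B_B {ρ σ t : ℝ} (hρ : 0 < ρ) (hσ : 0 < σ) (ht0 : 0 ≤ t) (ht1 : t ≤ 1) :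
    B ρ (B σ t) = B (ρ * σ) t := by
  have h1 := Bden_pos hσ ht0 ht1
  have h2 := Bden_pos (mul_pos hρ hσ) ht0 ht1
  unfold B
  rw [div_eq_div_iff]
  · have e : σ*t/(1+(σ-1)*t) * (1+(σ-1)*t) = σ*t := div_mul_cancel₀ _ h1.ne'
    linear_combination ρ * e
  · have h3 := Bden_pos hρ (B_nonneg hσ ht0 ht1) (B_le_one hσ ht0 ht1)
    unfold B at h3
    exact ne_of_gt h3
  · exact h2.ne'


/-! ### Derivatives -/

lemma hasDerivAt_sd (α t : ℝ) : HasDerivAt (fun t => sd α t) ((α^2 - 1) * (2 * t)) t := by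
  unfold sd
  simpa using ((hasDerivAt_pow 2 t).const_mul (α^2 - 1)).const_add 1

lemma hasDerivAt_sqrt_sd {α t : ℝ} (hd : 0 < sd α t) :
    HasDerivAt (fun t => Real.sqrt (sd α t)) ((α^2 - 1) * t / Real.sqrt (sd α t)) t := by
  have h := (Real.hasDerivAt_sqrt hd.ne').comp t (hasDerivAt_sd α t)
  refine h.congr_deriv (Eq.symm ?_)
  field_simp

lemma hasDerivAt_P {α t : ℝ} (hd : 0 < sd α t) :
    HasDerivAt (fun t => P α t) (Pd α t) t := by
  have hs : 0 < Real.sqrt (sd α t) := Real.sqrt_pos.2 hd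
  have h := ((hasDerivAt_id t).const_mul α).div (hasDerivAt_sqrt_sd hd) hs.ne'
  refine h.congr_deriv (Eq.symm ?_)
  unfold Pd
  simp only [id]
  set S := Real.sqrt (sd α t) with hS
  have hsq : S ^ 2 = 1 + (α^2 - 1) * t^2 := by rw [hS]; exact Real.sq_sqrt hd.le
  rw [div_eq_div_iff (by positivity) (by positivity)]
  field_simp
  linear_combination (-α) * hsq

lemma hasDerivAt_Pd {α t : ℝ} (hd : 0 < sd α t) :
    HasDerivAt (fun t => Pd α t) (Pd α t * lP α t) t := by
  have hs : 0 < Real.sqrt (sd α t) := Real.sqrt_pos.2 hd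
  have hsq : Real.sqrt (sd α t) ^ 2 = sd α t := Real.sq_sqrt hd.le
  have h := (hasDerivAt_const t α).div ((hasDerivAt_sqrt_sd hd).pow 3) (pow_ne_zero 3 hs.ne')
  refine h.congr_deriv (Eq.symm ?_)
  simp only [Pi.pow_apply]
  unfold Pd lP
  set S := Real.sqrt (sd α t) with hS
  have hsq : S ^ 2 = sd α t := by rw [hS]; exact Real.sq_sqrt hd.le
  rw [← hsq]
  rw [div_mul_div_comm, div_eq_div_iff (by positivity) (by positivity)]
  field_simp
  ring

lemma hasDerivAt_B {ρ t : ℝ} (hden : 0 < 1 + (ρ - 1) * t) :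
    HasDerivAt (fun t => B ρ t) (Bd ρ t) t := by
  have h := ((hasDerivAt_id t).const_mul ρ).div
    (((hasDerivAt_id t).const_mul (ρ - 1)).const_add 1) hden.ne'
  refine h.congr_deriv (Eq.symm ?_)
  simp only [id]
  unfold Bd
  field_simp
  ring

lemma hasDerivAt_Bd {ρ t : ℝ} (hden : 0 < 1 + (ρ - 1) * t) :
    HasDerivAt (fun t => Bd ρ t) (Bd ρ t * lB ρ t) t := by
  have h := (hasDerivAt_const t ρ).div
    ((((hasDerivAt_id t).const_mul (ρ - 1)).const_add 1).pow 2) (pow_ne_zero 2 hden.ne')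
  refine h.congr_deriv (Eq.symm ?_)
  simp only [Pi.pow_apply, id]
  unfold Bd lB
  field_simp
  ring


lemma sd_one (t : ℝ) : sd 1 t = 1 := by unfold sd; ring

lemma B_one_param (t : ℝ) : B 1 t = t := by unfold B; norm_num

lemma lB_one (t : ℝ) : lB 1 t = 0 := by unfold lB; norm_num

lemma Bd_one_param (t : ℝ) : Bd 1 t = 1 := by unfold Bd; norm_num

lemma Pd_zero (α : ℝ) : Pd α 0 = α := by
  unfold Pd sd; norm_num

lemma Pd_one {α : ℝ} (hα : 0 < α) : Pd α 1 = 1 / α^2 := by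
  unfold Pd sd
  rw [show 1 + (α^2 - 1) * 1^2 = α^2 by ring, Real.sqrt_sq hα.le]
  field_simp

lemma Bd_zero (ρ : ℝ) : Bd ρ 0 = ρ := by unfold Bd; norm_num

lemma Bd_one {ρ : ℝ} (hρ : 0 < ρ) : Bd ρ 1 = 1/ρ := by
  unfold Bd
  rw [show 1 + (ρ - 1) * 1 = ρ by ring]
  field_simp

lemma Pd_pos {α t : ℝ} (hα : 0 < α) (ht0 : 0 ≤ t) (ht1 : t ≤ 1) : 0 < Pd α t := by
  unfold Pd
  have := sqrt_sd_pos hα ht0 ht1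
  positivity

lemma Bd_pos {ρ t : ℝ} (hρ : 0 < ρ) (ht0 : 0 ≤ t) (ht1 : t ≤ 1) : 0 < Bd ρ t := by
  unfold Bd
  have := Bden_pos hρ ht0 ht1
  positivity

/-- Cancellation identity: `∂ log (P r ∘ P (1/r))' = 0`. -/
lemma cancel {r t : ℝ} (hr : 0 < r) (ht0 : 0 ≤ t) (ht1 : t ≤ 1) :
    lP r (P (1/r) t) * Pd (1/r) t = - lP (1/r) t := by
  have hr' : 0 < 1/r := by positivity
  have hD := sd_pos hr' ht0 ht1
  have hsP : sd r (P (1/r) t) = 1 / sd (1/r) t := by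
    rw [sd_P hr' ht0 ht1, show r * (1/r) = 1 by field_simp, sd_one]
  unfold lP
  rw [hsP]
  unfold Pd P
  set D := sd (1/r) t with hD'
  have hsq : Real.sqrt D ^ 2 = D := Real.sq_sqrt hD.le
  have hs : 0 < Real.sqrt D := Real.sqrt_pos.2 hD
  have hDne : D ≠ 0 := hD.ne'
  have hDpoly : D = 1 + ((1/r)^2 - 1) * t^2 := rfl
  field_simp
  linear_combination (t*(r^2-1)*(Real.sqrt D^2 + D)) * hsq

/-! ### The family `gg` -/

noncomputable def gg (r s t : ℝ) : ℝ := P s (B ((r/s)^2) (P (1/r) t))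
noncomputable def gd (r s t : ℝ) : ℝ :=
  Pd (1/r) t * (Bd ((r/s)^2) (P (1/r) t) * Pd s (B ((r/s)^2) (P (1/r) t)))
noncomputable def kk (r s t : ℝ) : ℝ :=
  lP (1/r) t + lB ((r/s)^2) (P (1/r) t) * Pd (1/r) t
    + lP s (B ((r/s)^2) (P (1/r) t)) * (Bd ((r/s)^2) (P (1/r) t) * Pd (1/r) t)

section G

variable {r s t : ℝ}

lemma gg_mem (hr : 0 < r) (hs : 0 < s) (ht0 : 0 ≤ t) (ht1 : t ≤ 1) :
    0 ≤ gg r s t ∧ gg r s t ≤ 1 := by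
  have hr' : 0 < 1/r := by positivity
  have hρ : 0 < (r/s)^2 := by positivity
  have hy0 := P_nonneg hr' ht0
  have hy1 := P_le_one hr' ht0 ht1
  have hz0 := B_nonneg hρ hy0 hy1
  have hz1 := B_le_one hρ hy0 hy1
  exact ⟨P_nonneg hs hz0, P_le_one hs hz0 hz1⟩

lemma gg_zero (hr : 0 < r) (hs : 0 < s) : gg r s 0 = 0 := by
  unfold gg; rw [P_zero, B_zero, P_zero]

lemma gg_one (hr : 0 < r) (hs : 0 < s) : gg r s 1 = 1 := by
  have hr' : 0 < 1/r := by positivity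
  have hρ : 0 < (r/s)^2 := by positivity
  unfold gg; rw [P_one hr', B_one hρ, P_one hs]

lemma gd_pos (hr : 0 < r) (hs : 0 < s) (ht0 : 0 ≤ t) (ht1 : t ≤ 1) : 0 < gd r s t := by
  have hr' : 0 < 1/r := by positivity
  have hρ : 0 < (r/s)^2 := by positivity
  have hy0 := P_nonneg hr' ht0
  have hy1 := P_le_one hr' ht0 ht1
  have hz0 := B_nonneg hρ hy0 hy1
  have hz1 := B_le_one hρ hy0 hy1
  exact mul_pos (Pd_pos hr' ht0 ht1) (mul_pos (Bd_pos hρ hy0 hy1) (Pd_pos hs hz0 hz1))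

lemma gd_zero (hr : 0 < r) (hs : 0 < s) : gd r s 0 = r / s := by
  unfold gd
  rw [P_zero, B_zero, Pd_zero, Bd_zero, Pd_zero]
  field_simp

lemma gd_one (hr : 0 < r) (hs : 0 < s) : gd r s 1 = 1 := by
  have hr' : 0 < 1/r := by positivity
  have hρ : 0 < (r/s)^2 := by positivity
  unfold gd
  rw [P_one hr', B_one hρ, Pd_one hr', Bd_one hρ, Pd_one hs]
  field_simp

lemma hasDerivAt_gg (hr : 0 < r) (hs : 0 < s) (ht0 : 0 ≤ t) (ht1 : t ≤ 1) :
    HasDerivAt (fun t => gg r s t) (gd r s t) t := by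
  have hr' : 0 < 1/r := by positivity
  have hρ : 0 < (r/s)^2 := by positivity
  have hy0 := P_nonneg hr' ht0
  have hy1 := P_le_one hr' ht0 ht1
  have hz0 := B_nonneg hρ hy0 hy1
  have hz1 := B_le_one hρ hy0 hy1
  have h1 := hasDerivAt_P (sd_pos hr' ht0 ht1)
  have h2 := hasDerivAt_B (Bden_pos hρ hy0 hy1)
  have h3 := hasDerivAt_P (sd_pos hs hz0 hz1)
  have h21 := h2.comp t h1
  have h321 := h3.comp t h21
  simp only [Function.comp_def] at h321
  refine h321.congr_deriv (Eq.symm ?_)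
  unfold gd
  ring

lemma hasDerivAt_gd (hr : 0 < r) (hs : 0 < s) (ht0 : 0 ≤ t) (ht1 : t ≤ 1) :
    HasDerivAt (fun t => gd r s t) (gd r s t * kk r s t) t := by
  have hr' : 0 < 1/r := by positivity
  have hρ : 0 < (r/s)^2 := by positivity
  have hy0 := P_nonneg hr' ht0
  have hy1 := P_le_one hr' ht0 ht1
  have hz0 := B_nonneg hρ hy0 hy1
  have hz1 := B_le_one hρ hy0 hy1
  have h1 := hasDerivAt_P (sd_pos hr' ht0 ht1)
  have h2 := hasDerivAt_B (Bden_pos hρ hy0 hy1)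
  have h21 := h2.comp t h1
  simp only [Function.comp_def] at h21
  have hP1 := hasDerivAt_Pd (sd_pos hr' ht0 ht1)
  have hB2 := (hasDerivAt_Bd (Bden_pos hρ hy0 hy1)).comp t h1
  simp only [Function.comp_def] at hB2
  have hP3 := (hasDerivAt_Pd (sd_pos hs hz0 hz1)).comp t h21
  simp only [Function.comp_def] at hP3
  have h := hP1.mul (hB2.mul hP3)
  refine h.congr_deriv (Eq.symm ?_)
  simp only [Pi.mul_apply]
  unfold gd kk
  ring

/-- Equivariance / group law for `gg`. -/
lemma gg_gg {w : ℝ} (hr : 0 < r) (hs : 0 < s) (hw : 0 < w) (ht0 : 0 ≤ t) (ht1 : t ≤ 1) :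
    gg s w (gg r s t) = gg r w t := by
  have hr' : 0 < 1/r := by positivity
  have hs' : 0 < 1/s := by positivity
  have hρ1 : 0 < (r/s)^2 := by positivity
  have hρ2 : 0 < (s/w)^2 := by positivity
  have hy0 := P_nonneg hr' ht0
  have hy1 := P_le_one hr' ht0 ht1
  have hz0 := B_nonneg hρ1 hy0 hy1
  have hz1 := B_le_one hρ1 hy0 hy1
  unfold gg
  rw [P_P hs' hs hz0 hz1, show (1/s) * s = 1 by field_simp, P_one_param,
    B_B hρ2 hρ1 hy0 hy1, show (s/w)^2 * (r/s)^2 = (r/w)^2 by rw [div_pow, div_pow, div_pow]; field_simp]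

/-- Vanishing of the log-derivative on the diagonal. -/
lemma kk_diag (hr : 0 < r) (ht0 : 0 ≤ t) (ht1 : t ≤ 1) : kk r r t = 0 := by
  unfold kk
  rw [show (r/r)^2 = 1 by field_simp, lB_one, B_one_param, Bd_one_param]
  rw [show lP r (P (1 / r) t) * (1 * Pd (1 / r) t) = lP r (P (1 / r) t) * Pd (1 / r) t by ring,
    cancel hr ht0 ht1]
  ring

end G


/-! ### Quantitative bounds -/

section Bounds

variable {α r s ρ t y z : ℝ}

lemma sd_bounds (h1 : 1/2 ≤ α) (h2 : α ≤ 2) (ht0 : 0 ≤ t) (ht1 : t ≤ 1) :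
    1/4 ≤ sd α t ∧ sd α t ≤ 4 := by
  have ht2 : t^2 ≤ 1 := by nlinarith
  have hα2 : 1/4 ≤ α^2 := by nlinarith
  have hα2' : α^2 ≤ 4 := by nlinarith
  constructor
  · have : t^2/4 ≤ α^2 * t^2 := by nlinarith [sq_nonneg t]
    unfold sd; nlinarith
  · have : α^2 * t^2 ≤ 4 * t^2 := by nlinarith [sq_nonneg t]
    unfold sd; nlinarith

lemma sqrt_sd_bounds (h1 : 1/2 ≤ α) (h2 : α ≤ 2) (ht0 : 0 ≤ t) (ht1 : t ≤ 1) :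
    1/2 ≤ Real.sqrt (sd α t) ∧ Real.sqrt (sd α t) ≤ 2 := by
  obtain ⟨ha, hb⟩ := sd_bounds h1 h2 ht0 ht1
  constructor
  · rw [show (1:ℝ)/2 = Real.sqrt (1/4) by
      rw [show (1:ℝ)/4 = (1/2)^2 by norm_num, Real.sqrt_sq (by norm_num)]]
    exact Real.sqrt_le_sqrt ha
  · rw [show (2:ℝ) = Real.sqrt 4 by
      rw [show (4:ℝ) = 2^2 by norm_num, Real.sqrt_sq (by norm_num)]]
    exact Real.sqrt_le_sqrt hb

lemma Pd_le_16 (h1 : 1/2 ≤ α) (h2 : α ≤ 2) (ht0 : 0 ≤ t) (ht1 : t ≤ 1) :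
    Pd α t ≤ 16 := by
  obtain ⟨ha, hb⟩ := sqrt_sd_bounds h1 h2 ht0 ht1
  unfold Pd
  rw [div_le_iff₀ (by positivity)]
  have h3 : (1/2:ℝ)^3 ≤ Real.sqrt (sd α t)^3 := pow_le_pow_left₀ (by norm_num) ha 3
  nlinarith

lemma abs_lP_le (h1 : 1/2 ≤ α) (h2 : α ≤ 2) (ht0 : 0 ≤ t) (ht1 : t ≤ 1) :
    |lP α t| ≤ 36 := by
  obtain ⟨ha, hb⟩ := sd_bounds h1 h2 ht0 ht1
  unfold lP
  rw [abs_div, abs_of_pos (by linarith : (0:ℝ) < sd α t)]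
  rw [div_le_iff₀ (by linarith)]
  have h3 : |(-3) * (α^2 - 1) * t| ≤ 9 := by
    rw [abs_mul, abs_mul]
    have : |α^2 - 1| ≤ 3 := by rw [abs_le]; constructor <;> nlinarith
    have h4 : |t| ≤ 1 := by rw [abs_le]; constructor <;> linarith
    norm_num
    nlinarith [abs_nonneg (α^2-1), abs_nonneg t]
  nlinarith [abs_nonneg (-3 * (α^2-1) * t)]

lemma abs_lP_diff_param (hr1 : 1/2 ≤ r) (hr2 : r ≤ 2) (hs1 : 1/2 ≤ s) (hs2 : s ≤ 2)
    (hy0 : 0 ≤ y) (hy1 : y ≤ 1) :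
    |lP s y - lP r y| ≤ 192 * |s - r| := by
  obtain ⟨hds, _⟩ := sd_bounds hs1 hs2 hy0 hy1
  obtain ⟨hdr, _⟩ := sd_bounds hr1 hr2 hy0 hy1
  have hne1 : sd s y ≠ 0 := by nlinarith
  have hne2 : sd r y ≠ 0 := by nlinarith
  have hid : lP s y - lP r y = -3 * y * (s^2 - r^2) / (sd s y * sd r y) := by
    unfold lP
    field_simp
    unfold sd
    ring
  rw [hid, abs_div, abs_of_pos (by nlinarith : (0:ℝ) < sd s y * sd r y)]
  rw [div_le_iff₀ (by nlinarith)]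
  have h1 : |(-3) * y * (s^2 - r^2)| ≤ 12 * |s - r| := by
    have : (-3) * y * (s^2 - r^2) = (-3 * y * (s + r)) * (s - r) := by ring
    rw [this, abs_mul]
    have h2 : |(-3) * y * (s + r)| ≤ 12 := by
      rw [abs_mul]
      have : |(-3) * y| ≤ 3 := by rw [abs_mul]; simp [abs_of_nonneg hy0]; linarith
      have h3 : |s + r| ≤ 4 := by rw [abs_le]; constructor <;> linarith
      nlinarith [abs_nonneg ((-3) * y), abs_nonneg (s + r)]
    nlinarith [abs_nonneg (s - r)]
  have h4 : (1:ℝ)/16 ≤ sd s y * sd r y := by nlinarith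
  nlinarith [mul_le_mul_of_nonneg_right h4 (abs_nonneg (s-r)), abs_nonneg (s - r)]

lemma abs_lP_diff_point (hs1 : 1/2 ≤ s) (hs2 : s ≤ 2)
    (hy0 : 0 ≤ y) (hy1 : y ≤ 1) (hz0 : 0 ≤ z) (hz1 : z ≤ 1) :
    |lP s z - lP s y| ≤ 576 * |z - y| := by
  obtain ⟨hds, _⟩ := sd_bounds hs1 hs2 hy0 hy1
  obtain ⟨hdz, _⟩ := sd_bounds hs1 hs2 hz0 hz1
  have hne1 : sd s y ≠ 0 := by nlinarith
  have hne2 : sd s z ≠ 0 := by nlinarith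
  have hid : lP s z - lP s y =
      -3 * (s^2 - 1) * ((z - y) * (1 - (s^2 - 1) * (z * y))) / (sd s y * sd s z) := by
    unfold lP
    field_simp
    unfold sd
    ring
  rw [hid, abs_div, abs_of_pos (by nlinarith : (0:ℝ) < sd s y * sd s z)]
  rw [div_le_iff₀ (by nlinarith)]
  have h2 : |s^2 - 1| ≤ 3 := by rw [abs_le]; constructor <;> nlinarith
  have h3 : |1 - (s^2 - 1) * (z * y)| ≤ 4 := by
    rw [abs_le]
    constructor <;> nlinarith [mul_nonneg hz0 hy0, mul_le_one₀ hz1 hy0 hy1]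
  have h1 : |(-3) * (s^2 - 1) * ((z - y) * (1 - (s^2 - 1) * (z*y)))| ≤ 36 * |z - y| := by
    rw [abs_mul, abs_mul, abs_mul]
    have hn3 : |(-3 : ℝ)| = 3 := by norm_num
    rw [hn3]
    nlinarith [abs_nonneg (s^2-1), abs_nonneg (z - y), abs_nonneg (1 - (s^2-1)*(z*y)),
      mul_nonneg (abs_nonneg (z-y)) (abs_nonneg (1 - (s^2-1)*(z*y)))]
  have h4 : (1:ℝ)/16 ≤ sd s y * sd s z := by nlinarith
  nlinarith [mul_le_mul_of_nonneg_right h4 (abs_nonneg (z-y)), abs_nonneg (z - y)]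


lemma Bden_bounds (hρ1 : 1/16 ≤ ρ) (hρ2 : ρ ≤ 16) (hy0 : 0 ≤ y) (hy1 : y ≤ 1) :
    1/16 ≤ 1 + (ρ - 1) * y ∧ 1 + (ρ - 1) * y ≤ 16 := by
  rcases le_or_gt ρ 1 with h | h
  · constructor <;> nlinarith [mul_le_mul_of_nonneg_right (show ρ - 1 ≤ 0 by linarith) hy0]
  · constructor <;> nlinarith [mul_le_mul_of_nonneg_left hy1 (show (0:ℝ) ≤ ρ - 1 by linarith),
      mul_nonneg (show (0:ℝ) ≤ ρ - 1 by linarith) hy0]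

lemma abs_lB_le (hρ1 : 1/16 ≤ ρ) (hρ2 : ρ ≤ 16) (hy0 : 0 ≤ y) (hy1 : y ≤ 1) :
    |lB ρ y| ≤ 32 * |ρ - 1| := by
  obtain ⟨ha, hb⟩ := Bden_bounds hρ1 hρ2 hy0 hy1
  unfold lB
  rw [abs_div, abs_of_pos (by linarith : (0:ℝ) < 1 + (ρ-1)*y), div_le_iff₀ (by linarith)]
  rw [show (-2) * (ρ - 1) = (-2) * (ρ - 1) by rfl, abs_mul]
  have : |(-2:ℝ)| = 2 := by norm_num
  rw [this]
  nlinarith [abs_nonneg (ρ - 1), mul_le_mul_of_nonneg_left ha (mul_nonneg (by norm_num : (0:ℝ) ≤ 32) (abs_nonneg (ρ-1)))]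

lemma Bd_le_big (hρ1 : 1/16 ≤ ρ) (hρ2 : ρ ≤ 16) (hy0 : 0 ≤ y) (hy1 : y ≤ 1) :
    Bd ρ y ≤ 4096 := by
  obtain ⟨ha, hb⟩ := Bden_bounds hρ1 hρ2 hy0 hy1
  unfold Bd
  rw [div_le_iff₀ (by positivity)]
  nlinarith

lemma abs_Bd_sub_one (hρ1 : 1/16 ≤ ρ) (hρ2 : ρ ≤ 16) (hy0 : 0 ≤ y) (hy1 : y ≤ 1) :
    |Bd ρ y - 1| ≤ 4608 * |ρ - 1| := by
  obtain ⟨ha, hb⟩ := Bden_bounds hρ1 hρ2 hy0 hy1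
  have hne : 1 + (ρ - 1) * y ≠ 0 := by linarith
  have hid : Bd ρ y - 1 = (ρ - 1) * (1 - 2*y - (ρ-1)*y^2) / (1 + (ρ-1)*y)^2 := by
    unfold Bd
    field_simp
    ring
  rw [hid, abs_div, abs_of_pos (by positivity : (0:ℝ) < (1+(ρ-1)*y)^2), div_le_iff₀ (by positivity)]
  rw [abs_mul]
  have h1 : |1 - 2*y - (ρ-1)*y^2| ≤ 18 := by
    rw [abs_le]
    have hy2 : y^2 ≤ 1 := by nlinarith
    constructor <;> nlinarith [sq_nonneg y, mul_le_mul_of_nonneg_right (show ρ - 1 ≤ 15 by linarith) (sq_nonneg y), mul_le_mul_of_nonneg_right (show (-15:ℝ) ≤ ρ - 1 by linarith) (sq_nonneg y)]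
  have h2 : (1:ℝ)/256 ≤ (1 + (ρ-1)*y)^2 := by nlinarith
  nlinarith [abs_nonneg (ρ - 1), mul_le_mul_of_nonneg_left h2 (mul_nonneg (by norm_num : (0:ℝ) ≤ 4608) (abs_nonneg (ρ-1))), mul_le_mul_of_nonneg_left h1 (abs_nonneg (ρ-1))]

lemma abs_B_sub_self (hρ1 : 1/16 ≤ ρ) (hρ2 : ρ ≤ 16) (hy0 : 0 ≤ y) (hy1 : y ≤ 1) :
    |B ρ y - y| ≤ 16 * |ρ - 1| := by
  obtain ⟨ha, hb⟩ := Bden_bounds hρ1 hρ2 hy0 hy1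
  have hne : 1 + (ρ - 1) * y ≠ 0 := by linarith
  have hid : B ρ y - y = (ρ - 1) * (y * (1 - y)) / (1 + (ρ-1)*y) := by
    unfold B
    rw [eq_div_iff hne, sub_mul, div_mul_cancel₀ _ hne]
    ring
  rw [hid, abs_div, abs_of_pos (by linarith : (0:ℝ) < 1+(ρ-1)*y), div_le_iff₀ (by linarith)]
  rw [abs_mul]
  have h1 : |y * (1 - y)| ≤ 1 := by
    rw [abs_le]; constructor <;> nlinarith
  nlinarith [abs_nonneg (ρ - 1), mul_le_mul_of_nonneg_left ha (mul_nonneg (by norm_num : (0:ℝ) ≤ 16) (abs_nonneg (ρ-1))), mul_le_mul_of_nonneg_left h1 (abs_nonneg (ρ-1))]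

end Bounds

/-- The central estimate: `|kk r s t| ≤ 10^10 * |r/s - 1|` on the box. -/
lemma kk_bound {r s t : ℝ} (hr1 : 1/2 ≤ r) (hr2 : r ≤ 2) (hs1 : 1/2 ≤ s) (hs2 : s ≤ 2)
    (ht0 : 0 ≤ t) (ht1 : t ≤ 1) :
    |kk r s t| ≤ 10^10 * |r/s - 1| := by
  have hr0 : (0:ℝ) < r := by linarith
  have hs0 : (0:ℝ) < s := by linarith
  have hr' : 0 < 1/r := by positivity
  have h1r1 : 1/2 ≤ 1/r := by rw [div_le_div_iff₀ (by norm_num) hr0]; linarith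
  have h1r2 : 1/r ≤ 2 := by rw [div_le_iff₀ hr0]; linarith
  have hrs1 : 1/4 ≤ r/s := by rw [div_le_div_iff₀ (by norm_num) hs0]; linarith
  have hrs2 : r/s ≤ 4 := by rw [div_le_iff₀ hs0]; linarith
  set ρ := (r/s)^2 with hρdef
  have hρ1 : 1/16 ≤ ρ := by rw [hρdef]; nlinarith
  have hρ2 : ρ ≤ 16 := by rw [hρdef]; nlinarith
  set y := P (1/r) t with hydef
  have hy0 : 0 ≤ y := P_nonneg hr' ht0
  have hy1 : y ≤ 1 := P_le_one hr' ht0 ht1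
  set z := B ρ y with hzdef
  have hρ0 : 0 < ρ := by linarith
  have hz0 : 0 ≤ z := B_nonneg hρ0 hy0 hy1
  have hz1 : z ≤ 1 := B_le_one hρ0 hy0 hy1
  set X := |r/s - 1| with hXdef
  have hX0 : 0 ≤ X := abs_nonneg _
  -- parameter comparisons
  have hρX : |ρ - 1| ≤ 5 * X := by
    have h : ρ - 1 = (r/s - 1) * (r/s + 1) := by rw [hρdef]; ring
    rw [h, abs_mul]
    have h5 : |r/s + 1| ≤ 5 := by rw [abs_le]; constructor <;> linarith
    nlinarith [abs_nonneg (r/s - 1)]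
  have hsrX : |s - r| ≤ 2 * X := by
    have h : s - r = -(s * (r/s - 1)) := by field_simp; ring
    rw [h, abs_neg, abs_mul]
    have h2 : |s| ≤ 2 := by rw [abs_le]; constructor <;> linarith
    nlinarith [abs_nonneg (r/s - 1), abs_nonneg s]
  -- decomposition
  have hc := cancel hr0 ht0 ht1
  have hdec : kk r s t = Pd (1/r) t * (lB ρ y
      + ((lP s z - lP s y) * Bd ρ y + ((lP s y - lP r y) * Bd ρ y
        + lP r y * (Bd ρ y - 1)))) := by
    unfold kk
    rw [← hydef, ← hρdef, ← hzdef]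
    linear_combination hc
  -- individual bounds
  have E1 : |lB ρ y| ≤ 160 * X := by
    have := abs_lB_le hρ1 hρ2 hy0 hy1
    linarith
  have E2 : |lP s z - lP s y| ≤ 46080 * X := by
    have h1 := abs_lP_diff_point hs1 hs2 hy0 hy1 hz0 hz1
    have h2 := abs_B_sub_self hρ1 hρ2 hy0 hy1
    rw [← hzdef] at h2
    linarith
  have E3 : |lP s y - lP r y| ≤ 384 * X := by
    have h1 := abs_lP_diff_param hr1 hr2 hs1 hs2 hy0 hy1
    linarith
  have E4 : |lP r y| ≤ 36 := abs_lP_le hr1 hr2 hy0 hy1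
  have E5 : |Bd ρ y - 1| ≤ 23040 * X := by
    have := abs_Bd_sub_one hρ1 hρ2 hy0 hy1
    linarith
  have E6 : Bd ρ y ≤ 4096 := Bd_le_big hρ1 hρ2 hy0 hy1
  have E6' : 0 < Bd ρ y := Bd_pos hρ0 hy0 hy1
  have E7 : Pd (1/r) t ≤ 16 := Pd_le_16 h1r1 h1r2 ht0 ht1
  have E7' : 0 < Pd (1/r) t := Pd_pos hr' ht0 ht1
  -- assembling
  rw [hdec, abs_mul, abs_of_pos E7']
  have hinner : |lB ρ y + ((lP s z - lP s y) * Bd ρ y + ((lP s y - lP r y) * Bd ρ y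
      + lP r y * (Bd ρ y - 1)))| ≤ 160 * X + (46080 * X * 4096 + (384 * X * 4096 + 36 * (23040 * X))) := by
    refine (abs_add_le _ _).trans (add_le_add E1 ((abs_add_le _ _).trans (add_le_add ?_ ((abs_add_le _ _).trans (add_le_add ?_ ?_)))))
    · rw [abs_mul, abs_of_pos E6']
      exact mul_le_mul E2 E6 E6'.le (by positivity)
    · rw [abs_mul, abs_of_pos E6']
      exact mul_le_mul E3 E6 E6'.le (by positivity)
    · rw [abs_mul]
      exact mul_le_mul E4 E5 (abs_nonneg _) (by norm_num)
  calc Pd (1/r) t * |lB ρ y + ((lP s z - lP s y) * Bd ρ y + ((lP s y - lP r y) * Bd ρ y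
      + lP r y * (Bd ρ y - 1)))|
      ≤ 16 * (160 * X + (46080 * X * 4096 + (384 * X * 4096 + 36 * (23040 * X)))) := by
        exact mul_le_mul E7 hinner (abs_nonneg _) (by norm_num)
    _ = 3058338304 * X := by ring
    _ ≤ 10^10 * X := by
        have : (3058338304:ℝ) ≤ 10^10 := by norm_num
        exact mul_le_mul_of_nonneg_right this hX0


/-! ### Analyticity -/

section Smooth

variable {n : WithTop ℕ∞} {α ρ r s t : ℝ}

lemma contDiff_sd : ContDiff ℝ n (fun t : ℝ => sd α t) := by
  unfold sd
  exact contDiff_const.add (contDiff_const.mul (contDiff_id.pow 2))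

lemma contDiffAt_P (hd : 0 < sd α t) : ContDiffAt ℝ n (fun t => P α t) t := by
  have h2 : ContDiffAt ℝ n (fun t => Real.sqrt (sd α t)) t := by
    have := (Real.contDiffAt_sqrt (n := n) hd.ne').comp t (contDiff_sd (n := n)).contDiffAt
    simpa [Function.comp_def] using this
  have h3 : Real.sqrt (sd α t) ≠ 0 := (Real.sqrt_pos.2 hd).ne'
  exact ContDiffAt.div ((contDiff_const.mul contDiff_id).contDiffAt) h2 h3

lemma contDiffAt_B (hden : 1 + (ρ - 1) * t ≠ 0) :
    ContDiffAt ℝ n (fun t => B ρ t) t := by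
  unfold B
  exact ContDiffAt.div ((contDiff_const.mul contDiff_id).contDiffAt)
    ((contDiff_const.add (contDiff_const.mul contDiff_id)).contDiffAt) hden

lemma contDiffAt_gg (hr : 0 < r) (hs : 0 < s) (ht0 : 0 ≤ t) (ht1 : t ≤ 1) :
    ContDiffAt ℝ n (fun t => gg r s t) t := by
  have hr' : 0 < 1/r := by positivity
  have hρ : 0 < (r/s)^2 := by positivity
  have hy0 := P_nonneg hr' ht0
  have hy1 := P_le_one hr' ht0 ht1
  have hz0 := B_nonneg hρ hy0 hy1
  have hz1 := B_le_one hρ hy0 hy1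
  have h1 : ContDiffAt ℝ n (fun t => P (1/r) t) t := contDiffAt_P (sd_pos hr' ht0 ht1)
  have h2 : ContDiffAt ℝ n (fun u => B ((r/s)^2) u) (P (1/r) t) :=
    contDiffAt_B (Bden_pos hρ hy0 hy1).ne'
  have h3 : ContDiffAt ℝ n (fun u => P s u) (B ((r/s)^2) (P (1/r) t)) :=
    contDiffAt_P (sd_pos hs hz0 hz1)
  have h21 := h2.comp t h1
  have h321 := h3.comp t h21
  simpa [Function.comp_def, gg] using h321

end Smooth

/-! ### The family Φ -/

noncomputable def Phi (a b c a' b' c' x : ℝ) : ℝ :=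
  b' + (c' - b') * gg ((c - b)/(b - a)) ((c' - b')/(b' - a')) ((x - b)/(c - b))

end PTaux


namespace PTaux

section Main

variable {a b c a' b' c' : ℝ}

lemma tau_mem (hb : b < c) {x : ℝ} (hx : x ∈ Set.Icc b c) :
    0 ≤ (x - b)/(c - b) ∧ (x - b)/(c - b) ≤ 1 := by
  obtain ⟨h1, h2⟩ := hx
  constructor
  · apply div_nonneg <;> linarith
  · rw [div_le_one (by linarith)]; linarith

lemma hasDerivAt_tau (b c x : ℝ) :
    HasDerivAt (fun x : ℝ => (x - b)/(c - b)) (1/(c - b)) x := by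
  simpa using ((hasDerivAt_id x).sub_const b).div_const (c - b)

lemma hasDerivAt_Phi (ha : a < b) (hb : b < c) (ha' : a' < b') (hb' : b' < c')
    {x : ℝ} (hx : x ∈ Set.Icc b c) :
    HasDerivAt (Phi a b c a' b' c')
      ((c' - b')/(c - b) * gd ((c - b)/(b - a)) ((c' - b')/(b' - a')) ((x - b)/(c - b))) x := by
  have hr : 0 < (c - b)/(b - a) := by apply div_pos <;> linarith
  have hr' : 0 < (c' - b')/(b' - a') := by apply div_pos <;> linarith
  obtain ⟨ht0, ht1⟩ := tau_mem hb hx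
  have h1 := (hasDerivAt_gg hr hr' ht0 ht1).comp x (hasDerivAt_tau b c x)
  simp only [Function.comp_def] at h1
  have h2 := (h1.const_mul (c' - b')).const_add b'
  refine h2.congr_deriv (Eq.symm ?_)
  field_simp

lemma Phi_left (ha : a < b) (hb : b < c) (ha' : a' < b') (hb' : b' < c') :
    Phi a b c a' b' c' b = b' := by
  have hr : 0 < (c - b)/(b - a) := by apply div_pos <;> linarith
  have hr' : 0 < (c' - b')/(b' - a') := by apply div_pos <;> linarith
  unfold Phi
  rw [sub_self, zero_div, gg_zero hr hr']
  ring

lemma Phi_right (ha : a < b) (hb : b < c) (ha' : a' < b') (hb' : b' < c') :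
    Phi a b c a' b' c' c = c' := by
  have hr : 0 < (c - b)/(b - a) := by apply div_pos <;> linarith
  have hr' : 0 < (c' - b')/(b' - a') := by apply div_pos <;> linarith
  unfold Phi
  rw [div_self (by linarith : c - b ≠ 0), gg_one hr hr']
  ring

lemma Phi_strictMono (ha : a < b) (hb : b < c) (ha' : a' < b') (hb' : b' < c') :
    StrictMonoOn (Phi a b c a' b' c') (Set.Icc b c) := by
  have hr : 0 < (c - b)/(b - a) := by apply div_pos <;> linarith
  have hr' : 0 < (c' - b')/(b' - a') := by apply div_pos <;> linarith
  apply strictMonoOn_of_deriv_pos (convex_Icc b c)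
  · intro x hx
    exact (hasDerivAt_Phi ha hb ha' hb' hx).continuousAt.continuousWithinAt
  · intro x hx
    rw [interior_Icc] at hx
    have hx' : x ∈ Set.Icc b c := ⟨hx.1.le, hx.2.le⟩
    rw [(hasDerivAt_Phi ha hb ha' hb' hx').deriv]
    obtain ⟨ht0, ht1⟩ := tau_mem hb hx'
    have := gd_pos hr hr' ht0 ht1
    have : 0 < (c' - b')/(c - b) := by apply div_pos <;> linarith
    positivity

lemma Phi_cont (ha : a < b) (hb : b < c) (ha' : a' < b') (hb' : b' < c') :
    ContinuousOn (Phi a b c a' b' c') (Set.Icc b c) := fun x hx =>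
  (hasDerivAt_Phi ha hb ha' hb' hx).continuousAt.continuousWithinAt

lemma Phi_bijOn (ha : a < b) (hb : b < c) (ha' : a' < b') (hb' : b' < c') :
    Set.BijOn (Phi a b c a' b' c') (Set.Icc b c) (Set.Icc b' c') := by
  have hr : 0 < (c - b)/(b - a) := by apply div_pos <;> linarith
  have hr' : 0 < (c' - b')/(b' - a') := by apply div_pos <;> linarith
  refine ⟨?_, (Phi_strictMono ha hb ha' hb').injOn, ?_⟩
  · intro x hx
    obtain ⟨ht0, ht1⟩ := tau_mem hb hx
    obtain ⟨hg0, hg1⟩ := gg_mem hr hr' ht0 ht1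
    unfold Phi
    constructor
    · nlinarith
    · nlinarith
  · have h := intermediate_value_Icc hb.le (Phi_cont ha hb ha' hb')
    rw [Phi_left ha hb ha' hb', Phi_right ha hb ha' hb'] at h
    exact h

lemma Phi_derivWithin (ha : a < b) (hb : b < c) (ha' : a' < b') (hb' : b' < c')
    {x : ℝ} (hx : x ∈ Set.Icc b c) :
    derivWithin (Phi a b c a' b' c') (Set.Icc b c) x =
      (c' - b')/(c - b) * gd ((c - b)/(b - a)) ((c' - b')/(b' - a')) ((x - b)/(c - b)) := by
  exact ((hasDerivAt_Phi ha hb ha' hb' hx).hasDerivWithinAt).derivWithin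
    (uniqueDiffOn_Icc hb x hx)

end Main

end PTaux


open PTaux in
/-- **Lemma 3.1 (Pixton–Tsuboi).** There exists a family of orientation-preserving `C^∞`
diffeomorphisms `φ_{I',I}^{J',J} : I → J`, defined for all quadruples of bounded
nondegenerate intervals with `I'` (resp. `J'`) contiguous to `I` (resp. `J`) by the left,
satisfying equivariance, the endpoint derivative conditions, and the regularity
estimate. -/
theorem exists_pixton_tsuboi_family : ∃ Φ : ℝ → ℝ → ℝ → ℝ → ℝ → ℝ → ℝ → ℝ,
    IsPTFamily Φ := by

  refine ⟨Phi, ?_, ?_, ?_⟩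
  · -- basic properties
    intro a b c a' b' c' ha hb ha' hb'
    have hr : 0 < (c - b)/(b - a) := by apply div_pos <;> linarith
    have hr' : 0 < (c' - b')/(b' - a') := by apply div_pos <;> linarith
    refine ⟨Phi_bijOn ha hb ha' hb', Phi_strictMono ha hb ha' hb', ?_, ?_, ?_, ?_⟩
    · -- ContDiffOn
      intro x hx
      obtain ⟨ht0, ht1⟩ := tau_mem hb hx
      apply ContDiffAt.contDiffWithinAt
      have h1 : ContDiffAt ℝ (⊤ : ℕ∞) (fun x : ℝ => (x - b)/(c - b)) x :=
        ((contDiff_id.sub contDiff_const).div_const (c - b)).contDiffAt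
      have h2 := (contDiffAt_gg (n := (⊤ : ℕ∞)) hr hr' ht0 ht1).comp x h1
      have h3 := (h2.const_smul (c' - b')).add (contDiffAt_const (c := b'))
      show ContDiffAt ℝ (⊤ : ℕ∞) (fun x => Phi a b c a' b' c' x) x
      simpa [Function.comp_def, Phi, smul_eq_mul, add_comm] using h3
    · intro x hx
      rw [Phi_derivWithin ha hb ha' hb' hx]
      obtain ⟨ht0, ht1⟩ := tau_mem hb hx
      have h1 := gd_pos hr hr' ht0 ht1
      have h2 : 0 < (c' - b')/(c - b) := by apply div_pos <;> linarith
      positivity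
    · rw [Phi_derivWithin ha hb ha' hb' (Set.left_mem_Icc.2 hb.le), sub_self, zero_div,
        gd_zero hr hr']
      have hba : (0:ℝ) < b - a := by linarith
      have hcb : (0:ℝ) < c - b := by linarith
      have hba' : (0:ℝ) < b' - a' := by linarith
      have hcb' : (0:ℝ) < c' - b' := by linarith
      field_simp [hba.ne', hcb.ne', hba'.ne', hcb'.ne']
    · rw [Phi_derivWithin ha hb ha' hb' (Set.right_mem_Icc.2 hb.le),
        div_self (by linarith : c - b ≠ 0), gd_one hr hr']
      ring
  · -- equivariance
    intro a b c a' b' c' a'' b'' c'' ha hb ha' hb' ha'' hb'' x hx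
    have hr : 0 < (c - b)/(b - a) := by apply div_pos <;> linarith
    have hr' : 0 < (c' - b')/(b' - a') := by apply div_pos <;> linarith
    have hr'' : 0 < (c'' - b'')/(b'' - a'') := by apply div_pos <;> linarith
    obtain ⟨ht0, ht1⟩ := tau_mem hb hx
    unfold Phi
    have key : (b' + (c' - b') * gg ((c - b)/(b - a)) ((c' - b')/(b' - a')) ((x - b)/(c - b)) - b')
        / (c' - b') = gg ((c - b)/(b - a)) ((c' - b')/(b' - a')) ((x - b)/(c - b)) := by
      rw [add_sub_cancel_left]
      exact mul_div_cancel_left₀ _ (by linarith)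
    rw [key, gg_gg hr hr' hr'' ht0 ht1]
  · -- the estimate
    refine ⟨10^10, by norm_num, ?_⟩
    intro a b c a' b' c' ha hb ha' hb' hmax x hx
    have hba : 0 < b - a := by linarith
    have hcb : 0 < c - b := by linarith
    have hba' : 0 < b' - a' := by linarith
    have hcb' : 0 < c' - b' := by linarith
    set r := (c - b)/(b - a) with hrdef
    set r' := (c' - b')/(b' - a') with hr'def
    have hr : 0 < r := by apply div_pos <;> linarith
    have hr' : 0 < r' := by apply div_pos <;> linarith
    -- bounds from the comparability assumption
    have h21 : c - b ≤ 2 * (b - a) := by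
      calc c - b ≤ max (max (b - a) (c - b)) (max (b' - a') (c' - b')) :=
            le_max_of_le_left (le_max_right _ _)
        _ ≤ 2 * min (min (b - a) (c - b)) (min (b' - a') (c' - b')) := hmax
        _ ≤ 2 * (b - a) := by
            have hm : min (min (b - a) (c - b)) (min (b' - a') (c' - b')) ≤ b - a :=
              (min_le_left _ _).trans (min_le_left _ _)
            linarith
    have h12 : b - a ≤ 2 * (c - b) := by
      calc b - a ≤ max (max (b - a) (c - b)) (max (b' - a') (c' - b')) :=
            le_max_of_le_left (le_max_left _ _)
        _ ≤ 2 * min (min (b - a) (c - b)) (min (b' - a') (c' - b')) := hmax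
        _ ≤ 2 * (c - b) := by
            have hm : min (min (b - a) (c - b)) (min (b' - a') (c' - b')) ≤ c - b :=
              (min_le_left _ _).trans (min_le_right _ _)
            linarith
    have h43 : c' - b' ≤ 2 * (b' - a') := by
      calc c' - b' ≤ max (max (b - a) (c - b)) (max (b' - a') (c' - b')) :=
            le_max_of_le_right (le_max_right _ _)
        _ ≤ 2 * min (min (b - a) (c - b)) (min (b' - a') (c' - b')) := hmax
        _ ≤ 2 * (b' - a') := by
            have hm : min (min (b - a) (c - b)) (min (b' - a') (c' - b')) ≤ b' - a' :=
              (min_le_right _ _).trans (min_le_left _ _)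
            linarith
    have h34 : b' - a' ≤ 2 * (c' - b') := by
      calc b' - a' ≤ max (max (b - a) (c - b)) (max (b' - a') (c' - b')) :=
            le_max_of_le_right (le_max_left _ _)
        _ ≤ 2 * min (min (b - a) (c - b)) (min (b' - a') (c' - b')) := hmax
        _ ≤ 2 * (c' - b') := by
            have hm : min (min (b - a) (c - b)) (min (b' - a') (c' - b')) ≤ c' - b' :=
              (min_le_right _ _).trans (min_le_right _ _)
            linarith
    have hr1 : 1/2 ≤ r := by rw [hrdef, div_le_div_iff₀ (by norm_num) hba]; linarith
    have hr2 : r ≤ 2 := by rw [hrdef, div_le_iff₀ hba]; linarith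
    have hr'1 : 1/2 ≤ r' := by rw [hr'def, div_le_div_iff₀ (by norm_num) hba']; linarith
    have hr'2 : r' ≤ 2 := by rw [hr'def, div_le_iff₀ hba']; linarith
    obtain ⟨ht0, ht1⟩ := tau_mem hb hx
    -- rewrite the inner function on Icc b c
    have hEq : Set.EqOn (fun y => Real.log (derivWithin (Phi a b c a' b' c') (Set.Icc b c) y))
        (fun y => Real.log ((c' - b')/(c - b) * gd r r' ((y - b)/(c - b)))) (Set.Icc b c) := by
      intro y hy
      simp only
      rw [Phi_derivWithin ha hb ha' hb' hy]
    rw [derivWithin_congr hEq (hEq hx)]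
    -- compute the derivative of the explicit logarithmic derivative
    have hgdpos : 0 < gd r r' ((x - b)/(c - b)) := gd_pos hr hr' ht0 ht1
    have hCpos : 0 < (c' - b')/(c - b) := by positivity
    have h1 := (hasDerivAt_gd hr hr' ht0 ht1).comp x (hasDerivAt_tau b c x)
    simp only [Function.comp_def] at h1
    have h2 := h1.const_mul ((c' - b')/(c - b))
    have h3 := (Real.hasDerivAt_log (by positivity :
        (c' - b')/(c - b) * gd r r' ((x - b)/(c - b)) ≠ 0)).comp x h2
    simp only [Function.comp_def] at h3
    have h4 : derivWithin (fun y => Real.log ((c' - b')/(c - b) * gd r r' ((y - b)/(c - b))))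
        (Set.Icc b c) x = ((c' - b')/(c - b) * gd r r' ((x - b)/(c - b)))⁻¹ *
          ((c' - b')/(c - b) * (gd r r' ((x - b)/(c - b)) * kk r r' ((x - b)/(c - b)) * (1/(c - b)))) :=
      h3.hasDerivWithinAt.derivWithin (uniqueDiffOn_Icc hb x hx)
    rw [h4]
    have h5 : ((c' - b')/(c - b) * gd r r' ((x - b)/(c - b)))⁻¹ *
        ((c' - b')/(c - b) * (gd r r' ((x - b)/(c - b)) * kk r r' ((x - b)/(c - b)) * (1/(c - b)))) =
        kk r r' ((x - b)/(c - b)) * (1/(c - b)) := by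
      field_simp
    rw [h5]
    have h6 : (c - b)/(c' - b') * ((b' - a')/(b - a)) = r / r' := by
      rw [hrdef, hr'def]
      field_simp
    rw [h6, abs_mul, abs_of_pos (by positivity : (0:ℝ) < 1/(c - b))]
    have h7 := kk_bound hr1 hr2 hr'1 hr'2 ht0 ht1
    rw [div_eq_mul_inv ((10:ℝ)^10) (c - b), mul_comm ((10:ℝ)^10) (c - b)⁻¹]
    calc |kk r r' ((x - b)/(c - b))| * (1/(c - b))
        ≤ 10^10 * |r/r' - 1| * (1/(c - b)) := by
          apply mul_le_mul_of_nonneg_right h7 (by positivity)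
      _ = (c - b)⁻¹ * 10^10 * |r/r' - 1| := by ring
end

section
/- Let p, q, r be positive reals with 1 < r < 2, 4r ≤ p, and 4r ≤ q. Let θ: ℝ → [0,∞) be a C² function with θ(ξ) = |ξ|^r for |ξ| ≥ 1 and θ(0) = 0, and set φ(i,j,ξ) := 1 + |i|^p + |j|^q + θ(ξ) and S := 1 + |i|^p + |j|^q. Then there exists a universal constant M > 0 such that for all integers i, j, k and all real ξ with |ξ − k| ≤ S^{1/r} + 2|ij|, one has φ(i,j,k)/M ≤ φ(i,j,ξ) ≤ M·φ(i,j,k). -/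
private lemma add_rpow_le_two_rpow_mul (r a b : ℝ) (hr : 0 ≤ r) (ha : 0 ≤ a) (hb : 0 ≤ b) :
    (a + b) ^ r ≤ 2 ^ r * (a ^ r + b ^ r) := by
  have h2 : (0:ℝ) < 2 ^ r := Real.rpow_pos_of_pos two_pos r
  rcases le_total a b with h | h
  · calc (a + b) ^ r ≤ (2 * b) ^ r :=
        Real.rpow_le_rpow (by linarith) (by linarith) hr
      _ = 2 ^ r * b ^ r := Real.mul_rpow (by norm_num) hb
      _ ≤ 2 ^ r * (a ^ r + b ^ r) := by
          nlinarith [Real.rpow_nonneg ha r]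
  · calc (a + b) ^ r ≤ (2 * a) ^ r :=
        Real.rpow_le_rpow (by linarith) (by linarith) hr
      _ = 2 ^ r * a ^ r := Real.mul_rpow (by norm_num) ha
      _ ≤ 2 ^ r * (a ^ r + b ^ r) := by
          nlinarith [Real.rpow_nonneg hb r]

private lemma rpow_le_one_add_rpow (x s t : ℝ) (hx : 0 ≤ x) (hs : 0 ≤ s) (hst : s ≤ t) :
    x ^ s ≤ 1 + x ^ t := by
  rcases le_total x 1 with h | h
  · have h1 : x ^ s ≤ 1 := Real.rpow_le_one hx h hs
    have h2 : 0 ≤ x ^ t := Real.rpow_nonneg hx t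
    linarith
  · have h1 : x ^ s ≤ x ^ t := Real.rpow_le_rpow_of_exponent_le h hst
    linarith

/-- **Lemma 3.4.** Let `1 < r < 2`, `4r ≤ p`, `4r ≤ q`, and let `θ : ℝ → [0,∞)` be a `C²`
function with `θ(ξ) = |ξ|^r` for `|ξ| ≥ 1` and `θ(0) = 0`. Set
`φ(i,j,ξ) = 1 + |i|^p + |j|^q + θ(ξ)` and `S = 1 + |i|^p + |j|^q`. Then there is a
universal constant `M > 0` such that `φ(i,j,ξ) ≍ φ(i,j,k)` whenever
`|ξ − k| ≤ S^{1/r} + 2|ij|`. -/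
theorem phi_comparable_on_island
    (p q r : ℝ) (hp : 0 < p) (hq : 0 < q) (hr1 : 1 < r) (hr2 : r < 2)
    (hrp : 4 * r ≤ p) (hrq : 4 * r ≤ q)
    (θ : ℝ → ℝ) (hθC2 : ContDiff ℝ 2 θ) (hθ0 : θ 0 = 0)
    (hθnn : ∀ ξ : ℝ, 0 ≤ θ ξ)
    (hθr : ∀ ξ : ℝ, 1 ≤ |ξ| → θ ξ = |ξ| ^ r) :
    ∃ M > 0, ∀ (i j k : ℤ) (ξ : ℝ),
      |ξ - (k : ℝ)| ≤ (1 + |(i : ℝ)| ^ p + |(j : ℝ)| ^ q) ^ (1 / r) + 2 * |(i : ℝ) * (j : ℝ)| →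
        (1 + |(i : ℝ)| ^ p + |(j : ℝ)| ^ q + θ (k : ℝ)) / M ≤
            1 + |(i : ℝ)| ^ p + |(j : ℝ)| ^ q + θ ξ ∧
          1 + |(i : ℝ)| ^ p + |(j : ℝ)| ^ q + θ ξ ≤
            M * (1 + |(i : ℝ)| ^ p + |(j : ℝ)| ^ q + θ (k : ℝ)) := by
  have hr0 : (0:ℝ) < r := lt_trans one_pos hr1
  have h2r : (0:ℝ) < 2 ^ r := Real.rpow_pos_of_pos two_pos r
  -- bound of θ on [-1,1]
  obtain ⟨C, hC⟩ := (isCompact_Icc : IsCompact (Set.Icc (-1:ℝ) 1)).exists_bound_of_continuousOn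
    hθC2.continuous.continuousOn
  set C0 : ℝ := max C 0 with hC0def
  have hC00 : 0 ≤ C0 := le_max_right _ _
  have hC0 : ∀ x : ℝ, |x| ≤ 1 → θ x ≤ C0 := by
    intro x hx
    have hmem : x ∈ Set.Icc (-1:ℝ) 1 := by
      rcases abs_le.mp hx with ⟨h1, h2⟩
      exact ⟨h1, h2⟩
    have h := hC x hmem
    have : θ x ≤ ‖θ x‖ := le_abs_self _
    calc θ x ≤ C := le_trans this h
      _ ≤ C0 := le_max_left _ _
  set K : ℝ := 2 ^ r + 2 ^ r * (2 ^ r * (1 + 2 ^ r)) with hKdef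
  have hK0 : 0 < K := by positivity
  set M : ℝ := 1 + C0 + K with hMdef
  have hM0 : 0 < M := by positivity
  refine ⟨M, hM0, ?_⟩
  intro i j k ξ hdist
  set S : ℝ := 1 + |(i : ℝ)| ^ p + |(j : ℝ)| ^ q with hSdef
  have hS1 : 1 ≤ S := by
    have h1 : 0 ≤ |(i : ℝ)| ^ p := Real.rpow_nonneg (abs_nonneg _) p
    have h2 : 0 ≤ |(j : ℝ)| ^ q := Real.rpow_nonneg (abs_nonneg _) q
    simp only [hSdef]; linarith
  have hS0 : (0:ℝ) ≤ S := by linarith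
  set B : ℝ := S ^ (1 / r) + 2 * |(i : ℝ) * (j : ℝ)| with hBdef
  have hB0 : 0 ≤ B := by
    have := Real.rpow_nonneg hS0 (1 / r)
    have := abs_nonneg ((i : ℝ) * (j : ℝ))
    simp only [hBdef]; linarith
  -- |ij|^r ≤ S
  have hij : |(i : ℝ) * (j : ℝ)| ^ r ≤ S := by
    have habs : |(i : ℝ) * (j : ℝ)| = |(i : ℝ)| * |(j : ℝ)| := abs_mul _ _
    have hmul : (|(i : ℝ)| * |(j : ℝ)|) ^ r = |(i : ℝ)| ^ r * |(j : ℝ)| ^ r :=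
      Real.mul_rpow (abs_nonneg _) (abs_nonneg _)
    have hrr : r + r ≠ 0 := by positivity
    have hi2 : |(i : ℝ)| ^ (r + r) = |(i : ℝ)| ^ r * |(i : ℝ)| ^ r :=
      Real.rpow_add' (abs_nonneg _) hrr
    have hj2 : |(j : ℝ)| ^ (r + r) = |(j : ℝ)| ^ r * |(j : ℝ)| ^ r :=
      Real.rpow_add' (abs_nonneg _) hrr
    have hip : |(i : ℝ)| ^ (r + r) ≤ 1 + |(i : ℝ)| ^ p :=
      rpow_le_one_add_rpow _ _ _ (abs_nonneg _) (by linarith) (by linarith)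
    have hjq : |(j : ℝ)| ^ (r + r) ≤ 1 + |(j : ℝ)| ^ q :=
      rpow_le_one_add_rpow _ _ _ (abs_nonneg _) (by linarith) (by linarith)
    have hamgm : |(i : ℝ)| ^ r * |(j : ℝ)| ^ r ≤
        (|(i : ℝ)| ^ (r + r) + |(j : ℝ)| ^ (r + r)) / 2 := by
      nlinarith [sq_nonneg (|(i : ℝ)| ^ r - |(j : ℝ)| ^ r)]
    rw [habs, hmul]
    simp only [hSdef] at *
    linarith
  -- B^r ≤ 2^r (1+2^r) S
  have hS1r : (S ^ (1 / r)) ^ r = S := by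
    rw [← Real.rpow_mul hS0, one_div_mul_cancel (ne_of_gt hr0), Real.rpow_one]
  have hBr : B ^ r ≤ 2 ^ r * (1 + 2 ^ r) * S := by
    have h1 : B ^ r ≤ 2 ^ r * ((S ^ (1 / r)) ^ r + (2 * |(i : ℝ) * (j : ℝ)|) ^ r) :=
      add_rpow_le_two_rpow_mul r _ _ hr0.le (Real.rpow_nonneg hS0 _)
        (by positivity)
    have h2 : (2 * |(i : ℝ) * (j : ℝ)|) ^ r = 2 ^ r * |(i : ℝ) * (j : ℝ)| ^ r :=
      Real.mul_rpow (by norm_num) (abs_nonneg _)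
    rw [h2, hS1r] at h1
    have h3 : 2 ^ r * |(i : ℝ) * (j : ℝ)| ^ r ≤ 2 ^ r * S :=
      mul_le_mul_of_nonneg_left hij h2r.le
    have h4 : 2 ^ r * (S + 2 ^ r * |(i : ℝ) * (j : ℝ)| ^ r) ≤ 2 ^ r * (S + 2 ^ r * S) :=
      mul_le_mul_of_nonneg_left (by linarith) h2r.le
    have h5 : 2 ^ r * (S + 2 ^ r * S) = 2 ^ r * (1 + 2 ^ r) * S := by ring
    linarith
  -- |y|^r ≤ θ y + S for all y
  have hyr : ∀ y : ℝ, |y| ^ r ≤ θ y + S := by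
    intro y
    rcases le_total (|y|) 1 with h | h
    · have := Real.rpow_le_one (abs_nonneg y) h hr0.le
      have := hθnn y
      linarith
    · rw [← hθr y h]
      have := hS0
      linarith
  -- key comparison
  have key : ∀ x y : ℝ, |x - y| ≤ B → θ x ≤ (C0 + K) * (S + θ y) := by
    intro x y hxy
    have hSθ : 1 ≤ S + θ y := by have := hθnn y; linarith
    rcases le_total (|x|) 1 with h | h
    · have h1 : θ x ≤ C0 := hC0 x h
      have h2 : C0 * 1 ≤ C0 * (S + θ y) := mul_le_mul_of_nonneg_left hSθ hC00
      have h3 : 0 ≤ K * (S + θ y) := mul_nonneg hK0.le (by linarith)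
      nlinarith
    · rw [hθr x h]
      have hx_le : |x| ≤ |y| + B := by
        have h1 : |x| - |y| ≤ |x - y| := abs_sub_abs_le_abs_sub _ _
        linarith
      have h2 : |x| ^ r ≤ (|y| + B) ^ r :=
        Real.rpow_le_rpow (abs_nonneg x) hx_le hr0.le
      have h3 : (|y| + B) ^ r ≤ 2 ^ r * (|y| ^ r + B ^ r) :=
        add_rpow_le_two_rpow_mul r _ _ hr0.le (abs_nonneg y) hB0
      have h4 := hyr y
      have hθy := hθnn y
      have h5 : |x| ^ r ≤ 2 ^ r * (θ y + S + 2 ^ r * (1 + 2 ^ r) * S) := by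
        have h5a : |y| ^ r + B ^ r ≤ θ y + S + 2 ^ r * (1 + 2 ^ r) * S := by linarith
        have := mul_le_mul_of_nonneg_left h5a h2r.le
        linarith
      have h6 : 2 ^ r * (θ y + S + 2 ^ r * (1 + 2 ^ r) * S) = 2 ^ r * θ y + K * S := by
        rw [hKdef]; ring
      have h2K : 2 ^ r ≤ K := by
        have hpos : (0:ℝ) ≤ (2:ℝ) ^ r * ((2:ℝ) ^ r * (1 + (2:ℝ) ^ r)) := by positivity
        linarith
      have h7 : 2 ^ r * θ y ≤ K * θ y := mul_le_mul_of_nonneg_right h2K hθy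
      have h8 : 0 ≤ C0 * S := mul_nonneg hC00 hS0
      have h9 : 0 ≤ C0 * θ y := mul_nonneg hC00 hθy
      have h10 : (C0 + K) * (S + θ y) = C0 * S + C0 * θ y + K * S + K * θ y := by ring
      linarith
  have hdist' : |(k : ℝ) - ξ| ≤ B := by rw [abs_sub_comm]; exact hdist
  have hup := key ξ (k : ℝ) hdist
  have hdown := key (k : ℝ) ξ hdist'
  have hθk := hθnn (k : ℝ)
  have hθξ := hθnn ξ
  constructor
  · rw [div_le_iff₀ hM0]
    have hexp : (S + θ ξ) * M = (S + θ ξ) + (C0 + K) * (S + θ ξ) := by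
      simp only [hMdef]; ring
    have : S + θ (k : ℝ) ≤ (S + θ ξ) * M := by
      rw [hexp]; linarith
    simp only [hSdef] at this ⊢
    linarith
  · have hexp : M * (S + θ (k : ℝ)) = (S + θ (k : ℝ)) + (C0 + K) * (S + θ (k : ℝ)) := by
      simp only [hMdef]; ring
    have : S + θ ξ ≤ M * (S + θ (k : ℝ)) := by
      rw [hexp]; linarith
    simp only [hSdef] at this ⊢
    linarith
end

section
/- Let p, q, r be positive reals with 1/p + 1/q + 1/r < 1. Then the series Σ_{(i,j,k)∈ℤ³} 1/(1 + |i|^p + |j|^q + |k|^r) converges. -/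
open Real

lemma aux_summable_int (p a : ℝ) (hp : 0 < p) (ha : 1 / p < a) :
    Summable fun i : ℤ => (1 + |(i : ℝ)| ^ p) ^ (-a) := by
  have hs : 1 < p * a := by
    rw [div_lt_iff₀ hp] at ha; linarith [ha]
  have h1 : Summable fun i : ℤ => |(i : ℝ)| ^ (-(p * a)) := Real.summable_abs_int_rpow hs
  have h2 : Summable fun i : ℤ => (if i = 0 then (1:ℝ) else 0) :=
    summable_of_ne_finset_zero (s := {0}) (by intro i hi; simp at hi; simp [hi])
  apply Summable.of_nonneg_of_le (fun i => by positivity) _ (h2.add h1)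
  intro i
  by_cases hi : i = 0
  · subst hi
    simp only [if_pos]
    have : |(0:ℤ)| = 0 := rfl
    have h0 : (1 + |((0:ℤ) : ℝ)| ^ p) ^ (-a) = 1 := by
      rw [show |((0:ℤ):ℝ)| = 0 by simp, Real.zero_rpow hp.ne', add_zero, Real.one_rpow]
    rw [h0]
    have : (0:ℝ) ≤ |((0:ℤ):ℝ)| ^ (-(p*a)) := by positivity
    simpa using this
  · simp only [if_neg hi, zero_add]
    have hipos : 0 < |(i : ℝ)| := by
      simp only [abs_pos, ne_eq, Int.cast_eq_zero]; exact hi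
    have key : |(i : ℝ)| ^ (p * a) ≤ (1 + |(i : ℝ)| ^ p) ^ a := by
      rw [Real.rpow_mul hipos.le]
      apply Real.rpow_le_rpow (by positivity) (by linarith [Real.rpow_nonneg hipos.le p])
        (by linarith [ha, div_pos one_pos hp])
    rw [Real.rpow_neg hipos.le, Real.rpow_neg (by positivity)]
    exact inv_anti₀ (by positivity) key

set_option maxHeartbeats 1000000 in
/-- If `p, q, r > 0` satisfy `1/p + 1/q + 1/r < 1`, then the series
`Σ_{(i,j,k) ∈ ℤ³} 1/(1 + |i|^p + |j|^q + |k|^r)` converges. -/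
theorem summable_model_lengths
    (p q r : ℝ) (hp : 0 < p) (hq : 0 < q) (hr : 0 < r)
    (h : 1 / p + 1 / q + 1 / r < 1) :
    Summable fun m : ℤ × ℤ × ℤ =>
      1 / (1 + |(m.1 : ℝ)| ^ p + |(m.2.1 : ℝ)| ^ q + |(m.2.2 : ℝ)| ^ r) := by
  set δ : ℝ := (1 - (1 / p + 1 / q + 1 / r)) / 3 with hδdef
  have hδ : 0 < δ := by rw [hδdef]; linarith
  set a := 1 / p + δ with hadef
  set b := 1 / q + δ with hbdef
  set c := 1 / r + δ with hcdef
  have hsum : a + b + c = 1 := by rw [hadef, hbdef, hcdef, hδdef]; ring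
  have ha : 1 / p < a := by simp [hadef, hδ]
  have hb : 1 / q < b := by simp [hbdef, hδ]
  have hc : 1 / r < c := by simp [hcdef, hδ]
  have ha0 : 0 ≤ a := le_trans (by positivity) ha.le
  have hb0 : 0 ≤ b := le_trans (by positivity) hb.le
  have hc0 : 0 ≤ c := le_trans (by positivity) hc.le
  have Sa := aux_summable_int p a hp ha
  have Sb := aux_summable_int q b hq hb
  have Sc := aux_summable_int r c hr hc
  have Sbc : Summable fun m : ℤ × ℤ =>
      (1 + |(m.1 : ℝ)| ^ q) ^ (-b) * (1 + |(m.2 : ℝ)| ^ r) ^ (-c) :=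
    Sb.mul_of_nonneg Sc (fun i => by positivity) (fun i => by positivity)
  have S : Summable fun m : ℤ × ℤ × ℤ =>
      (1 + |(m.1 : ℝ)| ^ p) ^ (-a) *
        ((1 + |(m.2.1 : ℝ)| ^ q) ^ (-b) * (1 + |(m.2.2 : ℝ)| ^ r) ^ (-c)) :=
    Sa.mul_of_nonneg Sbc (fun i => by positivity) (fun m => by positivity)
  apply Summable.of_nonneg_of_le (fun m => by positivity) _ S
  rintro ⟨i, j, k⟩
  set x := |(i : ℝ)| ^ p with hx
  set y := |(j : ℝ)| ^ q with hy
  set z := |(k : ℝ)| ^ r with hz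
  have hx0 : 0 ≤ x := by positivity
  have hy0 : 0 ≤ y := by positivity
  have hz0 : 0 ≤ z := by positivity
  have hT : (0:ℝ) < 1 + x + y + z := by linarith
  have key : 1 + x + y + z ≤ (1 + x) ^ a * ((1 + y) ^ b * (1 + z) ^ c) →
      1 / (1 + x + y + z) ≥ ((1+x)^a * ((1+y)^b * (1+z)^c))⁻¹ := by
    intro hle
    rw [one_div]
    exact inv_anti₀ hT hle
  have h1 : (1 + x) ^ a ≤ (1 + x + y + z) ^ a :=
    Real.rpow_le_rpow (by linarith) (by linarith) ha0
  have h2 : (1 + y) ^ b ≤ (1 + x + y + z) ^ b :=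
    Real.rpow_le_rpow (by linarith) (by linarith) hb0
  have h3 : (1 + z) ^ c ≤ (1 + x + y + z) ^ c :=
    Real.rpow_le_rpow (by linarith) (by linarith) hc0
  have hprod : (1 + x) ^ a * ((1 + y) ^ b * (1 + z) ^ c) ≤ 1 + x + y + z := by
    calc (1 + x) ^ a * ((1 + y) ^ b * (1 + z) ^ c)
        ≤ (1 + x + y + z) ^ a * ((1 + x + y + z) ^ b * (1 + x + y + z) ^ c) := by
          apply mul_le_mul h1 (mul_le_mul h2 h3 (by positivity) (by positivity))
            (by positivity) (by positivity)
      _ = (1 + x + y + z) ^ (a + b + c) := by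
          rw [← Real.rpow_add hT, ← Real.rpow_add hT]; ring_nf
      _ = 1 + x + y + z := by rw [hsum, Real.rpow_one]
  have hfinal : 1 / (1 + x + y + z) ≤
      (1 + x) ^ (-a) * ((1 + y) ^ (-b) * (1 + z) ^ (-c)) := by
    rw [Real.rpow_neg (by positivity), Real.rpow_neg (by positivity),
      Real.rpow_neg (by positivity), ← mul_inv, ← mul_inv, one_div]
    exact inv_anti₀ (by positivity) hprod
  exact hfinal
end

section
/- Let 0 < α < 1/2 and positive reals p, q, r satisfy: α + r ≤ 2; 4r ≤ p; 4r ≤ q; 4 ≤ p(1−α); 4 ≤ q(1−α); 1/p + 1/q + 1/r < 1; 1 < r. Define L(i,j,k) := 1/(1 + |i|^p + |j|^q + |k|^r) for (i,j,k) ∈ ℤ³. Then there exists a constant M such that for all (i,j,k) ∈ ℤ³, (1 + |i|^p + |j|^q + |k|^r)^α · | log( L(i,j,k)·L(i,j,k+ij−1) / ( L(i,j,k−1)·L(i,j,k+ij) ) ) | ≤ M. -/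
open Real

-- (u+1)^r ≤ 4 (1 + u^r) for 1 ≤ r ≤ 2, u ≥ 0
private lemma aux_pow_succ (r u : ℝ) (hr1 : 1 ≤ r) (hr2 : r ≤ 2) (hu : 0 ≤ u) :
    (u + 1) ^ r ≤ 4 * (1 + u ^ r) := by
  have hur : 0 ≤ u ^ r := Real.rpow_nonneg hu r
  have h4 : (2:ℝ) ^ r ≤ 4 := by
    have := Real.rpow_le_rpow_of_exponent_le (x := 2) one_le_two hr2
    rwa [show ((2:ℝ)) ^ (2:ℝ) = 4 by
      rw [show (2:ℝ) = ((2:ℕ):ℝ) by norm_num, Real.rpow_natCast]; norm_num] at this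
  rcases le_total u 1 with h | h
  · have : (u + 1) ^ r ≤ (2:ℝ) ^ r :=
      Real.rpow_le_rpow (by linarith) (by linarith) (by linarith)
    nlinarith
  · have h2u : (u + 1) ^ r ≤ (2 * u) ^ r :=
      Real.rpow_le_rpow (by linarith) (by linarith) (by linarith)
    have : (2 * u) ^ r = 2 ^ r * u ^ r := Real.mul_rpow (by norm_num) (by linarith)
    have hu1 : (1:ℝ) ≤ u ^ r := by
      have := Real.rpow_le_rpow_of_exponent_le h (by linarith : (0:ℝ) ≤ r)
      rwa [Real.rpow_zero] at this
    nlinarith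

-- the key single-increment estimate
private lemma aux_key (α r B u : ℝ) (hα0 : 0 < α) (hα : α < 1/2) (hr : 1 < r)
    (h1 : α + r ≤ 2) (hB : 1 ≤ B) (hu : 0 ≤ u) :
    (B + (u + 1) ^ r) ^ α * (Real.log (B + (u + 1) ^ r) - Real.log (B + u ^ r)) ≤ 40 := by
  have hur : 0 ≤ u ^ r := Real.rpow_nonneg hu r
  set Du := B + u ^ r with hDu_def
  set Dv := B + (u + 1) ^ r with hDv_def
  have hDu1 : 1 ≤ Du := by simp only [hDu_def]; linarith
  have hDu : (0:ℝ) < Du := by linarith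
  have hDv : (0:ℝ) < Dv := by
    have : 0 ≤ (u+1)^r := Real.rpow_nonneg (by linarith) r
    simp only [hDv_def]; linarith
  -- Δ ≤ 2 (u+1)^(r-1)
  have hv1 : (1:ℝ) ≤ u + 1 := by linarith
  have hΔ : Dv - Du ≤ 2 * (u + 1) ^ (r - 1) := by
    have hsplit : (u + 1) ^ r = (u + 1) ^ (r - 1) * (u + 1) := by
      rw [← Real.rpow_add_one (by positivity) (r-1)]; ring_nf
    have hu_lower : (u + 1) ^ (r - 1) * (u ^ 2 / (u + 1)) ≤ u ^ r := by
      rcases eq_or_lt_of_le hu with h0 | h0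
      · rw [← h0]; simp [Real.zero_rpow (by linarith : r ≠ 0)]
      · have ht0 : 0 < u / (u + 1) := by positivity
        have ht1 : u / (u + 1) ≤ 1 := by
          rw [div_le_one (by linarith)]; linarith
        have htr : u / (u + 1) ≤ (u / (u + 1)) ^ (r - 1) := by
          have := Real.rpow_le_rpow_of_exponent_ge ht0 ht1 (by linarith : r - 1 ≤ 1)
          rwa [Real.rpow_one] at this
        have hu_eq : u = (u / (u + 1)) * (u + 1) := by field_simp
        have hmul : u ^ (r-1) = (u / (u+1)) ^ (r-1) * (u+1) ^ (r-1) := by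
          rw [← Real.mul_rpow ht0.le (by linarith),
            div_mul_cancel₀ _ (by linarith : u + 1 ≠ 0)]
        have hur_split : u ^ r = u ^ (r - 1) * u := by
          rw [← Real.rpow_add_one (ne_of_gt h0) (r-1)]; ring_nf
        rw [hur_split, hmul]
        calc (u + 1) ^ (r - 1) * (u ^ 2 / (u + 1))
            = ((u / (u+1)) * (u+1)^(r-1)) * u := by ring
          _ ≤ ((u / (u+1))^(r-1) * (u+1)^(r-1)) * u := by
              have h1' : 0 ≤ (u+1)^(r-1) := Real.rpow_nonneg (by linarith) _
              exact mul_le_mul_of_nonneg_right (mul_le_mul_of_nonneg_right htr h1') hu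
    have hpos : 0 ≤ (u + 1) ^ (r - 1) := Real.rpow_nonneg (by linarith) _
    have : Dv - Du = (u + 1) ^ r - u ^ r := by simp only [hDv_def, hDu_def]; ring
    rw [this, hsplit]
    have : (u + 1) ^ (r - 1) * (u + 1) - (u + 1) ^ (r - 1) * (u ^ 2 / (u + 1))
        = (u + 1) ^ (r - 1) * ((2*u + 1) / (u + 1)) := by
      field_simp; ring
    have hfrac : (2*u + 1) / (u + 1) ≤ 2 := by
      rw [div_le_iff₀ (by linarith)]; linarith
    nlinarith [hu_lower]
  -- (u+1)^r ≤ 4 Du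
  have h4Du : (u + 1) ^ r ≤ 4 * Du := by
    have := aux_pow_succ r u hr.le (by linarith) hu
    simp only [hDu_def]; nlinarith
  -- Dv ≤ 5 Du
  have hDv5 : Dv ≤ 5 * Du := by simp only [hDv_def, hDu_def]; nlinarith
  -- weight bound: Dv^α ≤ 5 Du^α
  have hwt : Dv ^ α ≤ 5 * Du ^ α := by
    calc Dv ^ α ≤ (5 * Du) ^ α := Real.rpow_le_rpow hDv.le hDv5 hα0.le
      _ = 5 ^ α * Du ^ α := Real.mul_rpow (by norm_num) hDu.le
      _ ≤ 5 * Du ^ α := by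
          have h5 : (5:ℝ) ^ α ≤ 5 := by
            have := Real.rpow_le_rpow_of_exponent_le (x := 5) (by norm_num) (by linarith : α ≤ 1)
            rwa [Real.rpow_one] at this
          have : 0 ≤ Du ^ α := Real.rpow_nonneg hDu.le _
          nlinarith
  -- Δ ≤ 8 Du^(1-α)
  have hrα : r * α ≤ 1 := by nlinarith
  have hΔ2 : Dv - Du ≤ 8 * Du ^ (1 - α) := by
    have e1 : (u + 1) ^ (r - 1) ≤ (u + 1) ^ (r * (1 - α)) :=
      Real.rpow_le_rpow_of_exponent_le hv1 (by nlinarith)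
    have e2 : (u + 1) ^ (r * (1 - α)) = ((u + 1) ^ r) ^ (1 - α) :=
      Real.rpow_mul (by linarith : (0:ℝ) ≤ u + 1) r (1 - α)
    have e3 : ((u + 1) ^ r) ^ (1 - α) ≤ (4 * Du) ^ (1 - α) :=
      Real.rpow_le_rpow (Real.rpow_nonneg (by linarith) _) h4Du (by linarith)
    have e4 : (4 * Du) ^ (1 - α) = 4 ^ (1 - α) * Du ^ (1 - α) :=
      Real.mul_rpow (by norm_num) hDu.le
    have e5 : (4:ℝ) ^ (1 - α) ≤ 4 := by
      have := Real.rpow_le_rpow_of_exponent_le (x := 4) (by norm_num) (by linarith : 1 - α ≤ 1)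
      rwa [Real.rpow_one] at this
    have hDu1α : 0 ≤ Du ^ (1 - α) := Real.rpow_nonneg hDu.le _
    calc Dv - Du ≤ 2 * (u + 1) ^ (r - 1) := hΔ
      _ ≤ 2 * ((4 * Du) ^ (1 - α)) := by
          have := e1.trans (e2.le.trans e3)
          linarith
      _ ≤ 8 * Du ^ (1 - α) := by rw [e4]; nlinarith
  -- log bound
  have hlog : Real.log Dv - Real.log Du ≤ (Dv - Du) / Du := by
    have h := Real.log_le_sub_one_of_pos (x := Dv / Du) (by positivity)
    rw [Real.log_div (ne_of_gt hDv) (ne_of_gt hDu)] at h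
    have : Dv / Du - 1 = (Dv - Du) / Du := by field_simp
    linarith
  have hlog_nonneg : 0 ≤ Real.log Dv - Real.log Du := by
    have : Du ≤ Dv := by
      simp only [hDu_def, hDv_def]
      have : u ^ r ≤ (u + 1) ^ r := Real.rpow_le_rpow hu (by linarith) (by linarith)
      linarith
    have := Real.log_le_log hDu this
    linarith
  -- assemble
  have hmain : Dv ^ α * (Real.log Dv - Real.log Du) ≤ (5 * Du ^ α) * ((8 * Du ^ (1 - α)) / Du) := by
    have hq : Real.log Dv - Real.log Du ≤ (8 * Du ^ (1 - α)) / Du := by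
      calc Real.log Dv - Real.log Du ≤ (Dv - Du) / Du := hlog
        _ ≤ (8 * Du ^ (1 - α)) / Du := by gcongr
    exact mul_le_mul hwt hq hlog_nonneg (by positivity)
  have hfinal : (5 * Du ^ α) * ((8 * Du ^ (1 - α)) / Du) = 40 := by
    have hkey : Du ^ α * Du ^ (1 - α) = Du := by
      rw [← Real.rpow_add hDu]; norm_num
    have : (5 * Du ^ α) * ((8 * Du ^ (1 - α)) / Du) = 40 * (Du ^ α * Du ^ (1 - α)) / Du := by
      ring
    rw [this, hkey, mul_div_assoc, div_self (ne_of_gt hDu), mul_one]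
  linarith [hmain, hfinal.le]


-- the absolute values of k and k-1 are {u, u+1}
private lemma aux_abs_pair (k : ℤ) : ∃ u : ℝ, 0 ≤ u ∧
    ((|(k:ℝ)| = u + 1 ∧ |((k - 1 : ℤ):ℝ)| = u) ∨ (|(k:ℝ)| = u ∧ |((k - 1 : ℤ):ℝ)| = u + 1)) := by
  rcases le_or_gt 1 k with h | h
  · refine ⟨((k:ℝ) - 1), by push_cast; exact_mod_cast by linarith, Or.inl ⟨?_, ?_⟩⟩
    · rw [abs_of_nonneg (by exact_mod_cast by linarith : (0:ℝ) ≤ (k:ℝ))]; ring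
    · push_cast
      rw [abs_of_nonneg (by exact_mod_cast by linarith : (0:ℝ) ≤ (k:ℝ) - 1)]
  · have hk : k ≤ 0 := by linarith
    refine ⟨(-(k:ℝ)), by exact_mod_cast by linarith, Or.inr ⟨?_, ?_⟩⟩
    · rw [abs_of_nonpos (by exact_mod_cast hk : (k:ℝ) ≤ 0)]
    · push_cast
      rw [abs_of_nonpos (by exact_mod_cast by linarith : (k:ℝ) - 1 ≤ 0)]; ring

-- single-step estimate for integer arguments
private lemma aux_step (α r B : ℝ) (hα0 : 0 < α) (hα : α < 1/2) (hr : 1 < r)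
    (h1 : α + r ≤ 2) (hB : 1 ≤ B) (k : ℤ) :
    (B + |(k:ℝ)| ^ r) ^ α *
      |Real.log (B + |(k:ℝ)| ^ r) - Real.log (B + |((k - 1 : ℤ):ℝ)| ^ r)| ≤ 40 := by
  obtain ⟨u, hu, hcase⟩ := aux_abs_pair k
  have hur : 0 ≤ u ^ r := Real.rpow_nonneg hu r
  have hmono : u ^ r ≤ (u + 1) ^ r := Real.rpow_le_rpow hu (by linarith) (by linarith)
  have hDu : (0:ℝ) < B + u ^ r := by linarith
  have hlogle : Real.log (B + u ^ r) ≤ Real.log (B + (u + 1) ^ r) :=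
    Real.log_le_log hDu (by linarith)
  rcases hcase with ⟨e1, e2⟩ | ⟨e1, e2⟩
  · rw [e1, e2, abs_of_nonneg (by linarith)]
    exact aux_key α r B u hα0 hα hr h1 hB hu
  · rw [e1, e2, abs_sub_comm, abs_of_nonneg (by linarith)]
    have hw : (B + u ^ r) ^ α ≤ (B + (u + 1) ^ r) ^ α :=
      Real.rpow_le_rpow hDu.le (by linarith) hα0.le
    have := aux_key α r B u hα0 hα hr h1 hB hu
    have hlogpos : 0 ≤ Real.log (B + (u + 1) ^ r) - Real.log (B + u ^ r) := by linarith
    nlinarith [mul_le_mul_of_nonneg_right hw hlogpos]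

-- |i*j|^r ≤ 1 + |i|^p + |j|^q
private lemma aux_ij (p q r : ℝ) (hr0 : 0 < r) (h2 : 4 * r ≤ p) (h3 : 4 * r ≤ q) (i j : ℤ) :
    (|(i:ℝ)| * |(j:ℝ)|) ^ r ≤ 1 + |(i:ℝ)| ^ p + |(j:ℝ)| ^ q := by
  have hip : 0 ≤ |(i:ℝ)| ^ p := Real.rpow_nonneg (abs_nonneg _) _
  have hjq : 0 ≤ |(j:ℝ)| ^ q := Real.rpow_nonneg (abs_nonneg _) _
  rcases eq_or_ne i 0 with hi | hi
  · subst hi; simp [Real.zero_rpow (ne_of_gt hr0)]; positivity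
  rcases eq_or_ne j 0 with hj | hj
  · subst hj; simp [Real.zero_rpow (ne_of_gt hr0)]; positivity
  have hi1 : (1:ℝ) ≤ |(i:ℝ)| := by
    rw [← Int.cast_abs]; exact_mod_cast Int.one_le_abs hi
  have hj1 : (1:ℝ) ≤ |(j:ℝ)| := by
    rw [← Int.cast_abs]; exact_mod_cast Int.one_le_abs hj
  have hmul : (|(i:ℝ)| * |(j:ℝ)|) ^ r = |(i:ℝ)| ^ r * |(j:ℝ)| ^ r :=
    Real.mul_rpow (abs_nonneg _) (abs_nonneg _)
  have hii : |(i:ℝ)| ^ r * |(i:ℝ)| ^ r ≤ |(i:ℝ)| ^ p := by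
    rw [← Real.rpow_add (by linarith : (0:ℝ) < |(i:ℝ)|)]
    exact Real.rpow_le_rpow_of_exponent_le hi1 (by linarith)
  have hjj : |(j:ℝ)| ^ r * |(j:ℝ)| ^ r ≤ |(j:ℝ)| ^ q := by
    rw [← Real.rpow_add (by linarith : (0:ℝ) < |(j:ℝ)|)]
    exact Real.rpow_le_rpow_of_exponent_le hj1 (by linarith)
  have hir : 0 ≤ |(i:ℝ)| ^ r := Real.rpow_nonneg (abs_nonneg _) _
  have hjr : 0 ≤ |(j:ℝ)| ^ r := Real.rpow_nonneg (abs_nonneg _) _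
  rw [hmul]
  nlinarith [sq_nonneg (|(i:ℝ)| ^ r - |(j:ℝ)| ^ r)]

-- (a+b)^r ≤ 4(a^r + b^r) for 1 ≤ r ≤ 2
private lemma aux_add_rpow (r a b : ℝ) (hr1 : 1 ≤ r) (hr2 : r ≤ 2)
    (ha : 0 ≤ a) (hb : 0 ≤ b) : (a + b) ^ r ≤ 4 * (a ^ r + b ^ r) := by
  have h4 : (2:ℝ) ^ r ≤ 4 := by
    have := Real.rpow_le_rpow_of_exponent_le (x := 2) one_le_two hr2
    rwa [show ((2:ℝ)) ^ (2:ℝ) = 4 by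
      rw [show (2:ℝ) = ((2:ℕ):ℝ) by norm_num, Real.rpow_natCast]; norm_num] at this
  have har : 0 ≤ a ^ r := Real.rpow_nonneg ha _
  have hbr : 0 ≤ b ^ r := Real.rpow_nonneg hb _
  rcases le_total a b with h | h
  · have h1 : (a + b) ^ r ≤ (2 * b) ^ r :=
      Real.rpow_le_rpow (by linarith) (by linarith) (by linarith)
    have h2 : (2 * b) ^ r = 2 ^ r * b ^ r := Real.mul_rpow (by norm_num) hb
    nlinarith
  · have h1 : (a + b) ^ r ≤ (2 * a) ^ r :=
      Real.rpow_le_rpow (by linarith) (by linarith) (by linarith)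
    have h2 : (2 * a) ^ r = 2 ^ r * a ^ r := Real.mul_rpow (by norm_num) ha
    nlinarith

/-- The model lengths `L(i,j,k) = 1/(1 + |i|^p + |j|^q + |k|^r)`. -/
noncomputable def Lmodel (p q r : ℝ) (i j k : ℤ) : ℝ :=
  1 / (1 + |(i : ℝ)| ^ p + |(j : ℝ)| ^ q + |(k : ℝ)| ^ r)

set_option maxHeartbeats 1000000 in
/-- **The Case 1 distortion estimate.** Let `0 < α < 1/2` and let positive reals
`p, q, r` satisfy `α + r ≤ 2`, `4r ≤ p`, `4r ≤ q`, `4 ≤ p(1−α)`, `4 ≤ q(1−α)`,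
`1/p + 1/q + 1/r < 1` and `1 < r`. Then there is a constant `M` such that for all
`(i,j,k) ∈ ℤ³`,
`(1+|i|^p+|j|^q+|k|^r)^α · |log( L(i,j,k)·L(i,j,k+ij−1) / (L(i,j,k−1)·L(i,j,k+ij)) )| ≤ M`. -/
theorem case_one_distortion_estimate
    (α p q r : ℝ) (hα0 : 0 < α) (hα : α < 1 / 2)
    (hp : 0 < p) (hq : 0 < q) (hr : 1 < r)
    (h1 : α + r ≤ 2) (h2 : 4 * r ≤ p) (h3 : 4 * r ≤ q)
    (h4 : 4 ≤ p * (1 - α)) (h5 : 4 ≤ q * (1 - α))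
    (h6 : 1 / p + 1 / q + 1 / r < 1) :
    ∃ M : ℝ, ∀ i j k : ℤ,
      (1 + |(i : ℝ)| ^ p + |(j : ℝ)| ^ q + |(k : ℝ)| ^ r) ^ α *
        |Real.log (Lmodel p q r i j k * Lmodel p q r i j (k + i * j - 1) /
          (Lmodel p q r i j (k - 1) * Lmodel p q r i j (k + i * j)))| ≤ M := by
  have hα' : α < 1/2 := by linarith
  refine ⟨240, fun i j k => ?_⟩
  set B : ℝ := 1 + |(i:ℝ)| ^ p + |(j:ℝ)| ^ q with hB_def
  have hip : 0 ≤ |(i:ℝ)| ^ p := Real.rpow_nonneg (abs_nonneg _) _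
  have hjq : 0 ≤ |(j:ℝ)| ^ q := Real.rpow_nonneg (abs_nonneg _) _
  have hB : 1 ≤ B := by simp only [hB_def]; linarith
  have hD : ∀ t : ℤ, (0:ℝ) < B + |(t:ℝ)| ^ r := fun t => by
    have := Real.rpow_nonneg (abs_nonneg ((t:ℝ))) r
    linarith
  have hL : ∀ t : ℤ, Lmodel p q r i j t = (B + |(t:ℝ)| ^ r)⁻¹ := fun t => by
    rw [Lmodel, hB_def, one_div]
  set m : ℤ := k + i * j with hm_def
  -- rewrite the argument of the log
  have harg : Lmodel p q r i j k * Lmodel p q r i j (m - 1) /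
      (Lmodel p q r i j (k - 1) * Lmodel p q r i j m) =
      (B + |((k - 1 : ℤ):ℝ)| ^ r) * (B + |((m:ℤ):ℝ)| ^ r) /
        ((B + |(k:ℝ)| ^ r) * (B + |((m - 1 : ℤ):ℝ)| ^ r)) := by
    rw [hL, hL, hL, hL]
    rw [div_eq_div_iff (by positivity) (by positivity)]
    field_simp
  have hlogsplit : Real.log (Lmodel p q r i j k * Lmodel p q r i j (m - 1) /
      (Lmodel p q r i j (k - 1) * Lmodel p q r i j m)) =
      (Real.log (B + |((m:ℤ):ℝ)| ^ r) - Real.log (B + |((m - 1 : ℤ):ℝ)| ^ r)) -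
        (Real.log (B + |(k:ℝ)| ^ r) - Real.log (B + |((k - 1 : ℤ):ℝ)| ^ r)) := by
    rw [harg, Real.log_div (by positivity) (by positivity),
      Real.log_mul (ne_of_gt (hD (k-1))) (ne_of_gt (hD m)),
      Real.log_mul (ne_of_gt (hD k)) (ne_of_gt (hD (m-1)))]
    ring
  set X : ℝ := Real.log (B + |(k:ℝ)| ^ r) - Real.log (B + |((k - 1 : ℤ):ℝ)| ^ r) with hX_def
  set Y : ℝ := Real.log (B + |((m:ℤ):ℝ)| ^ r) - Real.log (B + |((m - 1 : ℤ):ℝ)| ^ r) with hY_def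
  rw [hlogsplit]
  have habs : |Y - X| ≤ |Y| + |X| := by
    calc |Y - X| = |Y + (-X)| := by ring_nf
      _ ≤ |Y| + |(-X)| := abs_add_le _ _
      _ = |Y| + |X| := by rw [abs_neg]
  have hW : (0:ℝ) ≤ (B + |(k:ℝ)| ^ r) ^ α := Real.rpow_nonneg (hD k).le _
  -- bound on the X (weight-matching) term
  have bound1 : (B + |(k:ℝ)| ^ r) ^ α * |X| ≤ 40 :=
    aux_step α r B hα0 hα' hr h1 hB k
  -- weight comparison : B + |k|^r ≤ 5 (B + |m|^r)
  have hmr : 0 ≤ |((m:ℤ):ℝ)| ^ r := Real.rpow_nonneg (abs_nonneg _) _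
  have hijB : (|(i:ℝ)| * |(j:ℝ)|) ^ r ≤ B := by
    have := aux_ij p q r (by linarith) h2 h3 i j
    rw [hB_def]; exact this
  have hk_le : |(k:ℝ)| ≤ |((m:ℤ):ℝ)| + |(i:ℝ)| * |(j:ℝ)| := by
    have hkeq : (k:ℝ) = ((m:ℤ):ℝ) - (i:ℝ) * (j:ℝ) := by
      rw [hm_def]; push_cast; ring
    rw [hkeq]
    calc |((m:ℤ):ℝ) - (i:ℝ) * (j:ℝ)| ≤ |((m:ℤ):ℝ)| + |(i:ℝ) * (j:ℝ)| := abs_sub _ _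
      _ = |((m:ℤ):ℝ)| + |(i:ℝ)| * |(j:ℝ)| := by rw [abs_mul]
  have hk_r : |(k:ℝ)| ^ r ≤ 4 * (|((m:ℤ):ℝ)| ^ r + (|(i:ℝ)| * |(j:ℝ)|) ^ r) := by
    calc |(k:ℝ)| ^ r ≤ (|((m:ℤ):ℝ)| + |(i:ℝ)| * |(j:ℝ)|) ^ r :=
          Real.rpow_le_rpow (abs_nonneg _) hk_le (by linarith)
      _ ≤ 4 * (|((m:ℤ):ℝ)| ^ r + (|(i:ℝ)| * |(j:ℝ)|) ^ r) :=
          aux_add_rpow r _ _ hr.le (by linarith) (abs_nonneg _) (by positivity)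
  have hWm : B + |(k:ℝ)| ^ r ≤ 5 * (B + |((m:ℤ):ℝ)| ^ r) := by nlinarith
  have hWα : (B + |(k:ℝ)| ^ r) ^ α ≤ 5 * (B + |((m:ℤ):ℝ)| ^ r) ^ α := by
    have h5 : (5:ℝ) ^ α ≤ 5 := by
      have := Real.rpow_le_rpow_of_exponent_le (x := 5) (by norm_num) (by linarith : α ≤ 1)
      rwa [Real.rpow_one] at this
    have hmα : 0 ≤ (B + |((m:ℤ):ℝ)| ^ r) ^ α := Real.rpow_nonneg (hD m).le _
    calc (B + |(k:ℝ)| ^ r) ^ α ≤ (5 * (B + |((m:ℤ):ℝ)| ^ r)) ^ α :=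
          Real.rpow_le_rpow (hD k).le hWm hα0.le
      _ = 5 ^ α * (B + |((m:ℤ):ℝ)| ^ r) ^ α := Real.mul_rpow (by norm_num) (hD m).le
      _ ≤ 5 * (B + |((m:ℤ):ℝ)| ^ r) ^ α :=
          mul_le_mul_of_nonneg_right h5 hmα
  have bound2 : (B + |(k:ℝ)| ^ r) ^ α * |Y| ≤ 200 := by
    have hstep := aux_step α r B hα0 hα' hr h1 hB m
    have hYabs : 0 ≤ |Y| := abs_nonneg _
    calc (B + |(k:ℝ)| ^ r) ^ α * |Y| ≤ (5 * (B + |((m:ℤ):ℝ)| ^ r) ^ α) * |Y| :=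
          mul_le_mul_of_nonneg_right hWα hYabs
      _ = 5 * ((B + |((m:ℤ):ℝ)| ^ r) ^ α * |Y|) := by ring
      _ ≤ 5 * 40 := by
          have : (B + |((m:ℤ):ℝ)| ^ r) ^ α * |Y| ≤ 40 := hstep
          linarith
      _ = 200 := by norm_num
  calc (B + |(k:ℝ)| ^ r) ^ α * |Y - X| ≤ (B + |(k:ℝ)| ^ r) ^ α * (|Y| + |X|) :=
        mul_le_mul_of_nonneg_left habs hW
    _ = (B + |(k:ℝ)| ^ r) ^ α * |Y| + (B + |(k:ℝ)| ^ r) ^ α * |X| := by ring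
    _ ≤ 200 + 40 := add_le_add bound2 bound1
    _ = 240 := by norm_num
end
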